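/- arXiv:2202.10947 — 7 statements merged into one kernel-verified Lean document; each statement's English description precedes it below -/
import Mathlib

section
/- Let V : Ω → ℝ be continuous, let Z = ∫ exp(β V(y)) dμ(y) and let q*(y) = exp(β V(y))/Z be the associated Gibbs density. Then for every measurable function q : Ω → ℝ with q ≥ 0 μ-a.e., ∫ q dμ = 1, and q·log q integrable with respect to μ, one has ∫ V q dμ − β⁻¹ ∫ q log q dμ ≤ β⁻¹ log Z, with equality if and only if q = q* μ-almost everywhere. In particular q* is the unique maximizer (up to μ-a.e. equality) of the functional q ↦ ∫ V q dμ − β⁻¹ ∫ q log q dμ over probability densities with respect to μ. -/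
open MeasureTheory Real

lemma gibbs_key (s t : ℝ) (hs : 0 < s) (ht : 0 ≤ t) :
    0 ≤ t * Real.log t - t * Real.log s - (t - s) := by
  rcases ht.eq_or_lt with h | h
  · simp [← h]; linarith
  · have h1 : Real.log (s / t) ≤ s / t - 1 := Real.log_le_sub_one_of_pos (by positivity)
    rw [Real.log_div hs.ne' h.ne'] at h1
    have h2 : t * (Real.log s - Real.log t) ≤ t * (s / t - 1) :=
      mul_le_mul_of_nonneg_left h1 ht
    have h3 : t * (s / t - 1) = s - t := by field_simp
    nlinarith

lemma gibbs_key_strict (s t : ℝ) (hs : 0 < s) (ht : 0 ≤ t) (hne : t ≠ s) :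
    0 < t * Real.log t - t * Real.log s - (t - s) := by
  rcases ht.eq_or_lt with h | h
  · simp [← h]; linarith
  · have hst : s / t ≠ 1 := by
      intro hc
      exact hne (by field_simp at hc; linarith)
    have h1 : Real.log (s / t) < s / t - 1 :=
      Real.log_lt_sub_one_of_pos (by positivity) hst
    rw [Real.log_div hs.ne' h.ne'] at h1
    have h2 : t * (Real.log s - Real.log t) < t * (s / t - 1) :=
      (mul_lt_mul_iff_right₀ h).mpr h1
    have h3 : t * (s / t - 1) = s - t := by field_simp
    nlinarith

/-- Gibbs variational principle: the Gibbs density `q* = exp(β V)/Z` is the unique maximizer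
(up to a.e. equality) of `q ↦ ∫ V q dμ − β⁻¹ ∫ q log q dμ` over probability densities,
with maximal value `β⁻¹ log Z`. -/
theorem gibbs_variational_principle
    {Ω : Type*} [MetricSpace Ω] [CompactSpace Ω] [MeasurableSpace Ω] [BorelSpace Ω]
    (μ : Measure Ω) [IsProbabilityMeasure μ] (β : ℝ) (hβ : 0 < β)
    (V : Ω → ℝ) (hV : Continuous V)
    (Z : ℝ) (hZ : Z = ∫ y, Real.exp (β * V y) ∂μ)
    (qstar : Ω → ℝ) (hqstar : ∀ y, qstar y = Real.exp (β * V y) / Z)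
    (q : Ω → ℝ) (hqm : Measurable q) (hq0 : ∀ᵐ y ∂μ, 0 ≤ q y)
    (hq1 : ∫ y, q y ∂μ = 1)
    (hqent : Integrable (fun y => q y * Real.log (q y)) μ) :
    ∫ y, V y * q y ∂μ - β⁻¹ * ∫ y, q y * Real.log (q y) ∂μ ≤ β⁻¹ * Real.log Z ∧
    (∫ y, V y * q y ∂μ - β⁻¹ * ∫ y, q y * Real.log (q y) ∂μ = β⁻¹ * Real.log Z
      ↔ q =ᵐ[μ] qstar) := by
  -- continuity / integrability of exp (β V)
  have hVexp_cont : Continuous fun y => Real.exp (β * V y) :=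
    Real.continuous_exp.comp (continuous_const.mul hV)
  have hVexp_int : Integrable (fun y => Real.exp (β * V y)) μ :=
    hVexp_cont.integrable_of_hasCompactSupport
      (IsCompact.of_isClosed_subset isCompact_univ (isClosed_tsupport _) (Set.subset_univ _))
  have hZpos : 0 < Z := by rw [hZ]; exact integral_exp_pos hVexp_int
  have hq_int : Integrable q μ := by
    by_contra h
    rw [integral_undef h] at hq1
    norm_num at hq1
  -- V bounded
  obtain ⟨C, hC⟩ := IsCompact.exists_bound_of_continuousOn isCompact_univ hV.continuousOn
  have hVq_int : Integrable (fun y => V y * q y) μ :=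
    hq_int.bdd_mul hV.aestronglyMeasurable (Filter.Eventually.of_forall fun x => hC x (Set.mem_univ x))
  -- qstar facts
  have hqstar_pos : ∀ y, 0 < qstar y := fun y => by
    rw [hqstar y]; positivity
  have hqstar_int : Integrable qstar μ := by
    have : qstar = fun y => Real.exp (β * V y) / Z := funext hqstar
    rw [this]; exact hVexp_int.div_const Z
  have hqstar1 : ∫ y, qstar y ∂μ = 1 := by
    simp only [hqstar, integral_div, ← hZ, div_self hZpos.ne']
  have hlogqstar : ∀ y, Real.log (qstar y) = β * V y - Real.log Z := fun y => by
    rw [hqstar y, Real.log_div (Real.exp_ne_zero _) hZpos.ne', Real.log_exp]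
  -- q log qstar
  have hfun : (fun y => q y * Real.log (qstar y))
      = fun y => β * (V y * q y) - Real.log Z * q y := by
    funext y; rw [hlogqstar y]; ring
  have hql_int : Integrable (fun y => q y * Real.log (qstar y)) μ := by
    rw [hfun]; exact (hVq_int.const_mul β).sub (hq_int.const_mul (Real.log Z))
  have hql_val : ∫ y, q y * Real.log (qstar y) ∂μ
      = β * ∫ y, V y * q y ∂μ - Real.log Z := by
    rw [hfun, integral_sub (hVq_int.const_mul β) (hq_int.const_mul (Real.log Z)),
      integral_const_mul, integral_const_mul, hq1, mul_one]
  -- the relative-entropy integrand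
  set f : Ω → ℝ := fun y =>
    q y * Real.log (q y) - q y * Real.log (qstar y) - (q y - qstar y) with hf_def
  have hsub1 : Integrable (fun y => q y * Real.log (q y) - q y * Real.log (qstar y)) μ :=
    hqent.sub hql_int
  have hsub2 : Integrable (fun y => q y - qstar y) μ := hq_int.sub hqstar_int
  have hf_int : Integrable f μ := hsub1.sub hsub2
  have hf_nonneg : ∀ᵐ y ∂μ, 0 ≤ f y := by
    filter_upwards [hq0] with y hy
    exact gibbs_key (qstar y) (q y) (hqstar_pos y) hy
  have hf_val : ∫ y, f y ∂μ
      = ∫ y, q y * Real.log (q y) ∂μ - (β * ∫ y, V y * q y ∂μ - Real.log Z) := by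
    rw [hf_def]
    rw [integral_sub hsub1 hsub2, integral_sub hqent hql_int,
      integral_sub hq_int hqstar_int, hq1, hqstar1, hql_val]
    ring
  have hI : 0 ≤ ∫ y, f y ∂μ := integral_nonneg_of_ae hf_nonneg
  set E := ∫ y, V y * q y ∂μ
  set S := ∫ y, q y * Real.log (q y) ∂μ
  have hrw : E - β⁻¹ * S = β⁻¹ * (β * E - S) := by field_simp
  constructor
  · rw [hrw]
    have : β * E - S ≤ Real.log Z := by rw [hf_val] at hI; linarith
    exact mul_le_mul_of_nonneg_left this (inv_pos.mpr hβ).le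
  · constructor
    · intro heq
      rw [hrw] at heq
      have hβinv : β⁻¹ ≠ 0 := (inv_pos.mpr hβ).ne'
      have hEq : β * E - S = Real.log Z := mul_left_cancel₀ hβinv heq
      have hI0 : ∫ y, f y ∂μ = 0 := by rw [hf_val]; linarith
      have hf0 : f =ᵐ[μ] 0 := (integral_eq_zero_iff_of_nonneg_ae hf_nonneg hf_int).mp hI0
      filter_upwards [hf0, hq0] with y hy hy0
      by_contra hne
      have := gibbs_key_strict (qstar y) (q y) (hqstar_pos y) hy0 hne
      simp only [hf_def, Pi.zero_apply] at hy
      linarith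
    · intro heq
      have hf0 : f =ᵐ[μ] 0 := by
        filter_upwards [heq] with y hy
        simp [hf_def, hy]
      have hI0 : ∫ y, f y ∂μ = 0 := by
        rw [integral_congr_ae hf0]; simp
      rw [hf_val] at hI0
      rw [hrw]
      have : β * E - S = Real.log Z := by linarith
      rw [this]
end

section
/- The free energy F is strictly convex: if p₁ and p₂ are probability densities with respect to μ with pᵢ log pᵢ integrable for i = 1,2, and p₁ ≠ p₂ on a set of positive μ-measure, then for every λ ∈ (0,1), F(λ p₁ + (1−λ) p₂) < λ F(p₁) + (1−λ) F(p₂). -/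
open MeasureTheory Real

/-- Strict convexity of the free energy
`F(f) = β⁻¹ log Z_q(f·μ) + β⁻¹ ∫ f log f dμ` on probability densities. -/
theorem free_energy_strictly_convex
    {Ω : Type*} [MetricSpace Ω] [CompactSpace Ω] [MeasurableSpace Ω] [BorelSpace Ω]
    (μ : Measure Ω) [IsProbabilityMeasure μ] (β : ℝ) (hβ : 0 < β)
    (K : Ω × Ω → ℝ) (hK : Continuous K)
    (V : Ω → Measure Ω → ℝ) (hV : ∀ y p, V y p = ∫ x, K (x, y) ∂p)
    (Zq : Measure Ω → ℝ) (hZq : ∀ p, Zq p = ∫ y, Real.exp (β * V y p) ∂μ)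
    (F : (Ω → ℝ) → ℝ)
    (hF : ∀ f : Ω → ℝ,
      F f = β⁻¹ * Real.log (Zq (μ.withDensity (fun x => ENNReal.ofReal (f x))))
            + β⁻¹ * ∫ x, f x * Real.log (f x) ∂μ)
    (p₁ p₂ : Ω → ℝ)
    (h₁m : Measurable p₁) (h₁0 : ∀ x, 0 ≤ p₁ x) (h₁1 : ∫ x, p₁ x ∂μ = 1)
    (h₁ent : Integrable (fun x => p₁ x * Real.log (p₁ x)) μ)
    (h₂m : Measurable p₂) (h₂0 : ∀ x, 0 ≤ p₂ x) (h₂1 : ∫ x, p₂ x ∂μ = 1)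
    (h₂ent : Integrable (fun x => p₂ x * Real.log (p₂ x)) μ)
    (hne : ¬ p₁ =ᵐ[μ] p₂)
    (lam : ℝ) (hlam : lam ∈ Set.Ioo (0:ℝ) 1) :
    F (fun x => lam * p₁ x + (1 - lam) * p₂ x) < lam * F p₁ + (1 - lam) * F p₂ := by
  obtain ⟨hl0, hl1⟩ := hlam
  have hl1' : 0 < 1 - lam := by linarith
  have hμ0 : NeZero μ := ⟨IsProbabilityMeasure.ne_zero μ⟩
  set f : Ω → ℝ := fun x => lam * p₁ x + (1 - lam) * p₂ x with hfdef
  have hf0 : ∀ x, 0 ≤ f x := fun x =>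
    add_nonneg (mul_nonneg hl0.le (h₁0 x)) (mul_nonneg hl1'.le (h₂0 x))
  have hfm : Measurable f := (h₁m.const_mul lam).add (h₂m.const_mul (1 - lam))
  clear_value f
  have hΩ : Nonempty Ω := by
    by_contra h
    rw [not_nonempty_iff] at h
    exact one_ne_zero (by rw [← measure_univ (μ := μ), Set.univ_eq_empty_iff.mpr h, measure_empty])
  obtain ⟨z₀, -, hz₀⟩ := isCompact_univ.exists_isMaxOn Set.univ_nonempty hK.norm.continuousOn
  set C : ℝ := ‖K z₀‖ with hCdef
  have hKC : ∀ z, ‖K z‖ ≤ C := fun z => hz₀ (Set.mem_univ z)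
  have hC0 : 0 ≤ C := by rw [hCdef]; exact norm_nonneg _
  clear_value C
  have hi₁ : Integrable p₁ μ := by
    by_contra h; rw [integral_undef h] at h₁1; exact one_ne_zero h₁1.symm
  have hi₂ : Integrable p₂ μ := by
    by_contra h; rw [integral_undef h] at h₂1; exact one_ne_zero h₂1.symm
  have hif : Integrable f μ := by
    rw [hfdef]; exact (hi₁.const_mul lam).add (hi₂.const_mul (1 - lam))
  -- integrability of x ↦ K (x,y) * p x
  have hint : ∀ (p : Ω → ℝ), Integrable p μ → ∀ y, Integrable (fun x => K (x, y) * p x) μ :=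
    fun p hp y => hp.bdd_mul
      ((hK.comp (continuous_id.prodMk continuous_const)).aestronglyMeasurable)
      (Filter.Eventually.of_forall fun x => hKC _)
  -- V of a density measure
  have key : ∀ p : Ω → ℝ, Measurable p → (∀ x, 0 ≤ p x) →
      ∀ y, V y (μ.withDensity fun x => ENNReal.ofReal (p x)) = ∫ x, K (x, y) * p x ∂μ := by
    intro p hp hp0 y
    rw [hV]
    have h1 : (fun x => ENNReal.ofReal (p x)) = fun x => ((p x).toNNReal : ENNReal) := rfl
    rw [h1, integral_withDensity_eq_integral_smul hp.real_toNNReal]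
    congr 1; funext x
    simp [NNReal.smul_def, Real.coe_toNNReal _ (hp0 x), mul_comm]

  -- strong measurability of y ↦ ∫ K(x,y) p(x)
  have hWm : ∀ (p : Ω → ℝ), Measurable p →
      StronglyMeasurable (fun y => ∫ x, K (x, y) * p x ∂μ) := by
    intro p hp
    have hsm : StronglyMeasurable (Function.uncurry fun (y x : Ω) => K (x, y) * p x) :=
      (((hK.comp continuous_swap).measurable).mul (hp.comp measurable_snd)).stronglyMeasurable
    exact hsm.integral_prod_right
  -- bound on W
  have hWb : ∀ (p : Ω → ℝ), Integrable p μ → (∀ x, 0 ≤ p x) → (∫ x, p x ∂μ = 1) →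
      ∀ y, ‖∫ x, K (x, y) * p x ∂μ‖ ≤ C := by
    intro p hp hp0 hp1 y
    calc ‖∫ x, K (x, y) * p x ∂μ‖ ≤ ∫ x, ‖K (x, y) * p x‖ ∂μ := norm_integral_le_integral_norm _
      _ ≤ ∫ x, C * p x ∂μ := by
          apply integral_mono (hint p hp y).norm (hp.const_mul C)
          intro x
          show ‖K (x, y) * p x‖ ≤ C * p x
          rw [norm_mul, Real.norm_of_nonneg (hp0 x)]
          exact mul_le_mul_of_nonneg_right (hKC _) (hp0 x)
      _ = C := by rw [integral_const_mul, hp1, mul_one]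
  set W₁ : Ω → ℝ := fun y => ∫ x, K (x, y) * p₁ x ∂μ with hW₁def
  set W₂ : Ω → ℝ := fun y => ∫ x, K (x, y) * p₂ x ∂μ with hW₂def
  have hW₁m : StronglyMeasurable W₁ := hWm p₁ h₁m
  have hW₂m : StronglyMeasurable W₂ := hWm p₂ h₂m
  have hW₁b : ∀ y, ‖W₁ y‖ ≤ C := hWb p₁ hi₁ h₁0 h₁1
  have hW₂b : ∀ y, ‖W₂ y‖ ≤ C := hWb p₂ hi₂ h₂0 h₂1
  clear_value W₁ W₂
  -- exp integrability
  have hexpint : ∀ (c : ℝ) (W : Ω → ℝ), StronglyMeasurable W → (∀ y, ‖W y‖ ≤ C) →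
      Integrable (fun y => Real.exp (c * W y)) μ := by
    intro c W hm hb
    apply Integrable.mono' (integrable_const (Real.exp (|c| * C)))
      (Real.continuous_exp.comp_stronglyMeasurable (hm.const_mul c)).aestronglyMeasurable
    refine Filter.Eventually.of_forall fun y => ?_
    rw [Real.norm_eq_abs, Real.abs_exp, Real.exp_le_exp]
    calc c * W y ≤ |c * W y| := le_abs_self _
      _ = |c| * |W y| := abs_mul _ _
      _ ≤ |c| * C := by
          apply mul_le_mul_of_nonneg_left _ (abs_nonneg c)
          simpa [Real.norm_eq_abs] using hb y
  have hmem : ∀ (c : ℝ) (W : Ω → ℝ), StronglyMeasurable W → (∀ y, ‖W y‖ ≤ C) →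
      ∀ q : ENNReal, MemLp (fun y => Real.exp (c * W y)) q μ := by
    intro c W hm hb q
    apply MemLp.of_bound
      (Real.continuous_exp.comp_stronglyMeasurable (hm.const_mul c)).aestronglyMeasurable
      (Real.exp (|c| * C))
    refine Filter.Eventually.of_forall fun y => ?_
    rw [Real.norm_eq_abs, Real.abs_exp, Real.exp_le_exp]
    calc c * W y ≤ |c * W y| := le_abs_self _
      _ = |c| * |W y| := abs_mul _ _
      _ ≤ |c| * C := by
          apply mul_le_mul_of_nonneg_left _ (abs_nonneg c)
          simpa [Real.norm_eq_abs] using hb y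
  -- mixture W
  have hWf : ∀ y, (∫ x, K (x, y) * f x ∂μ) = lam * W₁ y + (1 - lam) * W₂ y := by
    intro y
    rw [hW₁def, hW₂def]
    rw [show (fun x => K (x, y) * f x)
        = fun x => lam * (K (x, y) * p₁ x) + (1 - lam) * (K (x, y) * p₂ x) from
      funext fun x => by simp only [hfdef]; ring]
    rw [integral_add ((hint p₁ hi₁ y).const_mul lam) ((hint p₂ hi₂ y).const_mul (1 - lam)),
      integral_const_mul, integral_const_mul]
  -- Zq identities
  have hZ : ∀ p : Ω → ℝ, Measurable p → (∀ x, 0 ≤ p x) →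
      Zq (μ.withDensity fun x => ENNReal.ofReal (p x))
        = ∫ y, Real.exp (β * ∫ x, K (x, y) * p x ∂μ) ∂μ := by
    intro p hp hp0
    rw [hZq]
    congr 1
    funext y
    rw [key p hp hp0 y]
  set Z₁ : ℝ := ∫ y, Real.exp (β * W₁ y) ∂μ with hZ₁def
  set Z₂ : ℝ := ∫ y, Real.exp (β * W₂ y) ∂μ with hZ₂def
  set Zmix : ℝ := ∫ y, Real.exp (β * (lam * W₁ y + (1 - lam) * W₂ y)) ∂μ with hZmixdef
  have hZ₁pos : 0 < Z₁ := integral_exp_pos (hexpint β W₁ hW₁m hW₁b)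
  have hZ₂pos : 0 < Z₂ := integral_exp_pos (hexpint β W₂ hW₂m hW₂b)
  clear_value Z₁ Z₂
  have hZmixpos : 0 < Zmix := by
    have : Integrable (fun y => Real.exp ((fun y => β * (lam * W₁ y + (1 - lam) * W₂ y)) y)) μ := by
      have hm : StronglyMeasurable (fun y => lam * W₁ y + (1 - lam) * W₂ y) :=
        (hW₁m.const_mul lam).add (hW₂m.const_mul (1 - lam))
      have hb : ∀ y, ‖lam * W₁ y + (1 - lam) * W₂ y‖ ≤ C := by
        intro y
        calc ‖lam * W₁ y + (1 - lam) * W₂ y‖ ≤ ‖lam * W₁ y‖ + ‖(1 - lam) * W₂ y‖ := norm_add_le _ _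
          _ ≤ lam * C + (1 - lam) * C := by
              rw [norm_mul, norm_mul, Real.norm_of_nonneg hl0.le, Real.norm_of_nonneg hl1'.le]
              exact add_le_add (mul_le_mul_of_nonneg_left (hW₁b y) hl0.le)
                (mul_le_mul_of_nonneg_left (hW₂b y) hl1'.le)
          _ = C := by ring
      exact hexpint β _ hm hb
    exact integral_exp_pos this
  clear_value Zmix
  -- Hölder inequality
  have hconj : (lam⁻¹).HolderConjugate (1 - lam)⁻¹ := by
    constructor
    · rw [inv_inv, inv_inv, inv_one]; ring
    · exact inv_pos.2 hl0
    · exact inv_pos.2 hl1'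
  have hH := integral_mul_le_Lp_mul_Lq_of_nonneg hconj
      (Filter.Eventually.of_forall fun y => (Real.exp_pos ((lam * β) * W₁ y)).le)
      (Filter.Eventually.of_forall fun y => (Real.exp_pos (((1 - lam) * β) * W₂ y)).le)
      (hmem (lam * β) W₁ hW₁m hW₁b _)
      (hmem ((1 - lam) * β) W₂ hW₂m hW₂b _)
  have hZmix_le : Zmix ≤ Z₁ ^ lam * Z₂ ^ (1 - lam) := by
    have e1 : (fun y => Real.exp (β * (lam * W₁ y + (1 - lam) * W₂ y)))
        = fun y => Real.exp ((lam * β) * W₁ y) * Real.exp (((1 - lam) * β) * W₂ y) := by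
      funext y; rw [← Real.exp_add]; congr 1; ring
    have e2 : ∀ y, Real.exp ((lam * β) * W₁ y) ^ (lam⁻¹ : ℝ) = Real.exp (β * W₁ y) := by
      intro y; rw [← Real.exp_mul]; congr 1; field_simp
    have e3 : ∀ y, Real.exp (((1 - lam) * β) * W₂ y) ^ ((1 - lam)⁻¹ : ℝ) = Real.exp (β * W₂ y) := by
      intro y; rw [← Real.exp_mul]; congr 1; field_simp
    calc Zmix = ∫ y, Real.exp ((lam * β) * W₁ y) * Real.exp (((1 - lam) * β) * W₂ y) ∂μ := by
          rw [hZmixdef, e1]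
      _ ≤ (∫ y, Real.exp ((lam * β) * W₁ y) ^ (lam⁻¹ : ℝ) ∂μ) ^ (1 / lam⁻¹)
          * (∫ y, Real.exp (((1 - lam) * β) * W₂ y) ^ ((1 - lam)⁻¹ : ℝ) ∂μ) ^ (1 / (1 - lam)⁻¹) := hH
      _ = Z₁ ^ lam * Z₂ ^ (1 - lam) := by
          have i1 : (∫ y, Real.exp ((lam * β) * W₁ y) ^ (lam⁻¹ : ℝ) ∂μ) = Z₁ := by
            rw [hZ₁def]; congr 1; funext y; exact e2 y
          have i2 : (∫ y, Real.exp (((1 - lam) * β) * W₂ y) ^ ((1 - lam)⁻¹ : ℝ) ∂μ) = Z₂ := by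
            rw [hZ₂def]; congr 1; funext y; exact e3 y
          rw [one_div, inv_inv, one_div, inv_inv, i1, i2]
  have hlog : Real.log Zmix ≤ lam * Real.log Z₁ + (1 - lam) * Real.log Z₂ := by
    calc Real.log Zmix ≤ Real.log (Z₁ ^ lam * Z₂ ^ (1 - lam)) :=
          Real.log_le_log hZmixpos hZmix_le
      _ = lam * Real.log Z₁ + (1 - lam) * Real.log Z₂ := by
          rw [Real.log_mul (Real.rpow_pos_of_pos hZ₁pos lam).ne'
            (Real.rpow_pos_of_pos hZ₂pos (1 - lam)).ne',
            Real.log_rpow hZ₁pos, Real.log_rpow hZ₂pos]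
  -- Entropy part
  have hptwise : ∀ x, f x * Real.log (f x)
      ≤ lam * (p₁ x * Real.log (p₁ x)) + (1 - lam) * (p₂ x * Real.log (p₂ x)) := by
    intro x
    have := Real.strictConvexOn_mul_log.convexOn.2 (Set.mem_Ici.2 (h₁0 x))
      (Set.mem_Ici.2 (h₂0 x)) hl0.le hl1'.le (by ring)
    simpa [smul_eq_mul, hfdef] using this
  have hlb : ∀ x, -1 ≤ f x * Real.log (f x) := by
    intro x
    rcases eq_or_lt_of_le (hf0 x) with h | h
    · rw [← h]; norm_num
    · have h1 : Real.log (f x)⁻¹ ≤ (f x)⁻¹ - 1 := Real.log_le_sub_one_of_pos (inv_pos.2 h)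
      rw [Real.log_inv] at h1
      have h2 := mul_le_mul_of_nonneg_left h1 h.le
      have h3 : f x * ((f x)⁻¹ - 1) = 1 - f x := by field_simp
      nlinarith [h2, h3, h.le]
  set comb : Ω → ℝ :=
    fun x => lam * (p₁ x * Real.log (p₁ x)) + (1 - lam) * (p₂ x * Real.log (p₂ x)) with hcombdef
  have hcomb_int : Integrable comb μ := (h₁ent.const_mul lam).add (h₂ent.const_mul (1 - lam))
  clear_value comb
  have hφf_meas : AEStronglyMeasurable (fun x => f x * Real.log (f x)) μ :=
    (hfm.mul (Real.measurable_log.comp hfm)).aestronglyMeasurable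
  have hφf_int : Integrable (fun x => f x * Real.log (f x)) μ := by
    apply Integrable.mono' (hcomb_int.abs.add (integrable_const 1)) hφf_meas
    refine Filter.Eventually.of_forall fun x => ?_
    rw [Real.norm_eq_abs, abs_le]
    simp only [Pi.add_apply]
    have hcx : comb x = lam * (p₁ x * Real.log (p₁ x)) + (1 - lam) * (p₂ x * Real.log (p₂ x)) := by
      rw [hcombdef]
    constructor
    · linarith [hlb x, abs_nonneg (comb x)]
    · linarith [hptwise x, le_abs_self (comb x), hcx]
  have hg_int : Integrable (fun x => comb x - f x * Real.log (f x)) μ := hcomb_int.sub hφf_int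
  have hg0 : 0 ≤ fun x => comb x - f x * Real.log (f x) := by
    intro x
    simp only [Pi.zero_apply, hcombdef]
    have := hptwise x
    linarith
  have hgpos : ∀ x, p₁ x ≠ p₂ x → 0 < comb x - f x * Real.log (f x) := by
    intro x hx
    have := Real.strictConvexOn_mul_log.2 (Set.mem_Ici.2 (h₁0 x)) (Set.mem_Ici.2 (h₂0 x))
      hx hl0 hl1' (by ring)
    simp only [smul_eq_mul, hcombdef, hfdef] at this ⊢
    linarith
  have hμne : μ {x | p₁ x ≠ p₂ x} ≠ 0 := fun h0 => hne (by
    rw [Filter.EventuallyEq, ae_iff]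
    exact h0)
  have hgpos_int : 0 < ∫ x, (comb x - f x * Real.log (f x)) ∂μ := by
    rw [integral_pos_iff_support_of_nonneg hg0 hg_int]
    refine lt_of_lt_of_le (pos_iff_ne_zero.2 hμne) (measure_mono ?_)
    intro x hx
    exact (hgpos x hx).ne'
  have hSsplit : ∫ x, (comb x - f x * Real.log (f x)) ∂μ
      = (lam * ∫ x, p₁ x * Real.log (p₁ x) ∂μ + (1 - lam) * ∫ x, p₂ x * Real.log (p₂ x) ∂μ)
        - ∫ x, f x * Real.log (f x) ∂μ := by
    rw [integral_sub hcomb_int hφf_int]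
    congr 1
    rw [hcombdef]
    rw [integral_add (h₁ent.const_mul lam) (h₂ent.const_mul (1 - lam)),
      integral_const_mul, integral_const_mul]
  have hS : ∫ x, f x * Real.log (f x) ∂μ
      < lam * ∫ x, p₁ x * Real.log (p₁ x) ∂μ
        + (1 - lam) * ∫ x, p₂ x * Real.log (p₂ x) ∂μ := by
    rw [hSsplit] at hgpos_int; linarith
  -- Assemble
  rw [hF, hF, hF]
  have hz1 : Zq (μ.withDensity fun x => ENNReal.ofReal (p₁ x)) = Z₁ := by
    rw [hZ p₁ h₁m h₁0, hZ₁def]; simp only [hW₁def]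
  have hz2 : Zq (μ.withDensity fun x => ENNReal.ofReal (p₂ x)) = Z₂ := by
    rw [hZ p₂ h₂m h₂0, hZ₂def]; simp only [hW₂def]
  have hzmix : Zq (μ.withDensity fun x => ENNReal.ofReal (f x)) = Zmix := by
    rw [hZ f hfm hf0, hZmixdef]
    congr 1
    funext y
    rw [hWf y]
  rw [hz1, hz2, hzmix]
  have hβinv : 0 < β⁻¹ := inv_pos.2 hβ
  have h1 := mul_le_mul_of_nonneg_left hlog hβinv.le
  have h2 := mul_lt_mul_of_pos_left hS hβinv
  nlinarith [h1, h2]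
end

section
/- The first variation of the regularized partition-function energy is U(·, q[p]): for all Borel probability measures p₀, p₁ on Ω, the function φ : [0,1] → ℝ defined by φ(ε) = β⁻¹ log Z_q((1−ε)•p₀ + ε•p₁) is differentiable from the right at ε = 0 with derivative φ'(0) = ∫ Ψ(x,p₀) dp₁(x) − ∫ Ψ(x,p₀) dp₀(x). -/
open MeasureTheory Real

lemma my_cont_integrable {X : Type*} [TopologicalSpace X] [CompactSpace X]
    [MeasurableSpace X] [OpensMeasurableSpace X] [T2Space X] {f : X → ℝ} (hf : Continuous f)
    (ν : Measure X) [IsFiniteMeasureOnCompacts ν] : Integrable f ν :=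
  hf.integrable_of_hasCompactSupport
    (IsCompact.of_isClosed_subset isCompact_univ (isClosed_tsupport f) (Set.subset_univ _))

lemma my_cont_int_param {X : Type*} [MetricSpace X] [CompactSpace X]
    [MeasurableSpace X] [BorelSpace X] {K : X × X → ℝ} (hK : Continuous K)
    (p : Measure X) [IsProbabilityMeasure p] :
    Continuous fun y => ∫ x, K (x, y) ∂p := by
  have hne : Nonempty X := by
    by_contra h
    rw [not_nonempty_iff] at h
    have : p Set.univ = 1 := measure_univ
    simp [Set.univ_eq_empty_iff.mpr h] at this
  obtain ⟨z₀, -, hz₀⟩ := isCompact_univ.exists_isMaxOn Set.univ_nonempty hK.norm.continuousOn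
  have hz₀ : ∀ z, ‖K z‖ ≤ ‖K z₀‖ := fun z => hz₀ (Set.mem_univ z)
  apply continuous_of_dominated (bound := fun _ => ‖K z₀‖)
  · exact fun y => ((hK.comp (Continuous.prodMk_left y)).aestronglyMeasurable)
  · exact fun y => Filter.Eventually.of_forall fun x => hz₀ (x, y)
  · exact integrable_const _
  · exact Filter.Eventually.of_forall fun x =>
      hK.comp (continuous_const.prodMk continuous_id)

/-- First variation of the regularized partition-function energy: along the segment
`ε ↦ (1−ε)•p₀ + ε•p₁` the function `ε ↦ β⁻¹ log Z_q(...)` has right derivative at `ε = 0`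
equal to `∫ Ψ(x,p₀) dp₁(x) − ∫ Ψ(x,p₀) dp₀(x)`. -/
theorem first_variation_logZq
    {Ω : Type*} [MetricSpace Ω] [CompactSpace Ω] [MeasurableSpace Ω] [BorelSpace Ω]
    (μ : Measure Ω) [IsProbabilityMeasure μ] (β : ℝ) (hβ : 0 < β)
    (K : Ω × Ω → ℝ) (hK : Continuous K)
    (V : Ω → Measure Ω → ℝ) (hV : ∀ y p, V y p = ∫ x, K (x, y) ∂p)
    (Zq : Measure Ω → ℝ) (hZq : ∀ p, Zq p = ∫ y, Real.exp (β * V y p) ∂μ)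
    (qp : Measure Ω → Ω → ℝ) (hqp : ∀ p y, qp p y = Real.exp (β * V y p) / Zq p)
    (Ψ : Ω → Measure Ω → ℝ) (hΨ : ∀ x p, Ψ x p = ∫ y, K (x, y) * qp p y ∂μ)
    (p₀ p₁ : Measure Ω) [IsProbabilityMeasure p₀] [IsProbabilityMeasure p₁]
    (φ : ℝ → ℝ)
    (hφ : ∀ ε ∈ Set.Icc (0:ℝ) 1,
      φ ε = β⁻¹ * Real.log (Zq (ENNReal.ofReal (1 - ε) • p₀ + ENNReal.ofReal ε • p₁))) :
    HasDerivWithinAt φ ((∫ x, Ψ x p₀ ∂p₁) - ∫ x, Ψ x p₀ ∂p₀) (Set.Icc (0:ℝ) 1) 0 := by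
  -- Ω is nonempty
  have hne : Nonempty Ω := by
    by_contra h
    rw [not_nonempty_iff] at h
    have : μ Set.univ = 1 := measure_univ
    simp [Set.univ_eq_empty_iff.mpr h] at this
  -- bound on K
  obtain ⟨z₀, -, hz₀⟩ := isCompact_univ.exists_isMaxOn Set.univ_nonempty hK.norm.continuousOn
  have hz₀ : ∀ z, ‖K z‖ ≤ ‖K z₀‖ := fun z => hz₀ (Set.mem_univ z)
  set C : ℝ := ‖K z₀‖ with hCdef
  have hC0 : 0 ≤ C := norm_nonneg _
  have hCb : ∀ z, |K z| ≤ C := fun z => hz₀ z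
  -- the two basic functions
  set a : Ω → ℝ := fun y => ∫ x, K (x, y) ∂p₀ with ha
  set b : Ω → ℝ := fun y => ∫ x, K (x, y) ∂p₁ with hb
  have hca : Continuous a := my_cont_int_param hK p₀
  have hcb : Continuous b := my_cont_int_param hK p₁
  have hab : ∀ y, |a y| ≤ C ∧ |b y| ≤ C := by
    intro y
    constructor
    · calc |a y| ≤ ∫ x, |K (x, y)| ∂p₀ := by simpa [Real.norm_eq_abs] using norm_integral_le_integral_norm (fun x => K (x, y)) (μ := p₀)
        _ ≤ ∫ _x, C ∂p₀ := integral_mono_of_nonneg (.of_forall fun _ => abs_nonneg _)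
            (integrable_const _) (.of_forall fun x => hCb _)
        _ = C := by simp
    · calc |b y| ≤ ∫ x, |K (x, y)| ∂p₁ := by simpa [Real.norm_eq_abs] using norm_integral_le_integral_norm (fun x => K (x, y)) (μ := p₁)
        _ ≤ ∫ _x, C ∂p₁ := integral_mono_of_nonneg (.of_forall fun _ => abs_nonneg _)
            (integrable_const _) (.of_forall fun x => hCb _)
        _ = C := by simp
  -- parametrized family
  set F : ℝ → Ω → ℝ := fun ε y => Real.exp (β * a y + ε * (β * (b y - a y))) with hF
  set F' : ℝ → Ω → ℝ := fun ε y => (β * (b y - a y)) * F ε y with hF'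
  have hFcont : ∀ ε, Continuous (F ε) := fun ε => by
    apply Real.continuous_exp.comp
    exact (continuous_const.mul hca).add ((continuous_const.mul (continuous_const.mul (hcb.sub hca))))
  have hF'cont : ∀ ε, Continuous (F' ε) := fun ε =>
    (continuous_const.mul (hcb.sub hca)).mul (hFcont ε)
  set f : ℝ → ℝ := fun ε => ∫ y, F ε y ∂μ with hf
  -- derivative of f at 0
  have key : Integrable (F' 0) μ ∧ HasDerivAt f (∫ y, F' 0 y ∂μ) 0 := by
    apply hasDerivAt_integral_of_dominated_loc_of_deriv_le (s := Metric.ball 0 1) (Metric.ball_mem_nhds 0 one_pos)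
      (bound := fun _ => (β * (2 * C)) * Real.exp (3 * (β * C)))
    · exact Filter.Eventually.of_forall fun ε => (hFcont ε).aestronglyMeasurable
    · exact my_cont_integrable (hFcont 0) μ
    · exact (hF'cont 0).aestronglyMeasurable
    · refine Filter.Eventually.of_forall fun y => fun ε hε => ?_
      have hε1 : |ε| ≤ 1 := by
        simpa [Real.dist_eq] using le_of_lt (Metric.mem_ball.mp hε)
      have h1 : |β * (b y - a y)| ≤ β * (2 * C) := by
        rw [abs_mul, abs_of_pos hβ]
        apply mul_le_mul_of_nonneg_left _ hβ.le
        calc |b y - a y| ≤ |b y| + |a y| := abs_sub _ _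
          _ ≤ C + C := add_le_add (hab y).2 (hab y).1
          _ = 2 * C := by ring
      have h2 : F ε y ≤ Real.exp (3 * (β * C)) := by
        apply Real.exp_le_exp.mpr
        have hay : β * a y ≤ β * C := by
          apply mul_le_mul_of_nonneg_left _ hβ.le
          exact (abs_le.mp (hab y).1).2
        have hd : ε * (β * (b y - a y)) ≤ 1 * (β * (2 * C)) := by
          calc ε * (β * (b y - a y)) ≤ |ε * (β * (b y - a y))| := le_abs_self _
            _ = |ε| * |β * (b y - a y)| := abs_mul _ _
            _ ≤ 1 * (β * (2 * C)) :=
              mul_le_mul hε1 h1 (abs_nonneg _) zero_le_one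
        nlinarith
      calc ‖F' ε y‖ = |β * (b y - a y)| * F ε y := by
            rw [hF']; rw [Real.norm_eq_abs, abs_mul, abs_of_pos (Real.exp_pos _)]
        _ ≤ (β * (2 * C)) * Real.exp (3 * (β * C)) :=
            mul_le_mul h1 h2 (Real.exp_pos _).le (by positivity)
    · exact integrable_const _
    · refine Filter.Eventually.of_forall fun y => fun ε _ => ?_
      have : HasDerivAt (fun ε : ℝ => β * a y + ε * (β * (b y - a y)))
          (β * (b y - a y)) ε := by
        simpa using ((hasDerivAt_id ε).mul_const (β * (b y - a y))).const_add (β * a y)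
      simpa [hF', mul_comm] using this.exp
  -- positivity of f 0
  have hf0pos : 0 < f 0 := integral_exp_pos (my_cont_integrable (hFcont 0) μ)
  -- f 0 = Zq p₀
  have hZ0 : Zq p₀ = f 0 := by
    rw [hZq, hf]
    congr 1 with y
    rw [hV]
    simp [hF, ha]
  -- q density
  set q : Ω → ℝ := fun y => Real.exp (β * a y) / f 0 with hq
  have hqp0 : ∀ y, qp p₀ y = q y := by
    intro y
    rw [hqp, hZ0, hV, hq]
  have hqcont : Continuous q := ((continuous_const.mul hca).rexp).div_const _
  -- the function g
  set g : ℝ → ℝ := fun ε => β⁻¹ * Real.log (f ε) with hg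
  have hgd : HasDerivAt g (β⁻¹ * ((∫ y, F' 0 y ∂μ) / f 0)) 0 :=
    (key.2.log hf0pos.ne').const_mul β⁻¹
  -- φ = g on Icc
  have hφg : ∀ ε ∈ Set.Icc (0:ℝ) 1, φ ε = g ε := by
    intro ε hε
    obtain ⟨hε0, hε1⟩ := hε
    rw [hφ ε ⟨hε0, hε1⟩, hg]
    congr 2
    rw [hZq, hf]
    congr 1 with y
    congr 1
    have hVy : V y (ENNReal.ofReal (1 - ε) • p₀ + ENNReal.ofReal ε • p₁)
        = (1 - ε) * a y + ε * b y := by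
      rw [hV]
      have hi0 : Integrable (fun x => K (x, y)) (ENNReal.ofReal (1 - ε) • p₀) := by
        apply Integrable.smul_measure (my_cont_integrable
          (hK.comp (continuous_id.prodMk continuous_const)) p₀)
        exact ENNReal.ofReal_ne_top
      have hi1 : Integrable (fun x => K (x, y)) (ENNReal.ofReal ε • p₁) := by
        apply Integrable.smul_measure (my_cont_integrable
          (hK.comp (continuous_id.prodMk continuous_const)) p₁)
        exact ENNReal.ofReal_ne_top
      rw [integral_add_measure hi0 hi1, integral_smul_measure, integral_smul_measure,
        ENNReal.toReal_ofReal (by linarith), ENNReal.toReal_ofReal hε0]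
      simp [ha, hb, smul_eq_mul]
    rw [hVy]; ring
  -- value of the derivative
  have hval : β⁻¹ * ((∫ y, F' 0 y ∂μ) / f 0)
      = (∫ x, Ψ x p₀ ∂p₁) - ∫ x, Ψ x p₀ ∂p₀ := by
    -- ∫ F' 0 = β * ∫ (b - a) * exp(β a)
    have h1 : (∫ y, F' 0 y ∂μ) / f 0 = β * ((∫ y, b y * q y ∂μ) - ∫ y, a y * q y ∂μ) := by
      have e1 : ∀ y, F' 0 y / f 0 = β * (b y * q y - a y * q y) := by
        intro y
        simp only [hF', hF, hq]
        field_simp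
        ring
      rw [div_eq_iff hf0pos.ne']
      rw [show (∫ y, F' 0 y ∂μ) = ∫ y, (F' 0 y / f 0) * f 0 ∂μ by
        congr 1 with y; field_simp]
      rw [integral_mul_const]
      congr 1
      rw [show (∫ y, F' 0 y / f 0 ∂μ) = ∫ y, β * (b y * q y - a y * q y) ∂μ by
        congr 1 with y; exact e1 y]
      rw [integral_const_mul, integral_sub]
      · exact my_cont_integrable (hcb.mul hqcont) μ
      · exact my_cont_integrable (hca.mul hqcont) μ
    -- Fubini for each
    have fub : ∀ (p : Measure Ω) [IsProbabilityMeasure p],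
        (∫ y, (∫ x, K (x, y) ∂p) * q y ∂μ) = ∫ x, Ψ x p₀ ∂p := by
      intro p hp
      have hint : Integrable (fun z : Ω × Ω => K (z.1, z.2) * q z.2) (p.prod μ) := by
        apply my_cont_integrable
        exact (hK.comp (continuous_fst.prodMk continuous_snd)).mul
          (hqcont.comp continuous_snd)
      calc (∫ y, (∫ x, K (x, y) ∂p) * q y ∂μ)
          = ∫ y, ∫ x, K (x, y) * q y ∂p ∂μ := by
            congr 1 with y; rw [integral_mul_const]
        _ = ∫ x, ∫ y, K (x, y) * q y ∂μ ∂p := (integral_integral_swap hint).symm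
        _ = ∫ x, Ψ x p₀ ∂p := by
            congr 1 with x
            rw [hΨ]
            congr 1 with y
            rw [hqp0]
    rw [h1, ← mul_assoc, inv_mul_cancel₀ hβ.ne', one_mul]
    rw [show (∫ y, b y * q y ∂μ) = ∫ x, Ψ x p₀ ∂p₁ from fub p₁,
      show (∫ y, a y * q y ∂μ) = ∫ x, Ψ x p₀ ∂p₀ from fub p₀]
  -- conclude
  have : HasDerivWithinAt g ((∫ x, Ψ x p₀ ∂p₁) - ∫ x, Ψ x p₀ ∂p₀) (Set.Icc (0:ℝ) 1) 0 := by
    rw [← hval]; exact hgd.hasDerivWithinAt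
  exact this.congr hφg (hφg 0 ⟨le_refl 0, zero_le_one⟩)
end

section
/- There exists a pair (p,q) of probability densities with respect to μ satisfying the fixed-point system p(x) = exp(−β ∫ K(x,y) q(y) dμ(y)) / Z_p μ-a.e. and q(y) = exp(β ∫ K(x,y) p(x) dμ(x)) / Z_q μ-a.e., where Z_p = ∫ exp(−β ∫ K(x,y) q(y) dμ(y)) dμ(x) and Z_q = ∫ exp(β ∫ K(x,y) p(x) dμ(x)) dμ(y); moreover this pair is unique up to μ-a.e. equality. -/
set_option linter.unusedSectionVars false
set_option maxHeartbeats 2000000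

open MeasureTheory Real BoundedContinuousFunction

namespace FPaux
variable {Ω : Type*} [MetricSpace Ω] [CompactSpace Ω] [MeasurableSpace Ω] [BorelSpace Ω]

theorem cont_integrable {X : Type*} [MetricSpace X] [CompactSpace X] [MeasurableSpace X]
    [BorelSpace X] (μ : Measure X) [IsFiniteMeasure μ] {f : X → ℝ}
    (hf : Continuous f) : Integrable f μ :=
  hf.integrable_of_hasCompactSupport (HasCompactSupport.of_compactSpace f)

theorem density_integrable (μ : Measure Ω) {q : Ω → ℝ} (hq1 : ∫ x, q x ∂μ = 1) :
    Integrable q μ := by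
  by_contra h
  rw [integral_undef h] at hq1
  exact one_ne_zero hq1.symm

theorem abs_int_le (μ : Measure Ω) (f : Ω → ℝ) : |∫ x, f x ∂μ| ≤ ∫ x, |f x| ∂μ := by
  simpa [Real.norm_eq_abs] using norm_integral_le_integral_norm (μ := μ) f

section elem

/-- elementary: Lipschitz bound for `exp` on `[-b, b]`. -/
theorem exp_lip {b s t : ℝ} (hs : |s| ≤ b) (ht : |t| ≤ b) :
    |Real.exp s - Real.exp t| ≤ Real.exp b * |s - t| := by
  wlog h : t ≤ s generalizing s t
  · have := this ht hs (le_of_not_ge h)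
    rw [abs_sub_comm, abs_sub_comm s t]; exact this
  have h1 : Real.exp s - Real.exp t ≤ Real.exp b * (s - t) := by
    have h2 : Real.exp s - Real.exp t = Real.exp s * (1 - Real.exp (t - s)) := by
      rw [mul_sub, mul_one, ← Real.exp_add]; ring_nf
    have h3 : 1 - Real.exp (t - s) ≤ s - t := by
      nlinarith [Real.add_one_le_exp (t - s)]
    have hsb : Real.exp s ≤ Real.exp b := Real.exp_le_exp.2 (le_trans (le_abs_self s) hs)
    calc Real.exp s - Real.exp t = Real.exp s * (1 - Real.exp (t - s)) := h2
      _ ≤ Real.exp s * (s - t) := by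
          apply mul_le_mul_of_nonneg_left h3 (Real.exp_pos s).le
      _ ≤ Real.exp b * (s - t) := by
          apply mul_le_mul_of_nonneg_right hsb (by linarith)
  rw [abs_of_nonneg (sub_nonneg.2 (Real.exp_le_exp.2 h)),
    abs_of_nonneg (by linarith : (0:ℝ) ≤ s - t)]
  exact h1

/-- elementary: quadratic bound for `exp`. -/
theorem exp_quad (t : ℝ) : Real.exp t - 1 - t ≤ t ^ 2 * Real.exp |t| := by
  have key : Real.exp t * Real.exp (-t) = 1 := by rw [← Real.exp_add]; simp
  rcases le_or_gt 0 t with h | h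
  · rw [abs_of_nonneg h]
    have h1 : Real.exp t - 1 ≤ t * Real.exp t := by
      nlinarith [mul_le_mul_of_nonneg_left (Real.add_one_le_exp (-t)) (Real.exp_pos t).le, key]
    nlinarith [h1, mul_le_mul_of_nonneg_left h1 h]
  · rw [abs_of_neg h]
    have hB : Real.exp t * (1 - t) ≤ 1 := by
      nlinarith [mul_le_mul_of_nonneg_left (Real.add_one_le_exp (-t)) (Real.exp_pos t).le, key]
    have h1 : Real.exp t ≤ 1 + t + t ^ 2 := by
      nlinarith [hB, mul_nonneg (mul_nonneg (neg_nonneg.2 h.le) (neg_nonneg.2 h.le))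
        (neg_nonneg.2 h.le)]
    have h2 : (1 : ℝ) ≤ Real.exp (-t) := by
      nlinarith [Real.add_one_le_exp (-t)]
    nlinarith [h1, h2, sq_nonneg t]

end elem


noncomputable def Vint (μ : Measure Ω) (K : Ω × Ω → ℝ) (q : Ω → ℝ) (x : Ω) : ℝ :=
  ∫ y, K (x, y) * q y ∂μ

def Kswap (K : Ω × Ω → ℝ) : Ω × Ω → ℝ := fun z => K (z.2, z.1)

noncomputable def gibbs (μ : Measure Ω) (w : Ω → ℝ) : Ω → ℝ :=
  fun x => Real.exp (w x) / ∫ x', Real.exp (w x') ∂μ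

noncomputable def Amap (μ : Measure Ω) (β : ℝ) (K : Ω × Ω → ℝ) (q : Ω → ℝ) : Ω → ℝ :=
  fun x => Real.exp (-β * ∫ y, K (x, y) * q y ∂μ)
      / ∫ x', Real.exp (-β * ∫ y, K (x', y) * q y ∂μ) ∂μ

noncomputable def Bmap (μ : Measure Ω) (β : ℝ) (K : Ω × Ω → ℝ) (p : Ω → ℝ) : Ω → ℝ :=
  fun y => Real.exp (β * ∫ x, K (x, y) * p x ∂μ)
      / ∫ y', Real.exp (β * ∫ x, K (x, y') * p x ∂μ) ∂μ

def EP (μ : Measure Ω) (β : ℝ) (K : Ω × Ω → ℝ) (κ : ℝ) (f : Ω → ℝ) : Prop :=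
  (∀ x, f x ∈ Set.Icc (Real.exp (-(2*(β*κ)))) (Real.exp (2*(β*κ)))) ∧
  (∀ ε : ℝ, 0 < ε → ∀ x x' : Ω, (∀ y, |K (x, y) - K (x', y)| ≤ ε) →
      |f x - f x'| ≤ β * Real.exp (2*(β*κ)) * ε) ∧
  ∫ x, f x ∂μ = 1

def ES (μ : Measure Ω) (β : ℝ) (K : Ω × Ω → ℝ) (κ : ℝ) : Set (Ω →ᵇ ℝ) :=
  {f | EP μ β K κ ⇑f}

section V
variable (μ : Measure Ω) [IsProbabilityMeasure μ] {K : Ω × Ω → ℝ} {κ : ℝ} {q : Ω → ℝ}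

theorem Vint_integrand_integrable (hK : Continuous K) (hκ : ∀ z, |K z| ≤ κ)
    (hq1 : ∫ x, q x ∂μ = 1) (x : Ω) : Integrable (fun y => K (x, y) * q y) μ := by
  have := (density_integrable μ hq1).bdd_mul
    (Continuous.aestronglyMeasurable (by fun_prop : Continuous (fun y => K (x, y))))
    (ae_of_all _ fun y => by simpa using hκ (x, y))
  simpa using this

theorem Vint_abs_le (hK : Continuous K) (hκ : ∀ z, |K z| ≤ κ) (hq0 : ∀ x, 0 ≤ q x)
    (hq1 : ∫ x, q x ∂μ = 1) (x : Ω) : |Vint μ K q x| ≤ κ := by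
  have h1 := abs_int_le μ (fun y => K (x, y) * q y)
  have h2 : ∫ y, |K (x, y) * q y| ∂μ ≤ ∫ y, κ * q y ∂μ := by
    apply integral_mono (Vint_integrand_integrable μ hK hκ hq1 x).abs
      ((density_integrable μ hq1).const_mul κ)
    intro y
    simp only [abs_mul, abs_of_nonneg (hq0 y)]
    exact mul_le_mul_of_nonneg_right (hκ (x, y)) (hq0 y)
  have h3 : ∫ y, κ * q y ∂μ = κ := by rw [integral_const_mul, hq1, mul_one]
  rw [Vint]; linarith

theorem Vint_mod (hK : Continuous K) (hκ : ∀ z, |K z| ≤ κ) (hq0 : ∀ x, 0 ≤ q x)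
    (hq1 : ∫ x, q x ∂μ = 1) {x x' : Ω} {ε : ℝ}
    (hxx : ∀ y, |K (x, y) - K (x', y)| ≤ ε) :
    |Vint μ K q x - Vint μ K q x'| ≤ ε := by
  have h0 : Vint μ K q x - Vint μ K q x' = ∫ y, (K (x, y) - K (x', y)) * q y ∂μ := by
    rw [Vint, Vint, ← integral_sub (Vint_integrand_integrable μ hK hκ hq1 x)
      (Vint_integrand_integrable μ hK hκ hq1 x')]
    congr 1; ext y; ring
  rw [h0]
  have h1 := abs_int_le μ (fun y => (K (x, y) - K (x', y)) * q y)
  have hsub : Integrable (fun y => (K (x, y) - K (x', y)) * q y) μ := by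
    have := (Vint_integrand_integrable μ hK hκ hq1 (q := q) x).sub
      (Vint_integrand_integrable μ hK hκ hq1 (q := q) x')
    simpa [sub_mul, Pi.sub_def] using this
  have h2 : ∫ y, |(K (x, y) - K (x', y)) * q y| ∂μ ≤ ∫ y, ε * q y ∂μ := by
    apply integral_mono hsub.abs ((density_integrable μ hq1).const_mul ε)
    intro y
    simp only [abs_mul, abs_of_nonneg (hq0 y)]
    exact mul_le_mul_of_nonneg_right (hxx y) (hq0 y)
  have h3 : ∫ y, ε * q y ∂μ = ε := by rw [integral_const_mul, hq1, mul_one]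
  linarith

/-- uniform continuity of the kernel in its first slot. -/
theorem kernel_uc (hK : Continuous K) {ε : ℝ} (hε : 0 < ε) :
    ∃ δ > 0, ∀ x x' : Ω, dist x x' < δ → ∀ y, |K (x, y) - K (x', y)| ≤ ε := by
  have huc : UniformContinuous K := CompactSpace.uniformContinuous_of_continuous hK
  rw [Metric.uniformContinuous_iff] at huc
  obtain ⟨δ, hδ, hd⟩ := huc ε hε
  refine ⟨δ, hδ, fun x x' hxx y => ?_⟩
  have hd2 : dist ((x, y) : Ω × Ω) (x', y) < δ := by
    rw [Prod.dist_eq]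
    exact max_lt_iff.2 ⟨hxx, by simpa [dist_self] using hδ⟩
  have := hd hd2
  rw [Real.dist_eq] at this
  exact this.le

theorem Vint_continuous (hK : Continuous K) (hκ : ∀ z, |K z| ≤ κ) (hq0 : ∀ x, 0 ≤ q x)
    (hq1 : ∫ x, q x ∂μ = 1) : Continuous (Vint μ K q) := by
  rw [Metric.continuous_iff]
  intro x ε hε
  obtain ⟨δ, hδ, hd⟩ := kernel_uc hK (half_pos hε)
  refine ⟨δ, hδ, fun x' hx' => ?_⟩
  rw [Real.dist_eq]
  have := Vint_mod μ hK hκ hq0 hq1 (fun y => (hd x' x hx' y))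
  linarith

end V

section G
variable (μ : Measure Ω) [IsProbabilityMeasure μ] {w : Ω → ℝ} {c : ℝ}
  (hw : Continuous w) (hwc : ∀ x, |w x| ≤ c)

include hw hwc

theorem Zw_mem : ∫ x, Real.exp (w x) ∂μ ∈ Set.Icc (Real.exp (-c)) (Real.exp c) := by
  constructor
  · have h1 : ∫ _x : Ω, Real.exp (-c) ∂μ ≤ ∫ x, Real.exp (w x) ∂μ := by
      apply integral_mono (integrable_const _) (cont_integrable μ (hw.rexp))
      intro x
      exact Real.exp_le_exp.2 (neg_le_of_abs_le (hwc x))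
    simpa using h1
  · have h1 : ∫ x, Real.exp (w x) ∂μ ≤ ∫ _x : Ω, Real.exp c ∂μ := by
      apply integral_mono (cont_integrable μ (hw.rexp)) (integrable_const _)
      intro x
      exact Real.exp_le_exp.2 (le_of_abs_le (hwc x))
    simpa using h1

theorem Zw_pos : 0 < ∫ x, Real.exp (w x) ∂μ :=
  lt_of_lt_of_le (Real.exp_pos (-c)) (Zw_mem μ hw hwc).1

theorem gibbs_pos (x : Ω) : 0 < gibbs μ w x :=
  div_pos (Real.exp_pos _) (Zw_pos μ hw hwc)

theorem gibbs_continuous : Continuous (gibbs μ w) :=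
  (hw.rexp).div continuous_const (fun _ => (Zw_pos μ hw hwc).ne')

theorem gibbs_integral : ∫ x, gibbs μ w x ∂μ = 1 := by
  unfold gibbs
  simp only [div_eq_mul_inv]
  rw [integral_mul_const]
  exact mul_inv_cancel₀ (Zw_pos μ hw hwc).ne'

theorem gibbs_mem (x : Ω) : gibbs μ w x ∈ Set.Icc (Real.exp (-(2*c))) (Real.exp (2*c)) := by
  have hZ := Zw_mem μ hw hwc
  have hZp := Zw_pos μ hw hwc
  constructor
  · rw [gibbs, le_div_iff₀ hZp]
    have h1 : Real.exp (-(2*c)) * ∫ x', Real.exp (w x') ∂μ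
        ≤ Real.exp (-(2*c)) * Real.exp c :=
      mul_le_mul_of_nonneg_left hZ.2 (Real.exp_pos _).le
    have h2 : Real.exp (-(2*c)) * Real.exp c = Real.exp (-c) := by
      rw [← Real.exp_add]; ring_nf
    have h3 : Real.exp (-c) ≤ Real.exp (w x) :=
      Real.exp_le_exp.2 (neg_le_of_abs_le (hwc x))
    linarith
  · rw [gibbs, div_le_iff₀ hZp]
    have h1 : Real.exp (w x) ≤ Real.exp c := Real.exp_le_exp.2 (le_of_abs_le (hwc x))
    have h2 : Real.exp c = Real.exp (2*c) * Real.exp (-c) := by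
      rw [← Real.exp_add]; ring_nf
    have h3 : Real.exp (2*c) * Real.exp (-c) ≤ Real.exp (2*c) * ∫ x', Real.exp (w x') ∂μ :=
      mul_le_mul_of_nonneg_left hZ.1 (Real.exp_pos _).le
    linarith

theorem gibbs_mod {x x' : Ω} {d : ℝ} (hd : |w x - w x'| ≤ d) :
    |gibbs μ w x - gibbs μ w x'| ≤ Real.exp (2*c) * d := by
  have hZ := Zw_mem μ hw hwc
  have hZp := Zw_pos μ hw hwc
  have h1 : |Real.exp (w x) - Real.exp (w x')| ≤ Real.exp c * |w x - w x'| :=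
    exp_lip (hwc x) (hwc x')
  have h2 : |gibbs μ w x - gibbs μ w x'|
      = |Real.exp (w x) - Real.exp (w x')| / ∫ x', Real.exp (w x') ∂μ := by
    simp only [gibbs]
    rw [div_sub_div_same, abs_div, abs_of_pos hZp]
  rw [h2, div_le_iff₀ hZp]
  have hd0 : 0 ≤ d := le_trans (abs_nonneg _) hd
  have h3 : Real.exp c * |w x - w x'| ≤ Real.exp c * d :=
    mul_le_mul_of_nonneg_left hd (Real.exp_pos _).le
  have h4 : Real.exp c * d = Real.exp (2*c) * d * Real.exp (-c) := by
    rw [mul_comm (Real.exp (2*c)) d, mul_assoc, ← Real.exp_add]; ring_nf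
  have h5 : Real.exp (2*c) * d * Real.exp (-c)
      ≤ Real.exp (2*c) * d * ∫ x', Real.exp (w x') ∂μ := by
    apply mul_le_mul_of_nonneg_left hZ.1
    positivity
  linarith

theorem gibbs_log (x : Ω) :
    Real.log (gibbs μ w x) = w x - Real.log (∫ x', Real.exp (w x') ∂μ) := by
  rw [gibbs, Real.log_div (Real.exp_pos _).ne' (Zw_pos μ hw hwc).ne', Real.log_exp]

end G

section maps
variable (μ : Measure Ω) [IsProbabilityMeasure μ] {β : ℝ} {K : Ω × Ω → ℝ} {κ : ℝ}
  {q p : Ω → ℝ}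

theorem Amap_eq (q : Ω → ℝ) :
    Amap μ β K q = gibbs μ (fun x => -β * Vint μ K q x) := rfl

theorem Bmap_eq (p : Ω → ℝ) :
    Bmap μ β K p = gibbs μ (fun y => β * Vint μ (fun z => K (z.2, z.1)) p y) := rfl

theorem Aw_cont (hβ : 0 < β) (hK : Continuous K) (hκ : ∀ z, |K z| ≤ κ)
    (hq0 : ∀ x, 0 ≤ q x) (hq1 : ∫ x, q x ∂μ = 1) :
    Continuous (fun x => -β * Vint μ K q x) :=
  continuous_const.mul (Vint_continuous μ hK hκ hq0 hq1)

theorem Aw_bdd (hβ : 0 < β) (hK : Continuous K) (hκ : ∀ z, |K z| ≤ κ)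
    (hq0 : ∀ x, 0 ≤ q x) (hq1 : ∫ x, q x ∂μ = 1) :
    ∀ x, |(fun x => -β * Vint μ K q x) x| ≤ β * κ := by
  intro x
  simp only [abs_mul, abs_neg, abs_of_pos hβ]
  exact mul_le_mul_of_nonneg_left (Vint_abs_le μ hK hκ hq0 hq1 x) hβ.le

theorem Kswap_cont (hK : Continuous K) : Continuous (fun z : Ω × Ω => K (z.2, z.1)) := by
  fun_prop

theorem Kswap_bdd (hκ : ∀ z, |K z| ≤ κ) : ∀ z : Ω × Ω, |(fun z : Ω × Ω => K (z.2, z.1)) z| ≤ κ :=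
  fun z => hκ _

theorem Bw_cont (hβ : 0 < β) (hK : Continuous K) (hκ : ∀ z, |K z| ≤ κ)
    (hp0 : ∀ x, 0 ≤ p x) (hp1 : ∫ x, p x ∂μ = 1) :
    Continuous (fun y => β * Vint μ (fun z : Ω × Ω => K (z.2, z.1)) p y) :=
  continuous_const.mul (Vint_continuous μ (Kswap_cont hK) (Kswap_bdd hκ) hp0 hp1)

theorem Bw_bdd (hβ : 0 < β) (hK : Continuous K) (hκ : ∀ z, |K z| ≤ κ)
    (hp0 : ∀ x, 0 ≤ p x) (hp1 : ∫ x, p x ∂μ = 1) :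
    ∀ y, |(fun y => β * Vint μ (fun z : Ω × Ω => K (z.2, z.1)) p y) y| ≤ β * κ := by
  intro y
  simp only [abs_mul, abs_of_pos hβ]
  exact mul_le_mul_of_nonneg_left
    (Vint_abs_le μ (Kswap_cont hK) (Kswap_bdd hκ) hp0 hp1 y) hβ.le

/-- All properties of the B-update of a density. -/
theorem Bmap_props (hβ : 0 < β) (hK : Continuous K) (hκ : ∀ z, |K z| ≤ κ)
    (hp0 : ∀ x, 0 ≤ p x) (hp1 : ∫ x, p x ∂μ = 1) :
    Continuous (Bmap μ β K p) ∧ (∀ y, 0 < Bmap μ β K p y) ∧ (∫ y, Bmap μ β K p y ∂μ = 1)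
      ∧ (∀ y, Bmap μ β K p y ∈ Set.Icc (Real.exp (-(2*(β*κ)))) (Real.exp (2*(β*κ)))) := by
  have hw := Bw_cont μ hβ hK hκ hp0 hp1
  have hwc := Bw_bdd μ hβ hK hκ hp0 hp1
  rw [Bmap_eq]
  exact ⟨gibbs_continuous μ hw hwc, gibbs_pos μ hw hwc, gibbs_integral μ hw hwc,
    gibbs_mem μ hw hwc⟩

/-- All properties of the A-update of a density. -/
theorem Amap_props (hβ : 0 < β) (hK : Continuous K) (hκ : ∀ z, |K z| ≤ κ)
    (hq0 : ∀ x, 0 ≤ q x) (hq1 : ∫ x, q x ∂μ = 1) :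
    Continuous (Amap μ β K q) ∧ (∀ x, 0 < Amap μ β K q x) ∧ (∫ x, Amap μ β K q x ∂μ = 1)
      ∧ (∀ x, Amap μ β K q x ∈ Set.Icc (Real.exp (-(2*(β*κ)))) (Real.exp (2*(β*κ))))
      ∧ (∀ ε : ℝ, 0 < ε → ∀ x x' : Ω, (∀ y, |K (x, y) - K (x', y)| ≤ ε) →
          |Amap μ β K q x - Amap μ β K q x'| ≤ β * Real.exp (2*(β*κ)) * ε) := by
  have hw := Aw_cont μ hβ hK hκ hq0 hq1
  have hwc := Aw_bdd μ hβ hK hκ hq0 hq1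
  rw [Amap_eq]
  refine ⟨gibbs_continuous μ hw hwc, gibbs_pos μ hw hwc, gibbs_integral μ hw hwc,
    gibbs_mem μ hw hwc, ?_⟩
  intro ε hε x x' hxx
  have h1 : |(fun x => -β * Vint μ K q x) x - (fun x => -β * Vint μ K q x) x'| ≤ β * ε := by
    simp only
    rw [← mul_sub, abs_mul, abs_neg, abs_of_pos hβ]
    exact mul_le_mul_of_nonneg_left (Vint_mod μ hK hκ hq0 hq1 hxx) hβ.le
  have := gibbs_mod μ hw hwc h1
  calc |gibbs μ (fun x => -β * Vint μ K q x) x - gibbs μ (fun x => -β * Vint μ K q x) x'|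
      ≤ Real.exp (2*(β*κ)) * (β * ε) := this
    _ = β * Real.exp (2*(β*κ)) * ε := by ring

end maps

theorem isClosed_imp {X : Type*} [TopologicalSpace X] {P : Prop} {Q : X → Prop}
    (h : IsClosed {x | Q x}) : IsClosed {x | P → Q x} := by
  by_cases hP : P
  · simpa [hP] using h
  · simp [hP]


section ESfacts
variable (μ : Measure Ω) [IsProbabilityMeasure μ] {β : ℝ} {K : Ω × Ω → ℝ} {κ : ℝ}

theorem integral_bcf_lip (f g : Ω →ᵇ ℝ) :
    |(∫ x, f x ∂μ) - ∫ x, g x ∂μ| ≤ dist f g := by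
  have h1 : (∫ x, f x ∂μ) - ∫ x, g x ∂μ = ∫ x, (f x - g x) ∂μ :=
    (integral_sub (cont_integrable μ f.continuous) (cont_integrable μ g.continuous)).symm
  rw [h1]
  have h2 := abs_int_le μ (fun x => f x - g x)
  have h3 : ∫ x, |f x - g x| ∂μ ≤ ∫ _x : Ω, dist f g ∂μ := by
    apply integral_mono ((cont_integrable μ (f.continuous.sub g.continuous)).abs)
      (integrable_const _)
    intro x
    show |f x - g x| ≤ dist f g
    rw [← Real.dist_eq]
    exact dist_coe_le_dist x
  simp only [integral_const, measure_univ, probReal_univ, one_mul, one_smul, smul_eq_mul] at h3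
  linarith

theorem integral_bcf_continuous : Continuous (fun f : Ω →ᵇ ℝ => ∫ x, f x ∂μ) := by
  rw [Metric.continuous_iff]
  intro f ε hε
  refine ⟨ε, hε, fun g hg => ?_⟩
  rw [Real.dist_eq]
  exact lt_of_le_of_lt (integral_bcf_lip μ g f) hg

theorem ES_closed : IsClosed (ES μ β K κ) := by
  have h1 : IsClosed {f : Ω →ᵇ ℝ | ∀ x, f x ∈ Set.Icc (Real.exp (-(2*(β*κ)))) (Real.exp (2*(β*κ)))} := by
    have : {f : Ω →ᵇ ℝ | ∀ x, f x ∈ Set.Icc (Real.exp (-(2*(β*κ)))) (Real.exp (2*(β*κ)))}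
        = ⋂ x, (fun f : Ω →ᵇ ℝ => f x) ⁻¹' (Set.Icc (Real.exp (-(2*(β*κ)))) (Real.exp (2*(β*κ)))) := by
      ext f; simp
    rw [this]
    exact isClosed_iInter (fun x => isClosed_Icc.preimage (continuous_eval_const x))
  have h2 : IsClosed {f : Ω →ᵇ ℝ | ∀ ε : ℝ, 0 < ε → ∀ x x' : Ω,
      (∀ y, |K (x, y) - K (x', y)| ≤ ε) →
      |f x - f x'| ≤ β * Real.exp (2*(β*κ)) * ε} := by
    have : {f : Ω →ᵇ ℝ | ∀ ε : ℝ, 0 < ε → ∀ x x' : Ω,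
        (∀ y, |K (x, y) - K (x', y)| ≤ ε) →
        |f x - f x'| ≤ β * Real.exp (2*(β*κ)) * ε}
        = ⋂ (ε : ℝ), ⋂ (x : Ω), ⋂ (x' : Ω),
          {f : Ω →ᵇ ℝ | 0 < ε → (∀ y, |K (x, y) - K (x', y)| ≤ ε) →
            |f x - f x'| ≤ β * Real.exp (2*(β*κ)) * ε} := by
      ext f
      simp only [Set.mem_setOf_eq, Set.mem_iInter]
      constructor
      · intro h ε x x' hε hxx; exact h ε hε x x' hxx
      · intro h ε hε x x' hxx; exact h ε x x' hε hxx
    rw [this]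
    refine isClosed_iInter (fun ε => isClosed_iInter (fun x => isClosed_iInter (fun x' => ?_)))
    apply isClosed_imp
    apply isClosed_imp
    have : {f : Ω →ᵇ ℝ | |f x - f x'| ≤ β * Real.exp (2*(β*κ)) * ε}
        = (fun f : Ω →ᵇ ℝ => |f x - f x'|) ⁻¹' (Set.Iic _) := rfl
    rw [this]
    exact isClosed_Iic.preimage (((continuous_eval_const x).sub (continuous_eval_const x')).abs)
  have h3 : IsClosed {f : Ω →ᵇ ℝ | ∫ x, f x ∂μ = 1} := by
    have : {f : Ω →ᵇ ℝ | ∫ x, f x ∂μ = 1} = (fun f : Ω →ᵇ ℝ => ∫ x, f x ∂μ) ⁻¹' {1} := rfl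
    rw [this]
    exact isClosed_singleton.preimage (integral_bcf_continuous μ)
  have : ES μ β K κ = _ ∩ (_ ∩ _) := rfl
  exact (h1.inter (h2.inter h3))

theorem ES_equicontinuous (hβ : 0 < β) (hK : Continuous K) :
    Equicontinuous ((↑) : ES μ β K κ → Ω → ℝ) := by
  intro x₀
  rw [Metric.equicontinuousAt_iff]
  intro ε hε
  have hMpos : (0:ℝ) < β * Real.exp (2*(β*κ)) + 1 := by positivity
  set ε' := ε / (2 * (β * Real.exp (2*(β*κ)) + 1)) with hε'def
  have hε' : 0 < ε' := by positivity
  obtain ⟨δ, hδ, hd⟩ := kernel_uc (Ω := Ω) hK hε'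
  refine ⟨δ, hδ, fun x hx f => ?_⟩
  rw [Real.dist_eq, abs_sub_comm]
  have h1 : |(f : Ω →ᵇ ℝ) x - (f : Ω →ᵇ ℝ) x₀| ≤ β * Real.exp (2*(β*κ)) * ε' := by
    have hf := f.2
    exact hf.2.1 ε' hε' x x₀ (hd x x₀ hx)
  have h2 : β * Real.exp (2*(β*κ)) * ε' < ε := by
    rw [hε'def]
    rw [div_eq_mul_inv]
    have hb : (0:ℝ) < β * Real.exp (2*(β*κ)) := by positivity
    rw [show β * Real.exp (2*(β*κ)) * (ε * (2 * (β * Real.exp (2*(β*κ)) + 1))⁻¹)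
      = ε * (β * Real.exp (2*(β*κ)) / (2 * (β * Real.exp (2*(β*κ)) + 1))) by ring]
    have : β * Real.exp (2*(β*κ)) / (2 * (β * Real.exp (2*(β*κ)) + 1)) < 1 := by
      rw [div_lt_one (by positivity)]
      linarith
    nlinarith
  linarith

theorem ES_compact (hβ : 0 < β) (hK : Continuous K) : IsCompact (ES μ β K κ) := by
  apply arzela_ascoli₂ (Set.Icc (Real.exp (-(2*(β*κ)))) (Real.exp (2*(β*κ)))) isCompact_Icc
    (ES μ β K κ) (ES_closed μ)
  · intro f x hf
    exact hf.1 x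
  · exact ES_equicontinuous μ hβ hK

theorem ES_nonempty (hβ : 0 < β) (hκ0 : 0 ≤ κ) : (ES μ β K κ).Nonempty := by
  have h0 : 0 ≤ 2*(β*κ) := mul_nonneg (by norm_num) (mul_nonneg hβ.le hκ0)
  refine ⟨(1 : Ω →ᵇ ℝ), ?_, ?_, ?_⟩
  · intro x
    simp only [coe_one, Pi.one_apply]
    constructor
    · rw [show (1:ℝ) = Real.exp 0 by simp]
      exact Real.exp_le_exp.2 (by linarith)
    · rw [show (1:ℝ) = Real.exp 0 by simp]
      exact Real.exp_le_exp.2 (by linarith)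
  · intro ε hε x x' _
    simp only [coe_one, Pi.one_apply, sub_self, abs_zero]
    have := mul_nonneg (mul_nonneg hβ.le (Real.exp_pos (2*(β*κ))).le) hε.le
    linarith
  · simp

theorem ES_convex {f g : Ω →ᵇ ℝ} (hf : f ∈ ES μ β K κ) (hg : g ∈ ES μ β K κ)
    {η : ℝ} (hη0 : 0 ≤ η) (hη1 : η ≤ 1) : ((1-η) • f + η • g) ∈ ES μ β K κ := by
  have hcoe : ∀ x, ((1-η) • f + η • g) x = (1-η) * f x + η * g x := by
    intro x; simp
  refine ⟨?_, ?_, ?_⟩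
  · intro x
    rw [hcoe x]
    have h1 := hf.1 x
    have h2 := hg.1 x
    simp only [Set.mem_Icc] at h1 h2 ⊢
    constructor <;> nlinarith [h1.1, h1.2, h2.1, h2.2]
  · intro ε hε x x' hxx
    rw [hcoe x, hcoe x']
    have h1 := hf.2.1 ε hε x x' hxx
    have h2 := hg.2.1 ε hε x x' hxx
    have : (1-η) * f x + η * g x - ((1-η) * f x' + η * g x')
        = (1-η) * (f x - f x') + η * (g x - g x') := by ring
    rw [this]
    calc |(1-η) * (f x - f x') + η * (g x - g x')|
        ≤ |(1-η) * (f x - f x')| + |η * (g x - g x')| := abs_add_le _ _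
      _ = (1-η) * |f x - f x'| + η * |g x - g x'| := by
          rw [abs_mul, abs_mul, abs_of_nonneg (by linarith), abs_of_nonneg hη0]
      _ ≤ (1-η) * (β * Real.exp (2*(β*κ)) * ε) + η * (β * Real.exp (2*(β*κ)) * ε) := by
          apply add_le_add
          · exact mul_le_mul_of_nonneg_left h1 (by linarith)
          · exact mul_le_mul_of_nonneg_left h2 hη0
      _ = β * Real.exp (2*(β*κ)) * ε := by ring
  · have : ∫ x, ((1-η) • f + η • g) x ∂μ
        = (1-η) * (∫ x, f x ∂μ) + η * ∫ x, g x ∂μ := by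
      rw [show (fun x => ((1-η) • f + η • g) x) = fun x => (1-η) * f x + η * g x by
        ext x; exact hcoe x]
      rw [integral_add ((cont_integrable μ f.continuous).const_mul _)
        ((cont_integrable μ g.continuous).const_mul _), integral_const_mul, integral_const_mul]
    rw [this, hf.2.2, hg.2.2]; ring

end ESfacts


noncomputable def Jfun (μ : Measure Ω) (β : ℝ) (K : Ω × Ω → ℝ) (f : Ω →ᵇ ℝ) : ℝ :=
  (∫ x, f x * Real.log (f x) ∂μ) + Real.log (∫ y, Real.exp (β * Vint μ (Kswap K) (⇑f) y) ∂μ)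

section Jsec
variable (μ : Measure Ω) [IsProbabilityMeasure μ] {β : ℝ} {K : Ω × Ω → ℝ} {κ : ℝ}

/-- log is Lipschitz above a positive threshold. -/
theorem log_diff_le {m a b : ℝ} (hm : 0 < m) (ha : m ≤ a) (hb : m ≤ b) :
    |Real.log a - Real.log b| ≤ |a - b| / m := by
  wlog h : b ≤ a generalizing a b
  · rw [abs_sub_comm, abs_sub_comm a b]; exact this hb ha (le_of_not_ge h)
  have hbpos : 0 < b := lt_of_lt_of_le hm hb
  have hapos : 0 < a := lt_of_lt_of_le hm ha
  rw [abs_of_nonneg (sub_nonneg.2 (Real.log_le_log hbpos h)),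
    abs_of_nonneg (sub_nonneg.2 h)]
  have h1 : Real.log a - Real.log b = Real.log (a / b) := (Real.log_div hapos.ne' hbpos.ne').symm
  rw [h1]
  have h2 : Real.log (a / b) ≤ a / b - 1 := Real.log_le_sub_one_of_pos (div_pos hapos hbpos)
  have h3 : a / b - 1 = (a - b) / b := by field_simp
  have h4 : (a - b) / b ≤ (a - b) / m := by
    apply div_le_div_of_nonneg_left (by linarith) hm hb
  linarith

theorem mullog_diff_le {m M a b : ℝ} (hm : 0 < m) (ha : a ∈ Set.Icc m M) (hb : b ∈ Set.Icc m M) :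
    |a * Real.log a - b * Real.log b| ≤ (M/m + |Real.log m| + |Real.log M|) * |a - b| := by
  have h1 : a * Real.log a - b * Real.log b
      = a * (Real.log a - Real.log b) + (a - b) * Real.log b := by ring
  have h2 : |Real.log a - Real.log b| ≤ |a - b| / m := log_diff_le hm ha.1 hb.1
  have hbl : Real.log m ≤ Real.log b := Real.log_le_log hm hb.1
  have hbu : Real.log b ≤ Real.log M := Real.log_le_log (lt_of_lt_of_le hm hb.1) hb.2
  have h3 : |Real.log b| ≤ |Real.log m| + |Real.log M| := by
    rw [abs_le]; constructor
    · have := neg_abs_le (Real.log m); nlinarith [abs_nonneg (Real.log M)]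
    · have := le_abs_self (Real.log M); nlinarith [abs_nonneg (Real.log m)]
  have ha0 : 0 ≤ a := le_trans hm.le ha.1
  have haM : a ≤ M := ha.2
  calc |a * Real.log a - b * Real.log b|
      ≤ |a * (Real.log a - Real.log b)| + |(a - b) * Real.log b| := by rw [h1]; exact abs_add_le _ _
    _ = a * |Real.log a - Real.log b| + |a - b| * |Real.log b| := by
        rw [abs_mul, abs_mul, abs_of_nonneg ha0]
    _ ≤ a * (|a - b| / m) + |a - b| * (|Real.log m| + |Real.log M|) := by
        apply add_le_add
        · exact mul_le_mul_of_nonneg_left h2 ha0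
        · exact mul_le_mul_of_nonneg_left h3 (abs_nonneg _)
    _ ≤ M * (|a - b| / m) + |a - b| * (|Real.log m| + |Real.log M|) := by
        apply add_le_add_left
        apply mul_le_mul_of_nonneg_right haM (by positivity)
    _ = (M/m + |Real.log m| + |Real.log M|) * |a - b| := by ring

theorem Vint_sub_le {K' : Ω × Ω → ℝ} (hκ' : ∀ z, |K' z| ≤ κ) {f g : Ω → ℝ}
    (hf : Continuous f) (hg : Continuous g) {D : ℝ}
    (hfg : ∀ x, |f x - g x| ≤ D) (y : Ω) (hK' : Continuous K') :
    |Vint μ K' f y - Vint μ K' g y| ≤ κ * D := by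
  have hint : ∀ h : Ω → ℝ, Continuous h → Integrable (fun x => K' (y, x) * h x) μ :=
    fun h hh => cont_integrable μ (by fun_prop)
  have h0 : Vint μ K' f y - Vint μ K' g y = ∫ x, K' (y, x) * (f x - g x) ∂μ := by
    rw [Vint, Vint, ← integral_sub (hint f hf) (hint g hg)]
    congr 1; ext x; ring
  rw [h0]
  have h1 := abs_int_le μ (fun x => K' (y, x) * (f x - g x))
  have h2 : ∫ x, |K' (y, x) * (f x - g x)| ∂μ ≤ ∫ _x : Ω, κ * D ∂μ := by
    apply integral_mono _ (integrable_const _)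
    · intro x
      show |K' (y, x) * (f x - g x)| ≤ κ * D
      rw [abs_mul]
      exact mul_le_mul (hκ' _) (hfg x) (abs_nonneg _) (le_trans (abs_nonneg _) (hκ' (y,x)))
    · exact (cont_integrable μ (by fun_prop : Continuous (fun x => K' (y, x) * (f x - g x)))).abs
  simp only [integral_const, measure_univ, probReal_univ, one_mul, one_smul, smul_eq_mul] at h2
  linarith

theorem lipOn_continuousOn {X : Type*} [MetricSpace X] {s : Set X} {F : X → ℝ} {C : ℝ}
    (h : ∀ f ∈ s, ∀ g ∈ s, |F f - F g| ≤ C * dist f g) : ContinuousOn F s := by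
  rw [Metric.continuousOn_iff]
  intro b hb ε hε
  refine ⟨ε / (|C| + 1), by positivity, fun a ha hab => ?_⟩
  rw [Real.dist_eq]
  have h1 := h a ha b hb
  have h2 : C * dist a b ≤ |C| * dist a b :=
    mul_le_mul_of_nonneg_right (le_abs_self C) dist_nonneg
  have h4 : |C| * (ε/(|C|+1)) < ε := by
    have hlt : |C| / (|C|+1) < 1 := by
      rw [div_lt_one (by positivity)]; linarith [abs_nonneg C]
    calc |C| * (ε/(|C|+1)) = ε * (|C|/(|C|+1)) := by ring
      _ < ε * 1 := mul_lt_mul_of_pos_left hlt hε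
      _ = ε := mul_one ε
  have h5 : |C| * dist a b ≤ |C| * (ε/(|C|+1)) :=
    mul_le_mul_of_nonneg_left hab.le (abs_nonneg C)
  linarith

theorem J_continuousOn (hβ : 0 < β) (hK : Continuous K) (hκ : ∀ z, |K z| ≤ κ) (hκ0 : 0 ≤ κ) :
    ContinuousOn (Jfun μ β K) (ES μ β K κ) := by
  set mE := Real.exp (-(2*(β*κ))) with hmE
  set ME := Real.exp (2*(β*κ)) with hME
  have hmEpos : 0 < mE := Real.exp_pos _
  set C0 : ℝ := ME/mE + |Real.log mE| + |Real.log ME| with hC0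
  set C : ℝ := C0 + Real.exp (β*κ) * (Real.exp (β*κ) * (β*κ)) with hC
  apply lipOn_continuousOn (C := C)
  intro f hf g hg
  -- basic facts about f and g
  have hfI : ∀ x, (f : Ω →ᵇ ℝ) x ∈ Set.Icc mE ME := hf.1
  have hgI : ∀ x, (g : Ω →ᵇ ℝ) x ∈ Set.Icc mE ME := hg.1
  have hf0 : ∀ x, 0 ≤ f x := fun x => le_trans hmEpos.le (hfI x).1
  have hg0 : ∀ x, 0 ≤ g x := fun x => le_trans hmEpos.le (hgI x).1
  have hf1 : ∫ x, f x ∂μ = 1 := hf.2.2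
  have hg1 : ∫ x, g x ∂μ = 1 := hg.2.2
  have hfne : ∀ x, f x ≠ 0 := fun x => (lt_of_lt_of_le hmEpos (hfI x).1).ne'
  have hgne : ∀ x, g x ≠ 0 := fun x => (lt_of_lt_of_le hmEpos (hgI x).1).ne'
  have hD : ∀ x, |f x - g x| ≤ dist f g := by
    intro x; rw [← Real.dist_eq]; exact dist_coe_le_dist x
  have hflogc : Continuous fun x => f x * Real.log (f x) :=
    f.continuous.mul (f.continuous.log hfne)
  have hglogc : Continuous fun x => g x * Real.log (g x) :=
    g.continuous.mul (g.continuous.log hgne)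
  -- term 1
  have hT1 : |(∫ x, f x * Real.log (f x) ∂μ) - ∫ x, g x * Real.log (g x) ∂μ|
      ≤ C0 * dist f g := by
    rw [← integral_sub (cont_integrable μ hflogc) (cont_integrable μ hglogc)]
    have h1 := abs_int_le μ (fun x => f x * Real.log (f x) - g x * Real.log (g x))
    have h2 : ∫ x, |f x * Real.log (f x) - g x * Real.log (g x)| ∂μ
        ≤ ∫ _x : Ω, C0 * dist f g ∂μ := by
      apply integral_mono (cont_integrable μ (hflogc.sub hglogc)).abs (integrable_const _)
      intro x
      show |f x * Real.log (f x) - g x * Real.log (g x)| ≤ C0 * dist f g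
      calc |f x * Real.log (f x) - g x * Real.log (g x)|
          ≤ C0 * |f x - g x| := mullog_diff_le hmEpos (hfI x) (hgI x)
        _ ≤ C0 * dist f g := by
            apply mul_le_mul_of_nonneg_left (hD x)
            have : (0:ℝ) ≤ ME/mE := by positivity
            have := abs_nonneg (Real.log mE)
            have := abs_nonneg (Real.log ME)
            rw [hC0]; linarith
    simp only [integral_const, measure_univ, probReal_univ, one_mul, one_smul, smul_eq_mul] at h2
    linarith
  -- term 2
  set w1 : Ω → ℝ := fun y => β * Vint μ (Kswap K) (⇑f) y with hw1
  set w2 : Ω → ℝ := fun y => β * Vint μ (Kswap K) (⇑g) y with hw2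
  have hw1c : Continuous w1 :=
    continuous_const.mul (Vint_continuous μ (Kswap_cont hK) (Kswap_bdd hκ) hf0 hf1)
  have hw2c : Continuous w2 :=
    continuous_const.mul (Vint_continuous μ (Kswap_cont hK) (Kswap_bdd hκ) hg0 hg1)
  have hw1b : ∀ y, |w1 y| ≤ β*κ := by
    intro y
    rw [hw1]
    simp only [abs_mul, abs_of_pos hβ]
    exact mul_le_mul_of_nonneg_left
      (Vint_abs_le μ (Kswap_cont hK) (Kswap_bdd hκ) hf0 hf1 y) hβ.le
  have hw2b : ∀ y, |w2 y| ≤ β*κ := by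
    intro y
    rw [hw2]
    simp only [abs_mul, abs_of_pos hβ]
    exact mul_le_mul_of_nonneg_left
      (Vint_abs_le μ (Kswap_cont hK) (Kswap_bdd hκ) hg0 hg1 y) hβ.le
  have hZ1 := Zw_mem μ hw1c hw1b
  have hZ2 := Zw_mem μ hw2c hw2b
  have hZ1p := Zw_pos μ hw1c hw1b
  have hZ2p := Zw_pos μ hw2c hw2b
  have hwd : ∀ y, |w1 y - w2 y| ≤ β * (κ * dist f g) := by
    intro y
    rw [hw1, hw2]
    simp only [← mul_sub, abs_mul, abs_of_pos hβ]
    apply mul_le_mul_of_nonneg_left _ hβ.le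
    exact Vint_sub_le μ (Kswap_bdd hκ) f.continuous g.continuous hD y (Kswap_cont hK)
  have hZd : |(∫ y, Real.exp (w1 y) ∂μ) - ∫ y, Real.exp (w2 y) ∂μ|
      ≤ Real.exp (β*κ) * (β * (κ * dist f g)) := by
    rw [← integral_sub (cont_integrable μ hw1c.rexp) (cont_integrable μ hw2c.rexp)]
    have h1 := abs_int_le μ (fun y => Real.exp (w1 y) - Real.exp (w2 y))
    have h2 : ∫ y, |Real.exp (w1 y) - Real.exp (w2 y)| ∂μ
        ≤ ∫ _y : Ω, Real.exp (β*κ) * (β * (κ * dist f g)) ∂μ := by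
      apply integral_mono (cont_integrable μ (hw1c.rexp.sub hw2c.rexp)).abs (integrable_const _)
      intro y
      show |Real.exp (w1 y) - Real.exp (w2 y)| ≤ Real.exp (β*κ) * (β * (κ * dist f g))
      calc |Real.exp (w1 y) - Real.exp (w2 y)|
          ≤ Real.exp (β*κ) * |w1 y - w2 y| := exp_lip (hw1b y) (hw2b y)
        _ ≤ Real.exp (β*κ) * (β * (κ * dist f g)) :=
            mul_le_mul_of_nonneg_left (hwd y) (Real.exp_pos _).le
    simp only [integral_const, measure_univ, probReal_univ, one_mul, one_smul, smul_eq_mul] at h2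
    linarith
  have hT2 : |Real.log (∫ y, Real.exp (w1 y) ∂μ) - Real.log (∫ y, Real.exp (w2 y) ∂μ)|
      ≤ Real.exp (β*κ) * (Real.exp (β*κ) * (β * (κ * dist f g))) := by
    have h1 := log_diff_le (Real.exp_pos (-(β*κ))) hZ1.1 hZ2.1
    have h2 : |(∫ y, Real.exp (w1 y) ∂μ) - ∫ y, Real.exp (w2 y) ∂μ| / Real.exp (-(β*κ))
        = Real.exp (β*κ) * |(∫ y, Real.exp (w1 y) ∂μ) - ∫ y, Real.exp (w2 y) ∂μ| := by
      rw [Real.exp_neg, div_eq_mul_inv, inv_inv, mul_comm]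
    rw [h2] at h1
    calc |Real.log (∫ y, Real.exp (w1 y) ∂μ) - Real.log (∫ y, Real.exp (w2 y) ∂μ)|
        ≤ Real.exp (β*κ) * |(∫ y, Real.exp (w1 y) ∂μ) - ∫ y, Real.exp (w2 y) ∂μ| := h1
      _ ≤ Real.exp (β*κ) * (Real.exp (β*κ) * (β * (κ * dist f g))) :=
          mul_le_mul_of_nonneg_left hZd (Real.exp_pos _).le
  -- combine
  have hfinal : |Jfun μ β K f - Jfun μ β K g|
      ≤ C0 * dist f g + Real.exp (β*κ) * (Real.exp (β*κ) * (β * (κ * dist f g))) := by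
    rw [Jfun, Jfun]
    calc |((∫ x, f x * Real.log (f x) ∂μ) + Real.log (∫ y, Real.exp (w1 y) ∂μ))
        - ((∫ x, g x * Real.log (g x) ∂μ) + Real.log (∫ y, Real.exp (w2 y) ∂μ))|
        ≤ |(∫ x, f x * Real.log (f x) ∂μ) - ∫ x, g x * Real.log (g x) ∂μ|
          + |Real.log (∫ y, Real.exp (w1 y) ∂μ) - Real.log (∫ y, Real.exp (w2 y) ∂μ)| := by
          have := abs_add_le ((∫ x, f x * Real.log (f x) ∂μ) - ∫ x, g x * Real.log (g x) ∂μ)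
            (Real.log (∫ y, Real.exp (w1 y) ∂μ) - Real.log (∫ y, Real.exp (w2 y) ∂μ))
          have heq : ((∫ x, f x * Real.log (f x) ∂μ) + Real.log (∫ y, Real.exp (w1 y) ∂μ))
              - ((∫ x, g x * Real.log (g x) ∂μ) + Real.log (∫ y, Real.exp (w2 y) ∂μ))
              = ((∫ x, f x * Real.log (f x) ∂μ) - ∫ x, g x * Real.log (g x) ∂μ)
              + (Real.log (∫ y, Real.exp (w1 y) ∂μ) - Real.log (∫ y, Real.exp (w2 y) ∂μ)) := by
            ring
          rw [heq]
          exact this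
      _ ≤ C0 * dist f g + Real.exp (β*κ) * (Real.exp (β*κ) * (β * (κ * dist f g))) :=
          add_le_add hT1 hT2
  calc |Jfun μ β K f - Jfun μ β K g|
      ≤ C0 * dist f g + Real.exp (β*κ) * (Real.exp (β*κ) * (β * (κ * dist f g))) := hfinal
    _ = C * dist f g := by rw [hC]; ring

end Jsec

section main
variable (μ : Measure Ω) [IsProbabilityMeasure μ] {β : ℝ} {K : Ω × Ω → ℝ} {κ : ℝ}

/-- `a - b ≤ a log(a/b)` for positive reals. -/
theorem klaux_le {a b : ℝ} (ha : 0 < a) (hb : 0 < b) : a - b ≤ a * Real.log (a / b) := by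
  have h1 : Real.log (b / a) ≤ b / a - 1 := Real.log_le_sub_one_of_pos (div_pos hb ha)
  have h2 : Real.log (a / b) = - Real.log (b / a) := by
    rw [← Real.log_inv]
    congr 1
    field_simp
  rw [h2]
  have h3 : a * (b / a - 1) = b - a := by field_simp
  nlinarith [mul_le_mul_of_nonneg_left h1 ha.le]

/-- strict version: equality forces `a = b`. -/
theorem klaux_eq {a b : ℝ} (ha : 0 < a) (hb : 0 < b)
    (h : a * Real.log (a / b) - (a - b) = 0) : a = b := by
  by_contra hne
  have hba : b / a ≠ 1 := by
    intro hc
    apply hne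
    field_simp at hc
    linarith
  have h1 : Real.log (b / a) < b / a - 1 :=
    Real.log_lt_sub_one_of_pos (div_pos hb ha) hba
  have h2 : Real.log (a / b) = - Real.log (b / a) := by
    rw [← Real.log_inv]; congr 1; field_simp
  have hx : a * (b / a - 1) = b - a := by field_simp
  have h3 : a - b < a * Real.log (a / b) := by
    rw [h2]
    nlinarith [mul_lt_mul_of_pos_left h1 ha, hx]
  linarith

theorem exists_fixed_pair (hβ : 0 < β) (hK : Continuous K) (hκ : ∀ z, |K z| ≤ κ)
    (hκ0 : 0 ≤ κ) :
    ∃ p q : Ω → ℝ, Continuous p ∧ Continuous q ∧ (∀ x, 0 ≤ p x) ∧ (∀ y, 0 ≤ q y) ∧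
      (∫ x, p x ∂μ = 1) ∧ (∫ y, q y ∂μ = 1) ∧ (p =ᵐ[μ] Amap μ β K q) ∧ q = Bmap μ β K p := by
  obtain ⟨fs, hfsES, hmin⟩ := (ES_compact μ hβ hK).exists_isMinOn
    (ES_nonempty μ hβ hκ0) (J_continuousOn μ hβ hK hκ hκ0)
  set mE := Real.exp (-(2*(β*κ))) with hmEdef
  set p : Ω → ℝ := ⇑fs with hpdef
  have hpc : Continuous p := fs.continuous
  have hpI : ∀ x, p x ∈ Set.Icc mE (Real.exp (2*(β*κ))) := hfsES.1
  have hmEpos : (0:ℝ) < mE := Real.exp_pos _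
  have hppos : ∀ x, 0 < p x := fun x => lt_of_lt_of_le hmEpos (hpI x).1
  have hp0 : ∀ x, 0 ≤ p x := fun x => (hppos x).le
  have hp1 : ∫ x, p x ∂μ = 1 := hfsES.2.2
  set q : Ω → ℝ := Bmap μ β K p with hqdef
  obtain ⟨hqc, hqpos, hq1, hqI⟩ := Bmap_props μ hβ hK hκ hp0 hp1
  have hq0 : ∀ y, 0 ≤ q y := fun y => (hqpos y).le
  set u : Ω → ℝ := Vint μ K q with hudef
  have huc : Continuous u := Vint_continuous μ hK hκ hq0 hq1
  have hub : ∀ x, |u x| ≤ κ := Vint_abs_le μ hK hκ hq0 hq1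
  set s : Ω → ℝ := Amap μ β K q with hsdef
  obtain ⟨hsc, hspos, hs1, hsI, hsmod⟩ := Amap_props μ hβ hK hκ hq0 hq1
  have hs0 : ∀ x, 0 ≤ s x := fun x => (hspos x).le
  set sB : Ω →ᵇ ℝ := mkOfCompact ⟨s, hsc⟩ with hsBdef
  have hsBcoe : ⇑sB = s := rfl
  have hsES : sB ∈ ES μ β K κ := ⟨hsI, hsmod, hs1⟩
  -- potentials
  set Wp : Ω → ℝ := Vint μ (Kswap K) p with hWpdef
  set Ws : Ω → ℝ := Vint μ (Kswap K) s with hWsdef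
  have hWpc : Continuous Wp := Vint_continuous μ (Kswap_cont hK) (Kswap_bdd hκ) hp0 hp1
  have hWsc : Continuous Ws := Vint_continuous μ (Kswap_cont hK) (Kswap_bdd hκ) hs0 hs1
  have hWpb : ∀ y, |Wp y| ≤ κ := Vint_abs_le μ (Kswap_cont hK) (Kswap_bdd hκ) hp0 hp1
  have hWsb : ∀ y, |Ws y| ≤ κ := Vint_abs_le μ (Kswap_cont hK) (Kswap_bdd hκ) hs0 hs1
  set Δ : Ω → ℝ := fun y => Ws y - Wp y with hΔdef
  have hΔc : Continuous Δ := hWsc.sub hWpc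
  have hΔb : ∀ y, |Δ y| ≤ 2*κ := by
    intro y
    calc |Ws y - Wp y| ≤ |Ws y| + |Wp y| := abs_sub _ _
      _ ≤ 2*κ := by have := hWsb y; have := hWpb y; linarith
  -- partition function
  have hwpcont : Continuous (fun y => β * Wp y) := continuous_const.mul hWpc
  have hwpbdd : ∀ y, |β * Wp y| ≤ β * κ := by
    intro y
    rw [abs_mul, abs_of_pos hβ]
    exact mul_le_mul_of_nonneg_left (hWpb y) hβ.le
  set Z0 : ℝ := ∫ y, Real.exp (β * Wp y) ∂μ with hZ0def
  have hZ0pos : 0 < Z0 := Zw_pos μ hwpcont hwpbdd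
  have hqeq : ∀ y, q y = Real.exp (β * Wp y) / Z0 := fun y => rfl
  -- entropies
  set Entp : ℝ := ∫ x, p x * Real.log (p x) ∂μ with hEntpdef
  set Ents : ℝ := ∫ x, s x * Real.log (s x) ∂μ with hEntsdef
  set KL : ℝ := ∫ x, p x * Real.log (p x / s x) ∂μ with hKLdef
  set QΔ : ℝ := ∫ y, q y * Δ y ∂μ with hQΔdef
  set G : ℝ := Ents - Entp + β * QΔ with hGdef
  set CC : ℝ := β^2*(2*κ)^2 * Real.exp (2*(β*κ)) with hCCdef
  have hCC0 : 0 ≤ CC := by positivity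
  -- STEP key inequality: ∀ η ∈ (0,1], 0 ≤ G + η * CC
  have key : ∀ η : ℝ, 0 < η → η ≤ 1 → 0 ≤ G + η * CC := by
    intro η hη0 hη1
    set fη : Ω →ᵇ ℝ := (1-η) • fs + η • sB with hfηdef
    have hfηES : fη ∈ ES μ β K κ := ES_convex μ hfsES hsES hη0.le hη1
    have hfηcoe : ∀ x, fη x = (1-η) * p x + η * s x := by
      intro x; simp [hfηdef, hsBcoe, hpdef]
    have hfηc : Continuous (⇑fη) := fη.continuous
    have hfηpos : ∀ x, 0 < fη x := by
      intro x
      rw [hfηcoe x]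
      nlinarith [hppos x, hspos x, hη0, hη1]
    have hmin' : Jfun μ β K fs ≤ Jfun μ β K fη := isMinOn_iff.1 hmin fη hfηES
    have hβηΔ : ∀ y, |β * (η * Δ y)| ≤ 2*(β*κ) := by
      intro y
      rw [abs_mul, abs_mul, abs_of_pos hβ, abs_of_pos hη0]
      nlinarith [hΔb y, abs_nonneg (Δ y), mul_nonneg hβ.le (abs_nonneg (Δ y)),
        mul_nonneg (mul_nonneg (by linarith : (0:ℝ) ≤ 1 - η) hβ.le) (abs_nonneg (Δ y)),
        mul_nonneg (mul_nonneg hη0.le hβ.le) (by linarith [hΔb y, abs_nonneg (Δ y)] :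
          (0:ℝ) ≤ 2*κ - |Δ y|)]
    -- entropy part
    have hent : ∫ x, fη x * Real.log (fη x) ∂μ ≤ (1-η) * Entp + η * Ents := by
      have hpt : ∀ x, fη x * Real.log (fη x)
          ≤ (1-η) * (p x * Real.log (p x)) + η * (s x * Real.log (s x)) := by
        intro x
        have := Real.convexOn_mul_log.2 (Set.mem_Ici.2 (hp0 x)) (Set.mem_Ici.2 (hs0 x))
          (by linarith : (0:ℝ) ≤ 1-η) hη0.le (by ring)
        simpa [smul_eq_mul, hfηcoe x] using this
      have hint1 : Integrable (fun x => fη x * Real.log (fη x)) μ :=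
        cont_integrable μ (hfηc.mul (hfηc.log (fun x => (hfηpos x).ne')))
      have hint2 : Integrable
          (fun x => (1-η) * (p x * Real.log (p x)) + η * (s x * Real.log (s x))) μ := by
        apply Integrable.add
        · exact (cont_integrable μ (hpc.mul (hpc.log (fun x => (hppos x).ne')))).const_mul _
        · exact (cont_integrable μ (hsc.mul (hsc.log (fun x => (hspos x).ne')))).const_mul _
      calc ∫ x, fη x * Real.log (fη x) ∂μ
          ≤ ∫ x, ((1-η) * (p x * Real.log (p x)) + η * (s x * Real.log (s x))) ∂μ :=
            integral_mono hint1 hint2 hpt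
        _ = (1-η) * Entp + η * Ents := by
            rw [integral_add (f := fun x => (1-η) * (p x * Real.log (p x)))
              (g := fun x => η * (s x * Real.log (s x))) ((cont_integrable μ (hpc.mul (hpc.log
              (fun x => (hppos x).ne')))).const_mul _)
              ((cont_integrable μ (hsc.mul (hsc.log (fun x => (hspos x).ne')))).const_mul _),
              integral_const_mul, integral_const_mul]
    -- affine structure of potentials
    have hWaff : ∀ y, Vint μ (Kswap K) (⇑fη) y = Wp y + η * Δ y := by
      intro y
      have h1 : Vint μ (Kswap K) (⇑fη) y
          = ∫ x, ((1-η) * (Kswap K (y, x) * p x) + η * (Kswap K (y, x) * s x)) ∂μ := by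
        rw [Vint]
        congr 1
        ext x
        rw [hfηcoe x]
        ring
      have hi1 : Integrable (fun x => Kswap K (y, x) * p x) μ :=
        cont_integrable μ ((((Kswap_cont hK).comp
          (continuous_const.prodMk continuous_id)).mul hpc))
      have hi2 : Integrable (fun x => Kswap K (y, x) * s x) μ :=
        cont_integrable μ ((((Kswap_cont hK).comp
          (continuous_const.prodMk continuous_id)).mul hsc))
      rw [h1, integral_add (hi1.const_mul _) (hi2.const_mul _), integral_const_mul,
        integral_const_mul]
      show (1-η) * Wp y + η * Ws y = Wp y + η * (Ws y - Wp y)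
      ring
    -- Z part
    set X : ℝ := ∫ y, q y * Real.exp (β * (η * Δ y)) ∂μ with hXdef
    have hXexp : ∫ y, Real.exp (β * Vint μ (Kswap K) (⇑fη) y) ∂μ = Z0 * X := by
      rw [hXdef, ← integral_const_mul]
      congr 1
      ext y
      rw [hWaff y, hqeq y]
      rw [mul_add, Real.exp_add]
      field_simp
    have hXpos : 0 < X := by
      have hptw : ∀ y, mE * Real.exp (-(2*(β*κ))) ≤ q y * Real.exp (β * (η * Δ y)) := by
        intro y
        apply mul_le_mul
        · exact (hqI y).1
        · apply Real.exp_le_exp.2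
          linarith [neg_le_of_abs_le (hβηΔ y)]
        · exact (Real.exp_pos _).le
        · exact hq0 y
      have hint : Integrable (fun y => q y * Real.exp (β * (η * Δ y))) μ :=
        cont_integrable μ (hqc.mul (by fun_prop))
      have := integral_mono (integrable_const (mE * Real.exp (-(2*(β*κ))))) hint hptw
      simp only [integral_const, measure_univ, probReal_univ, one_mul, one_smul,
        smul_eq_mul] at this
      have hXge : mE * Real.exp (-(2*(β*κ))) ≤ X := by rw [hXdef]; linarith [this]
      nlinarith [Real.exp_pos (-(2*(β*κ))), hmEpos, hXge]
    have hlogX : Real.log X ≤ X - 1 := Real.log_le_sub_one_of_pos hXpos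
    -- quadratic bound
    have hX1 : X - 1 ≤ β * η * QΔ + η^2 * CC := by
      have hptw : ∀ y, q y * Real.exp (β * (η * Δ y)) - q y - q y * (β * (η * Δ y))
          ≤ q y * (η^2 * CC) := by
        intro y
        have h1 : Real.exp (β * (η * Δ y)) - 1 - (β * (η * Δ y))
            ≤ (β * (η * Δ y))^2 * Real.exp |β * (η * Δ y)| := exp_quad _
        have h2 : |β * (η * Δ y)| ≤ 2*(β*κ) := hβηΔ y
        have h3 : (β * (η * Δ y))^2 * Real.exp |β * (η * Δ y)| ≤ η^2 * CC := by
          rw [hCCdef]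
          have ha : (β * (η * Δ y))^2 ≤ η^2 * (β^2*(2*κ)^2) := by
            have hd2 : (Δ y)^2 ≤ (2*κ)^2 := sq_le_sq' (neg_le_of_abs_le (hΔb y))
              (le_of_abs_le (hΔb y))
            nlinarith [sq_nonneg β, sq_nonneg (Δ y), sq_nonneg η,
              mul_le_mul_of_nonneg_left hd2 (sq_nonneg β),
              mul_le_mul_of_nonneg_left (mul_le_mul_of_nonneg_left hd2 (sq_nonneg β))
                (sq_nonneg η)]
          have hb : Real.exp |β * (η * Δ y)| ≤ Real.exp (2*(β*κ)) := Real.exp_le_exp.2 h2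
          calc (β * (η * Δ y))^2 * Real.exp |β * (η * Δ y)|
              ≤ (η^2 * (β^2*(2*κ)^2)) * Real.exp (2*(β*κ)) := by
                apply mul_le_mul ha hb (Real.exp_pos _).le
                positivity
            _ = η^2 * (β^2*(2*κ)^2 * Real.exp (2*(β*κ))) := by ring
        have h4 : q y * (Real.exp (β * (η * Δ y)) - 1 - (β * (η * Δ y)))
            ≤ q y * (η^2 * CC) :=
          mul_le_mul_of_nonneg_left (le_trans h1 h3) (hq0 y)
        nlinarith [h4]
      have hintA : Integrable (fun y => q y * Real.exp (β * (η * Δ y))) μ :=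
        cont_integrable μ (hqc.mul
          ((continuous_const.mul (continuous_const.mul hΔc)).rexp))
      have hintB : Integrable q μ := cont_integrable μ hqc
      have hintC : Integrable (fun y => q y * (β * (η * Δ y))) μ :=
        cont_integrable μ (hqc.mul (continuous_const.mul (continuous_const.mul hΔc)))
      have hintD : Integrable (fun y => q y * (η^2 * CC)) μ := hintB.mul_const _
      have hmono : ∫ y, (q y * Real.exp (β * (η * Δ y)) - q y - q y * (β * (η * Δ y))) ∂μ
          ≤ ∫ y, q y * (η^2 * CC) ∂μ :=
        integral_mono ((hintA.sub hintB).sub hintC) hintD (fun y => hptw y)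
      have hintAB : Integrable (fun y => q y * Real.exp (β * (η * Δ y)) - q y) μ :=
        hintA.sub hintB
      rw [integral_sub hintAB hintC, integral_sub hintA hintB] at hmono
      have he1 : ∫ y, q y * (β * (η * Δ y)) ∂μ = β * η * QΔ := by
        rw [hQΔdef, ← integral_const_mul]
        congr 1; ext y; ring
      have he2 : ∫ y, q y * (η^2 * CC) ∂μ = η^2 * CC := by
        rw [show (fun y => q y * (η^2 * CC)) = fun y => (η^2 * CC) * q y by ext y; ring,
          integral_const_mul, hq1, mul_one]
      rw [he1, he2, hq1] at hmono
      rw [hXdef]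
      linarith
    -- combine into key inequality
    have hJfs : Jfun μ β K fs = Entp + Real.log Z0 := rfl
    have hJfη : Jfun μ β K fη
        = (∫ x, fη x * Real.log (fη x) ∂μ) + Real.log (Z0 * X) := by
      rw [Jfun, hXexp]
    have hlogmul : Real.log (Z0 * X) = Real.log Z0 + Real.log X :=
      Real.log_mul hZ0pos.ne' hXpos.ne'
    have hchain : Entp + Real.log Z0
        ≤ (1-η) * Entp + η * Ents + (Real.log Z0 + (β * η * QΔ + η^2 * CC)) := by
      calc Entp + Real.log Z0 = Jfun μ β K fs := hJfs.symm
        _ ≤ Jfun μ β K fη := hmin'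
        _ = (∫ x, fη x * Real.log (fη x) ∂μ) + (Real.log Z0 + Real.log X) := by
            rw [hJfη, hlogmul]
        _ ≤ (1-η) * Entp + η * Ents + (Real.log Z0 + (β * η * QΔ + η^2 * CC)) := by
            have := le_trans hlogX hX1
            linarith [hent]
    have hfin : 0 ≤ η * (G + η * CC) := by
      rw [hGdef]
      nlinarith [hchain]
    nlinarith [hfin, hη0, mul_pos hη0 hη0]
  -- STEP: G ≥ 0
  have hG0 : 0 ≤ G := by
    by_contra hG
    push_neg at hG
    set η : ℝ := min 1 (-G / (CC+1)) with hηdef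
    have hη0 : 0 < η := by
      apply lt_min one_pos
      apply div_pos (by linarith) (by linarith)
    have hη1 : η ≤ 1 := min_le_left _ _
    have hle : η ≤ -G/(CC+1) := min_le_right _ _
    have h2 : η * (CC+1) ≤ -G := by
      rw [← div_mul_cancel₀ (-G) (ne_of_gt (show (0:ℝ) < CC+1 by linarith))]
      exact mul_le_mul_of_nonneg_right hle (by linarith)
    have := key η hη0 hη1
    nlinarith
  -- STEP: Fubini identity  QΔ = ∫ (s - p) u
  have hfub : QΔ = ∫ x, (s x - p x) * u x ∂μ := by
    have hΔeq : ∀ y, Δ y = ∫ x, K (x, y) * (s x - p x) ∂μ := by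
      intro y
      have hi1 : Integrable (fun x => K (x, y) * s x) μ :=
        cont_integrable μ (by fun_prop)
      have hi2 : Integrable (fun x => K (x, y) * p x) μ :=
        cont_integrable μ (by fun_prop)
      show (∫ x, K (x, y) * s x ∂μ) - (∫ x, K (x, y) * p x ∂μ)
        = ∫ x, K (x, y) * (s x - p x) ∂μ
      rw [← integral_sub hi1 hi2]
      congr 1
      ext x
      ring
    have h1 : QΔ = ∫ y, ∫ x, q y * (K (x, y) * (s x - p x)) ∂μ ∂μ := by
      rw [hQΔdef]
      congr 1
      ext y
      rw [hΔeq y, ← integral_const_mul]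
    have hFcont : Continuous (Function.uncurry (fun y x => q y * (K (x, y) * (s x - p x)))) := by
      apply Continuous.mul (hqc.comp continuous_fst)
      apply Continuous.mul
      · exact hK.comp (continuous_snd.prodMk continuous_fst)
      · exact (hsc.sub hpc).comp continuous_snd
    have hswap := integral_integral_swap (μ := μ) (ν := μ)
      (f := fun y x => q y * (K (x, y) * (s x - p x)))
      (cont_integrable (μ.prod μ) hFcont)
    rw [h1, hswap]
    congr 1
    ext x
    have : (fun y => q y * (K (x, y) * (s x - p x))) = fun y => (s x - p x) * (K (x, y) * q y) := by
      ext y; ring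
    rw [this, integral_const_mul]
    rfl
  -- STEP: entropy identity for s
  set Zu : ℝ := ∫ x', Real.exp (-β * u x') ∂μ with hZudef
  have hwuc : Continuous (fun x => -β * u x) := continuous_const.mul huc
  have hwub : ∀ x, |(-β) * u x| ≤ β * κ := by
    intro x
    rw [abs_mul, abs_neg, abs_of_pos hβ]
    exact mul_le_mul_of_nonneg_left (hub x) hβ.le
  have hZupos : 0 < Zu := Zw_pos μ hwuc hwub
  have hlogs : ∀ x, Real.log (s x) = -β * u x - Real.log Zu := by
    intro x
    have : s x = gibbs μ (fun x => -β * u x) x := rfl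
    rw [this]
    exact gibbs_log μ hwuc hwub x
  have hEnts_id : Ents = -β * (∫ x, s x * u x ∂μ) - Real.log Zu := by
    rw [hEntsdef]
    have : (fun x => s x * Real.log (s x))
        = fun x => -β * (s x * u x) - Real.log Zu * s x := by
      ext x
      rw [hlogs x]
      ring
    rw [this, integral_sub (f := fun x => -β * (s x * u x)) (g := fun x => Real.log Zu * s x)
      (((cont_integrable μ (hsc.mul huc))).const_mul _)
      ((cont_integrable μ hsc).const_mul _), integral_const_mul, integral_const_mul, hs1, mul_one]
  -- STEP: KL identity
  have hKL_id : KL = Entp + β * (∫ x, p x * u x ∂μ) + Real.log Zu := by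
    rw [hKLdef]
    have : (fun x => p x * Real.log (p x / s x))
        = fun x => p x * Real.log (p x) + β * (p x * u x) + Real.log Zu * p x := by
      ext x
      rw [Real.log_div (hppos x).ne' (hspos x).ne', hlogs x]
      ring
    have hc1 : Continuous (fun x => p x * Real.log (p x)) :=
      hpc.mul (hpc.log (fun x => (hppos x).ne'))
    have hi1 : Integrable (fun x => p x * Real.log (p x)) μ := cont_integrable μ hc1
    have hi2 : Integrable (fun x => β * (p x * u x)) μ :=
      (cont_integrable μ (hpc.mul huc)).const_mul _
    have hi12 : Integrable (fun x => p x * Real.log (p x) + β * (p x * u x)) μ := hi1.add hi2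
    have hi3 : Integrable (fun x => Real.log Zu * p x) μ :=
      (cont_integrable μ hpc).const_mul _
    rw [this, integral_add hi12 hi3, integral_add hi1 hi2, integral_const_mul,
      integral_const_mul, hp1, mul_one]
  -- STEP: conclude KL ≤ 0
  have hsu_sub : ∫ x, (s x - p x) * u x ∂μ
      = (∫ x, s x * u x ∂μ) - ∫ x, p x * u x ∂μ := by
    rw [← integral_sub (f := fun x => s x * u x) (g := fun x => p x * u x)
      (cont_integrable μ (hsc.mul huc)) (cont_integrable μ (hpc.mul huc))]
    congr 1; ext x; ring
  have hKLle : KL ≤ 0 := by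
    have : G = -KL := by
      rw [hGdef, hfub, hsu_sub, hEnts_id, hKL_id]
      ring
    linarith
  -- STEP: a.e. equality
  have hPS : p =ᵐ[μ] s := by
    set gg : Ω → ℝ := fun x => p x * Real.log (p x / s x) - (p x - s x) with hggdef
    have hggc : Continuous gg := by
      apply Continuous.sub
      · exact hpc.mul ((hpc.div hsc (fun x => (hspos x).ne')).log
          (fun x => (div_pos (hppos x) (hspos x)).ne'))
      · exact hpc.sub hsc
    have hgg0 : ∀ x, 0 ≤ gg x := by
      intro x
      rw [hggdef]
      have := klaux_le (hppos x) (hspos x)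
      simp only
      linarith
    have hggint : ∫ x, gg x ∂μ = KL := by
      have hc1 : Continuous (fun x => p x * Real.log (p x / s x)) :=
        hpc.mul ((hpc.div hsc (fun x => (hspos x).ne')).log
          (fun x => (div_pos (hppos x) (hspos x)).ne'))
      have hi1 : Integrable (fun x => p x * Real.log (p x / s x)) μ := cont_integrable μ hc1
      have hip : Integrable p μ := cont_integrable μ hpc
      have his : Integrable s μ := cont_integrable μ hsc
      have hi2 : Integrable (fun x => p x - s x) μ := hip.sub his
      rw [hggdef, integral_sub hi1 hi2, integral_sub hip his, hp1, hs1]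
      rw [hKLdef]
      ring
    have hgg_zero : ∫ x, gg x ∂μ = 0 := by
      have h1 : 0 ≤ ∫ x, gg x ∂μ := integral_nonneg hgg0
      rw [hggint] at h1 ⊢
      linarith
    have hae : gg =ᵐ[μ] 0 := by
      have hint : Integrable gg μ := cont_integrable μ hggc
      exact (integral_eq_zero_iff_of_nonneg hgg0 hint).1 hgg_zero
    filter_upwards [hae] with x hx
    have : gg x = 0 := hx
    rw [hggdef] at this
    exact klaux_eq (hppos x) (hspos x) this
  exact ⟨p, q, hpc, hqc, hp0, hq0, hp1, hq1, hPS, rfl⟩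

end main

theorem loglem_nonneg {a b : ℝ} (ha : 0 < a) (hb : 0 < b) :
    0 ≤ (Real.log a - Real.log b) * (a - b) := by
  rcases lt_trichotomy a b with h | h | h
  · have := Real.log_lt_log ha h
    nlinarith
  · simp [h]
  · have := Real.log_lt_log hb h
    nlinarith

theorem loglem_eq {a b : ℝ} (ha : 0 < a) (hb : 0 < b)
    (h : (Real.log a - Real.log b) * (a - b) = 0) : a = b := by
  rcases lt_trichotomy a b with hab | hab | hab
  · exfalso
    have := Real.log_lt_log ha hab
    nlinarith
  · exact hab
  · exfalso
    have := Real.log_lt_log hb hab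
    nlinarith

section uniq
variable (μ : Measure Ω) [IsProbabilityMeasure μ] {β : ℝ} {K : Ω × Ω → ℝ} {κ : ℝ}

/-- Uniqueness: any two a.e. solution pairs agree a.e. -/
theorem unique_pairs (hβ : 0 < β) (hK : Continuous K) (hκ : ∀ z, |K z| ≤ κ)
    {p₁ q₁ p₂ q₂ : Ω → ℝ}
    (hp₁m : Measurable p₁) (hp₁0 : ∀ x, 0 ≤ p₁ x) (hp₁1 : ∫ x, p₁ x ∂μ = 1)
    (hq₁m : Measurable q₁) (hq₁0 : ∀ x, 0 ≤ q₁ x) (hq₁1 : ∫ x, q₁ x ∂μ = 1)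
    (hp₂m : Measurable p₂) (hp₂0 : ∀ x, 0 ≤ p₂ x) (hp₂1 : ∫ x, p₂ x ∂μ = 1)
    (hq₂m : Measurable q₂) (hq₂0 : ∀ x, 0 ≤ q₂ x) (hq₂1 : ∫ x, q₂ x ∂μ = 1)
    (he₁p : p₁ =ᵐ[μ] Amap μ β K q₁) (he₁q : q₁ =ᵐ[μ] Bmap μ β K p₁)
    (he₂p : p₂ =ᵐ[μ] Amap μ β K q₂) (he₂q : q₂ =ᵐ[μ] Bmap μ β K p₂) :
    p₁ =ᵐ[μ] p₂ ∧ q₁ =ᵐ[μ] q₂ := by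
  -- canonical versions
  set P₁ : Ω → ℝ := Amap μ β K q₁ with hP₁def
  set Q₁ : Ω → ℝ := Bmap μ β K p₁ with hQ₁def
  set P₂ : Ω → ℝ := Amap μ β K q₂ with hP₂def
  set Q₂ : Ω → ℝ := Bmap μ β K p₂ with hQ₂def
  obtain ⟨hP₁c, hP₁pos, hP₁1, hP₁I, _⟩ := Amap_props μ hβ hK hκ hq₁0 hq₁1
  obtain ⟨hQ₁c, hQ₁pos, hQ₁1, hQ₁I⟩ := Bmap_props μ hβ hK hκ hp₁0 hp₁1
  obtain ⟨hP₂c, hP₂pos, hP₂1, hP₂I, _⟩ := Amap_props μ hβ hK hκ hq₂0 hq₂1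
  obtain ⟨hQ₂c, hQ₂pos, hQ₂1, hQ₂I⟩ := Bmap_props μ hβ hK hκ hp₂0 hp₂1
  have hP₁0 : ∀ x, 0 ≤ P₁ x := fun x => (hP₁pos x).le
  have hP₂0 : ∀ x, 0 ≤ P₂ x := fun x => (hP₂pos x).le
  have hQ₁0 : ∀ x, 0 ≤ Q₁ x := fun x => (hQ₁pos x).le
  have hQ₂0 : ∀ x, 0 ≤ Q₂ x := fun x => (hQ₂pos x).le
  -- Vint is insensitive to a.e. modification
  have hVae : ∀ (r r' : Ω → ℝ), r =ᵐ[μ] r' → ∀ x, Vint μ K r x = Vint μ K r' x := by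
    intro r r' hrr x
    apply integral_congr_ae
    filter_upwards [hrr] with y hy
    rw [hy]
  have hVae' : ∀ (r r' : Ω → ℝ), r =ᵐ[μ] r' → ∀ y,
      Vint μ (Kswap K) r y = Vint μ (Kswap K) r' y := by
    intro r r' hrr y
    apply integral_congr_ae
    filter_upwards [hrr] with x hx
    rw [hx]
  -- exact fixed point system for (Pᵢ, Qᵢ)
  have hAeq : ∀ (r r' : Ω → ℝ), (∀ x, Vint μ K r x = Vint μ K r' x) →
      Amap μ β K r = Amap μ β K r' := by
    intro r r' hv
    have h1 : ∀ x, (∫ y, K (x, y) * r y ∂μ) = ∫ y, K (x, y) * r' y ∂μ := hv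
    unfold Amap
    ext x
    rw [h1 x]
    congr 1
    apply integral_congr_ae
    filter_upwards with x'
    rw [h1 x']
  have hBeq : ∀ (r r' : Ω → ℝ), (∀ y, Vint μ (Kswap K) r y = Vint μ (Kswap K) r' y) →
      Bmap μ β K r = Bmap μ β K r' := by
    intro r r' hv
    have h1 : ∀ y, (∫ x, K (x, y) * r x ∂μ) = ∫ x, K (x, y) * r' x ∂μ := hv
    unfold Bmap
    ext y
    rw [h1 y]
    congr 1
    apply integral_congr_ae
    filter_upwards with y'
    rw [h1 y']
  have hfix₁p : P₁ = Amap μ β K Q₁ := hAeq q₁ Q₁ (hVae q₁ Q₁ he₁q)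
  have hfix₁q : Q₁ = Bmap μ β K P₁ := hBeq p₁ P₁ (hVae' p₁ P₁ he₁p)
  have hfix₂p : P₂ = Amap μ β K Q₂ := hAeq q₂ Q₂ (hVae q₂ Q₂ he₂q)
  have hfix₂q : Q₂ = Bmap μ β K P₂ := hBeq p₂ P₂ (hVae' p₂ P₂ he₂p)
  -- potentials
  set u₁ : Ω → ℝ := Vint μ K Q₁ with hu₁def
  set u₂ : Ω → ℝ := Vint μ K Q₂ with hu₂def
  set v₁ : Ω → ℝ := Vint μ (Kswap K) P₁ with hv₁def
  set v₂ : Ω → ℝ := Vint μ (Kswap K) P₂ with hv₂def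
  have hu₁c : Continuous u₁ := Vint_continuous μ hK hκ hQ₁0 hQ₁1
  have hu₂c : Continuous u₂ := Vint_continuous μ hK hκ hQ₂0 hQ₂1
  have hv₁c : Continuous v₁ := Vint_continuous μ (Kswap_cont hK) (Kswap_bdd hκ) hP₁0 hP₁1
  have hv₂c : Continuous v₂ := Vint_continuous μ (Kswap_cont hK) (Kswap_bdd hκ) hP₂0 hP₂1
  have hu₁b : ∀ x, |u₁ x| ≤ κ := Vint_abs_le μ hK hκ hQ₁0 hQ₁1
  have hu₂b : ∀ x, |u₂ x| ≤ κ := Vint_abs_le μ hK hκ hQ₂0 hQ₂1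
  have hv₁b : ∀ x, |v₁ x| ≤ κ := Vint_abs_le μ (Kswap_cont hK) (Kswap_bdd hκ) hP₁0 hP₁1
  have hv₂b : ∀ x, |v₂ x| ≤ κ := Vint_abs_le μ (Kswap_cont hK) (Kswap_bdd hκ) hP₂0 hP₂1
  -- log formulas
  have hw₁c : Continuous (fun x => -β * u₁ x) := continuous_const.mul hu₁c
  have hw₂c : Continuous (fun x => -β * u₂ x) := continuous_const.mul hu₂c
  have hw₁b : ∀ x, |(-β) * u₁ x| ≤ β * κ := by
    intro x; rw [abs_mul, abs_neg, abs_of_pos hβ]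
    exact mul_le_mul_of_nonneg_left (hu₁b x) hβ.le
  have hw₂b : ∀ x, |(-β) * u₂ x| ≤ β * κ := by
    intro x; rw [abs_mul, abs_neg, abs_of_pos hβ]
    exact mul_le_mul_of_nonneg_left (hu₂b x) hβ.le
  have hz₁c : Continuous (fun y => β * v₁ y) := continuous_const.mul hv₁c
  have hz₂c : Continuous (fun y => β * v₂ y) := continuous_const.mul hv₂c
  have hz₁b : ∀ y, |β * v₁ y| ≤ β * κ := by
    intro y; rw [abs_mul, abs_of_pos hβ]
    exact mul_le_mul_of_nonneg_left (hv₁b y) hβ.le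
  have hz₂b : ∀ y, |β * v₂ y| ≤ β * κ := by
    intro y; rw [abs_mul, abs_of_pos hβ]
    exact mul_le_mul_of_nonneg_left (hv₂b y) hβ.le
  set ZP₁ : ℝ := ∫ x', Real.exp (-β * u₁ x') ∂μ with hZP₁def
  set ZP₂ : ℝ := ∫ x', Real.exp (-β * u₂ x') ∂μ with hZP₂def
  set ZQ₁ : ℝ := ∫ y', Real.exp (β * v₁ y') ∂μ with hZQ₁def
  set ZQ₂ : ℝ := ∫ y', Real.exp (β * v₂ y') ∂μ with hZQ₂def
  have hlogP₁ : ∀ x, Real.log (P₁ x) = -β * u₁ x - Real.log ZP₁ := by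
    intro x
    have h0 : P₁ x = gibbs μ (fun x => -β * u₁ x) x := by rw [hfix₁p]; rfl
    rw [h0]; exact gibbs_log μ hw₁c hw₁b x
  have hlogP₂ : ∀ x, Real.log (P₂ x) = -β * u₂ x - Real.log ZP₂ := by
    intro x
    have h0 : P₂ x = gibbs μ (fun x => -β * u₂ x) x := by rw [hfix₂p]; rfl
    rw [h0]; exact gibbs_log μ hw₂c hw₂b x
  have hlogQ₁ : ∀ y, Real.log (Q₁ y) = β * v₁ y - Real.log ZQ₁ := by
    intro y
    have h0 : Q₁ y = gibbs μ (fun y => β * v₁ y) y := by rw [hfix₁q]; rfl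
    rw [h0]; exact gibbs_log μ hz₁c hz₁b y
  have hlogQ₂ : ∀ y, Real.log (Q₂ y) = β * v₂ y - Real.log ZQ₂ := by
    intro y
    have h0 : Q₂ y = gibbs μ (fun y => β * v₂ y) y := by rw [hfix₂q]; rfl
    rw [h0]; exact gibbs_log μ hz₂c hz₂b y
  -- the two monotonicity integrals
  set E₁ : ℝ := ∫ x, (Real.log (P₁ x) - Real.log (P₂ x)) * (P₁ x - P₂ x) ∂μ with hE₁def
  set E₂ : ℝ := ∫ y, (Real.log (Q₁ y) - Real.log (Q₂ y)) * (Q₁ y - Q₂ y) ∂μ with hE₂def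
  have hE₁c : Continuous (fun x => (Real.log (P₁ x) - Real.log (P₂ x)) * (P₁ x - P₂ x)) :=
    ((hP₁c.log (fun x => (hP₁pos x).ne')).sub (hP₂c.log (fun x => (hP₂pos x).ne'))).mul
      (hP₁c.sub hP₂c)
  have hE₂c : Continuous (fun y => (Real.log (Q₁ y) - Real.log (Q₂ y)) * (Q₁ y - Q₂ y)) :=
    ((hQ₁c.log (fun y => (hQ₁pos y).ne')).sub (hQ₂c.log (fun y => (hQ₂pos y).ne'))).mul
      (hQ₁c.sub hQ₂c)
  have hE₁nn : 0 ≤ E₁ :=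
    integral_nonneg (fun x => loglem_nonneg (hP₁pos x) (hP₂pos x))
  have hE₂nn : 0 ≤ E₂ :=
    integral_nonneg (fun y => loglem_nonneg (hQ₁pos y) (hQ₂pos y))
  -- bilinear term
  set T : ℝ := ∫ x, (u₁ x - u₂ x) * (P₁ x - P₂ x) ∂μ with hTdef
  -- E₁ = -β T
  have hE₁eq : E₁ = -β * T := by
    have h1 : (fun x => (Real.log (P₁ x) - Real.log (P₂ x)) * (P₁ x - P₂ x))
        = fun x => -β * ((u₁ x - u₂ x) * (P₁ x - P₂ x))
            - (Real.log ZP₁ - Real.log ZP₂) * (P₁ x - P₂ x) := by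
      ext x
      rw [hlogP₁ x, hlogP₂ x]
      ring
    have hiA : Integrable (fun x => -β * ((u₁ x - u₂ x) * (P₁ x - P₂ x))) μ :=
      (cont_integrable μ (((hu₁c.sub hu₂c).mul (hP₁c.sub hP₂c)))).const_mul _
    have hiB : Integrable (fun x => (Real.log ZP₁ - Real.log ZP₂) * (P₁ x - P₂ x)) μ :=
      (cont_integrable μ (hP₁c.sub hP₂c)).const_mul _
    rw [hE₁def, h1, integral_sub hiA hiB, integral_const_mul, integral_const_mul]
    have h2 : ∫ x, (P₁ x - P₂ x) ∂μ = 0 := by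
      rw [integral_sub (cont_integrable μ hP₁c) (cont_integrable μ hP₂c), hP₁1, hP₂1]
      ring
    rw [h2, hTdef]
    ring
  -- E₂ = β T via Fubini
  have hE₂eq : E₂ = β * T := by
    have h1 : (fun y => (Real.log (Q₁ y) - Real.log (Q₂ y)) * (Q₁ y - Q₂ y))
        = fun y => β * ((v₁ y - v₂ y) * (Q₁ y - Q₂ y))
            - (Real.log ZQ₁ - Real.log ZQ₂) * (Q₁ y - Q₂ y) := by
      ext y
      rw [hlogQ₁ y, hlogQ₂ y]
      ring
    have hiA : Integrable (fun y => β * ((v₁ y - v₂ y) * (Q₁ y - Q₂ y))) μ :=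
      (cont_integrable μ (((hv₁c.sub hv₂c).mul (hQ₁c.sub hQ₂c)))).const_mul _
    have hiB : Integrable (fun y => (Real.log ZQ₁ - Real.log ZQ₂) * (Q₁ y - Q₂ y)) μ :=
      (cont_integrable μ (hQ₁c.sub hQ₂c)).const_mul _
    rw [hE₂def, h1, integral_sub hiA hiB, integral_const_mul, integral_const_mul]
    have h2 : ∫ y, (Q₁ y - Q₂ y) ∂μ = 0 := by
      rw [integral_sub (cont_integrable μ hQ₁c) (cont_integrable μ hQ₂c), hQ₁1, hQ₂1]
      ring
    rw [h2]
    -- now need: ∫ (v₁ - v₂)(Q₁ - Q₂) = T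
    have hfub : ∫ y, (v₁ y - v₂ y) * (Q₁ y - Q₂ y) ∂μ = T := by
      have hv12 : ∀ y, v₁ y - v₂ y = ∫ x, K (x, y) * (P₁ x - P₂ x) ∂μ := by
        intro y
        have hi1 : Integrable (fun x => K (x, y) * P₁ x) μ := cont_integrable μ (by fun_prop)
        have hi2 : Integrable (fun x => K (x, y) * P₂ x) μ := cont_integrable μ (by fun_prop)
        show (∫ x, K (x, y) * P₁ x ∂μ) - (∫ x, K (x, y) * P₂ x ∂μ)
          = ∫ x, K (x, y) * (P₁ x - P₂ x) ∂μ
        rw [← integral_sub hi1 hi2]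
        congr 1; ext x; ring
      have hu12 : ∀ x, u₁ x - u₂ x = ∫ y, K (x, y) * (Q₁ y - Q₂ y) ∂μ := by
        intro x
        have hi1 : Integrable (fun y => K (x, y) * Q₁ y) μ := cont_integrable μ (by fun_prop)
        have hi2 : Integrable (fun y => K (x, y) * Q₂ y) μ := cont_integrable μ (by fun_prop)
        show (∫ y, K (x, y) * Q₁ y ∂μ) - (∫ y, K (x, y) * Q₂ y ∂μ)
          = ∫ y, K (x, y) * (Q₁ y - Q₂ y) ∂μ
        rw [← integral_sub hi1 hi2]
        congr 1; ext y; ring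
      have hFc : Continuous (Function.uncurry
          (fun y x => (K (x, y) * (P₁ x - P₂ x)) * (Q₁ y - Q₂ y))) := by
        apply Continuous.mul
        · apply Continuous.mul
          · exact hK.comp (continuous_snd.prodMk continuous_fst)
          · exact (hP₁c.sub hP₂c).comp continuous_snd
        · exact (hQ₁c.sub hQ₂c).comp continuous_fst
      have hswap := integral_integral_swap (μ := μ) (ν := μ)
        (f := fun y x => (K (x, y) * (P₁ x - P₂ x)) * (Q₁ y - Q₂ y))
        (cont_integrable (μ.prod μ) hFc)
      have hL : ∫ y, (v₁ y - v₂ y) * (Q₁ y - Q₂ y) ∂μ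
          = ∫ y, ∫ x, (K (x, y) * (P₁ x - P₂ x)) * (Q₁ y - Q₂ y) ∂μ ∂μ := by
        congr 1; ext y
        rw [hv12 y, ← integral_mul_const]
      have hR : ∫ x, ∫ y, (K (x, y) * (P₁ x - P₂ x)) * (Q₁ y - Q₂ y) ∂μ ∂μ = T := by
        rw [hTdef]
        congr 1; ext x
        rw [hu12 x]
        have : (fun y => (K (x, y) * (P₁ x - P₂ x)) * (Q₁ y - Q₂ y))
            = fun y => (P₁ x - P₂ x) * (K (x, y) * (Q₁ y - Q₂ y)) := by
          ext y; ring
        rw [this, integral_const_mul]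
        ring
      rw [hL, hswap, hR]
    rw [hfub]
    ring
  -- conclude
  have hE₁zero : E₁ = 0 := by
    by_cases hT : 0 ≤ T
    · nlinarith
    · push_neg at hT
      nlinarith
  have hE₂zero : E₂ = 0 := by nlinarith
  have hPae : P₁ =ᵐ[μ] P₂ := by
    have h0 : ∫ x, (Real.log (P₁ x) - Real.log (P₂ x)) * (P₁ x - P₂ x) ∂μ = 0 := hE₁zero
    have hae := (integral_eq_zero_iff_of_nonneg
      (fun x => loglem_nonneg (hP₁pos x) (hP₂pos x)) (cont_integrable μ hE₁c)).1 h0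
    filter_upwards [hae] with x hx
    exact loglem_eq (hP₁pos x) (hP₂pos x) hx
  have hQae : Q₁ =ᵐ[μ] Q₂ := by
    have h0 : ∫ y, (Real.log (Q₁ y) - Real.log (Q₂ y)) * (Q₁ y - Q₂ y) ∂μ = 0 := hE₂zero
    have hae := (integral_eq_zero_iff_of_nonneg
      (fun y => loglem_nonneg (hQ₁pos y) (hQ₂pos y)) (cont_integrable μ hE₂c)).1 h0
    filter_upwards [hae] with y hy
    exact loglem_eq (hQ₁pos y) (hQ₂pos y) hy
  constructor
  · exact he₁p.trans (hPae.trans he₂p.symm)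
  · exact he₁q.trans (hQae.trans he₂q.symm)

end uniq

end FPaux

open FPaux in
/-- Existence and uniqueness (up to a.e. equality) of a pair of probability densities solving
the fixed-point system characterizing the mixed Nash equilibrium of the
entropy-regularized game. -/
theorem fixed_point_system_exists_unique
    {Ω : Type*} [MetricSpace Ω] [CompactSpace Ω] [MeasurableSpace Ω] [BorelSpace Ω]
    (μ : Measure Ω) [IsProbabilityMeasure μ] (β : ℝ) (hβ : 0 < β)
    (K : Ω × Ω → ℝ) (hK : Continuous K) :
    ∃ p q : Ω → ℝ,
      (Measurable p ∧ (∀ x, 0 ≤ p x) ∧ ∫ x, p x ∂μ = 1) ∧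
      (Measurable q ∧ (∀ y, 0 ≤ q y) ∧ ∫ y, q y ∂μ = 1) ∧
      (p =ᵐ[μ] fun x => Real.exp (-β * ∫ y, K (x, y) * q y ∂μ)
          / ∫ x', Real.exp (-β * ∫ y, K (x', y) * q y ∂μ) ∂μ) ∧
      (q =ᵐ[μ] fun y => Real.exp (β * ∫ x, K (x, y) * p x ∂μ)
          / ∫ y', Real.exp (β * ∫ x, K (x, y') * p x ∂μ) ∂μ) ∧
      (∀ p' q' : Ω → ℝ,
        (Measurable p' ∧ (∀ x, 0 ≤ p' x) ∧ ∫ x, p' x ∂μ = 1) →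
        (Measurable q' ∧ (∀ y, 0 ≤ q' y) ∧ ∫ y, q' y ∂μ = 1) →
        (p' =ᵐ[μ] fun x => Real.exp (-β * ∫ y, K (x, y) * q' y ∂μ)
            / ∫ x', Real.exp (-β * ∫ y, K (x', y) * q' y ∂μ) ∂μ) →
        (q' =ᵐ[μ] fun y => Real.exp (β * ∫ x, K (x, y) * p' x ∂μ)
            / ∫ y', Real.exp (β * ∫ x, K (x, y') * p' x ∂μ) ∂μ) →
        p' =ᵐ[μ] p ∧ q' =ᵐ[μ] q) := by
  obtain ⟨κ₀, hκ₀⟩ := (isCompact_range hK.norm).bddAbove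
  set κ : ℝ := max κ₀ 0 with hκdef
  have hκ : ∀ z, |K z| ≤ κ := by
    intro z
    have h1 : ‖K z‖ ≤ κ₀ := hκ₀ ⟨z, rfl⟩
    rw [Real.norm_eq_abs] at h1
    exact le_trans h1 (le_max_left _ _)
  have hκ0 : 0 ≤ κ := le_max_right _ _
  obtain ⟨p, q, hpc, hqc, hp0, hq0, hp1, hq1, hPA, hQB⟩ :=
    exists_fixed_pair μ hβ hK hκ hκ0
  refine ⟨p, q, ⟨hpc.measurable, hp0, hp1⟩, ⟨hqc.measurable, hq0, hq1⟩, hPA, ?_, ?_⟩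
  · rw [hQB]
    exact Filter.EventuallyEq.rfl
  · intro p' q' hp' hq' he1 he2
    exact unique_pairs μ hβ hK hκ hp'.1 hp'.2.1 hp'.2.2 hq'.1 hq'.2.1 hq'.2.2
      hpc.measurable hp0 hp1 hqc.measurable hq0 hq1 he1 he2 hPA
      (by rw [hQB])
end

section
/- Any solution of the fixed-point system is a Nash equilibrium of the entropy-regularized game: if (p,q) are probability densities with respect to μ satisfying p(x) = exp(−β ∫ K(x,y) q(y) dμ(y))/Z_p μ-a.e. and q(y) = exp(β ∫ K(x,y) p(x) dμ(x))/Z_q μ-a.e. (with Z_p, Z_q the corresponding normalization constants), then: (i) for every probability density p' with respect to μ with p' log p' integrable, E(p'·μ, q·μ) + β⁻¹ S(p') ≥ E(p·μ, q·μ) + β⁻¹ S(p); and (ii) for every probability density q' with respect to μ with q' log q' integrable, E(p·μ, q'·μ) − β⁻¹ S(q') ≤ E(p·μ, q·μ) − β⁻¹ S(q). -/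
open MeasureTheory Real
open scoped ENNReal NNReal


private lemma log_ineq {a b : ℝ} (ha : 0 < a) (hb : 0 ≤ b) :
    b * Real.log a - b * Real.log b ≤ a - b := by
  rcases hb.eq_or_lt with h | h
  · rw [← h]; simp; linarith
  · have h1 := Real.log_le_sub_one_of_pos (div_pos ha h)
    rw [Real.log_div ha.ne' h.ne'] at h1
    have h2 : b * (Real.log a - Real.log b) ≤ b * (a / b - 1) :=
      mul_le_mul_of_nonneg_left h1 h.le
    have h3 : b * (a / b - 1) = a - b := by field_simp
    nlinarith

private lemma integrable_bdd_mul {Ω : Type*} [MeasurableSpace Ω] {μ : Measure Ω}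
    {f r : Ω → ℝ} (hf : Measurable f) {M : ℝ} (hfb : ∀ t, |f t| ≤ M)
    (hr : Integrable r μ) : Integrable (fun t => r t * f t) μ := by
  simpa [mul_comm] using hr.bdd_mul (c := M) hf.aestronglyMeasurable (Filter.Eventually.of_forall fun t => by simpa using hfb t)

private lemma abs_integral_mul_le {Ω : Type*} [MeasurableSpace Ω] {μ : Measure Ω}
    {f r : Ω → ℝ} (hf : Measurable f) {M : ℝ} (hfb : ∀ t, |f t| ≤ M)
    (hr : Integrable r μ) (hr0 : ∀ t, 0 ≤ r t) (hr1 : ∫ t, r t ∂μ = 1) :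
    |∫ t, f t * r t ∂μ| ≤ M := by
  have h1 : |∫ t, f t * r t ∂μ| ≤ ∫ t, |f t| * |r t| ∂μ := by
    simpa [Real.norm_eq_abs, abs_mul] using norm_integral_le_integral_norm (fun t => f t * r t)
  have h2 : ∫ t, |f t| * |r t| ∂μ ≤ ∫ t, M * r t ∂μ := by
    refine integral_mono ?_ (hr.const_mul M) fun t => ?_
    · simpa [mul_comm] using
        integrable_bdd_mul hf.abs (fun t => by simpa [abs_abs] using hfb t) hr.abs
    · rw [abs_of_nonneg (hr0 t)]
      exact mul_le_mul_of_nonneg_right (hfb t) (hr0 t)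
  calc |∫ t, f t * r t ∂μ| ≤ ∫ t, M * r t ∂μ := h1.trans h2
    _ = M := by rw [integral_const_mul, hr1, mul_one]

private lemma gibbs_core {Ω : Type*} [MeasurableSpace Ω]
    (μ : Measure Ω) [IsProbabilityMeasure μ] (β : ℝ) (hβ : 0 < β)
    (g : Ω → ℝ) (hg : Measurable g) (M : ℝ) (hgb : ∀ x, |g x| ≤ M)
    (p p' : Ω → ℝ)
    (hpm : Measurable p) (hp1 : ∫ x, p x ∂μ = 1)
    (hpent : Integrable (fun x => p x * Real.log (p x)) μ)
    (hp'm : Measurable p') (hp'0 : ∀ x, 0 ≤ p' x) (hp'1 : ∫ x, p' x ∂μ = 1)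
    (hp'ent : Integrable (fun x => p' x * Real.log (p' x)) μ)
    (hfp : p =ᵐ[μ] fun x => Real.exp (-β * g x) / ∫ x', Real.exp (-β * g x') ∂μ) :
    (∫ x, p' x * g x ∂μ) + β⁻¹ * (∫ x, p' x * Real.log (p' x) ∂μ)
      ≥ (∫ x, p x * g x ∂μ) + β⁻¹ * (∫ x, p x * Real.log (p x) ∂μ) := by
  set Z : ℝ := ∫ x', Real.exp (-β * g x') ∂μ with hZdef
  have hM0 : ∀ x, -(|β| * M) ≤ -β * g x ∧ -β * g x ≤ |β| * M := by
    intro x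
    have h1 : |(-β) * g x| ≤ |β| * M := by
      rw [abs_mul, abs_neg]
      exact mul_le_mul_of_nonneg_left (hgb x) (abs_nonneg β)
    constructor <;> [linarith [neg_abs_le ((-β) * g x)]; linarith [le_abs_self ((-β) * g x)]]
  have hexpInt : Integrable (fun x => Real.exp (-β * g x)) μ := by
    refine Integrable.mono' (integrable_const (Real.exp (|β| * M)))
      ((hg.const_mul (-β)).exp).aestronglyMeasurable ?_
    filter_upwards with x
    rw [Real.norm_eq_abs, abs_of_pos (Real.exp_pos _)]
    exact Real.exp_le_exp.2 (hM0 x).2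
  have hZpos : 0 < Z := by
    have h1 : Real.exp (-(|β| * M)) ≤ Z := by
      have h0 : ∫ _x, Real.exp (-(|β| * M)) ∂μ = Real.exp (-(|β| * M)) := by simp
      have := integral_mono (μ := μ) (integrable_const (Real.exp (-(|β| * M)))) hexpInt
        (fun x => Real.exp_le_exp.2 (hM0 x).1)
      rwa [h0] at this
    exact (Real.exp_pos _).trans_le h1
  have hpInt : Integrable p μ := by
    by_contra h; rw [integral_undef h] at hp1; norm_num at hp1
  have hp'Int : Integrable p' μ := by
    by_contra h; rw [integral_undef h] at hp'1; norm_num at hp'1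
  have hppos : ∀ᵐ x ∂μ, 0 < p x := by
    filter_upwards [hfp] with x hx
    rw [hx]; exact div_pos (Real.exp_pos _) hZpos
  have hlogp : ∀ᵐ x ∂μ, Real.log (p x) = -β * g x - Real.log Z := by
    filter_upwards [hfp] with x hx
    rw [hx, Real.log_div (Real.exp_ne_zero _) hZpos.ne', Real.log_exp]
  have hpg : Integrable (fun x => p x * g x) μ := integrable_bdd_mul hg hgb hpInt
  have hp'g : Integrable (fun x => p' x * g x) μ := integrable_bdd_mul hg hgb hp'Int
  -- ∫ r (−βg − log Z) = −β ∫ r g − log Z  for densities r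
  have key : ∀ r : Ω → ℝ, Integrable r μ → (∫ x, r x ∂μ = 1) →
      Integrable (fun x => r x * g x) μ →
      ∫ x, r x * (-β * g x - Real.log Z) ∂μ = -β * (∫ x, r x * g x ∂μ) - Real.log Z := by
    intro r hrInt hr1 hrg
    have e : (fun x => r x * (-β * g x - Real.log Z))
        = fun x => -β * (r x * g x) - Real.log Z * r x := by funext x; ring
    rw [e, integral_sub ((hrg.const_mul (-β))) (hrInt.const_mul (Real.log Z)),
      integral_const_mul, integral_const_mul, hr1, mul_one]
  have e1 : ∫ x, p x * Real.log (p x) ∂μ = -β * (∫ x, p x * g x ∂μ) - Real.log Z := by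
    rw [integral_congr_ae (g := fun x => p x * (-β * g x - Real.log Z))
      (hlogp.mono fun x hx => by rw [hx])]
    exact key p hpInt hp1 hpg
  have hInt2base : Integrable (fun x => p' x * (-β * g x - Real.log Z)) μ := by
    have e : (fun x => p' x * (-β * g x - Real.log Z))
        = fun x => -β * (p' x * g x) - Real.log Z * p' x := by funext x; ring
    rw [e]; exact (hp'g.const_mul (-β)).sub (hp'Int.const_mul (Real.log Z))
  have hInt2 : Integrable (fun x => p' x * Real.log (p x)) μ := by
    refine hInt2base.congr ?_
    filter_upwards [hlogp] with x hx
    rw [hx]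
  have e2 : ∫ x, p' x * Real.log (p x) ∂μ = -β * (∫ x, p' x * g x ∂μ) - Real.log Z := by
    rw [integral_congr_ae (g := fun x => p' x * (-β * g x - Real.log Z))
      (hlogp.mono fun x hx => by rw [hx])]
    exact key p' hp'Int hp'1 hp'g
  -- Gibbs inequality
  have hG : ∫ x, (p' x * Real.log (p x) - p' x * Real.log (p' x)) ∂μ
      ≤ ∫ x, (p x - p' x) ∂μ := by
    refine integral_mono_ae (hInt2.sub hp'ent) (hpInt.sub hp'Int) ?_
    filter_upwards [hppos] with x hx
    exact log_ineq hx (hp'0 x)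
  rw [integral_sub hInt2 hp'ent, integral_sub hpInt hp'Int, hp1, hp'1, sub_self, e2] at hG
  -- conclude
  set I := ∫ x, p x * g x ∂μ
  set I' := ∫ x, p' x * g x ∂μ
  set S' := ∫ x, p' x * Real.log (p' x) ∂μ
  rw [e1]
  have h2 : 0 ≤ β⁻¹ * (β * I' + Real.log Z + S') := by
    apply mul_nonneg (inv_pos.2 hβ).le; linarith
  have h3 : β⁻¹ * (β * I' + Real.log Z + S') = I' + β⁻¹ * Real.log Z + β⁻¹ * S' := by
    field_simp
  have h4 : I + β⁻¹ * (-β * I - Real.log Z) = -(β⁻¹ * Real.log Z) := by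
    field_simp; ring
  rw [ge_iff_le, h4]
  linarith

private lemma E_withDensity {Ω : Type*} [MeasurableSpace Ω] {μ : Measure Ω}
    (K : Ω × Ω → ℝ) (r s : Ω → ℝ) (hrm : Measurable r) (hr0 : ∀ x, 0 ≤ r x)
    (hsm : Measurable s) (hs0 : ∀ y, 0 ≤ s y) :
    ∫ x, ∫ y, K (x, y) ∂(μ.withDensity (fun y => ENNReal.ofReal (s y)))
        ∂(μ.withDensity (fun x => ENNReal.ofReal (r x)))
      = ∫ x, r x * ∫ y, K (x, y) * s y ∂μ ∂μ := by
  have hd : ∀ (f : Ω → ℝ), (∀ t, 0 ≤ f t) → Measurable f → ∀ (G : Ω → ℝ),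
      ∫ t, G t ∂(μ.withDensity (fun t => ENNReal.ofReal (f t))) = ∫ t, f t * G t ∂μ := by
    intro f hf0 hfm G
    rw [show (fun t => ENNReal.ofReal (f t)) = (fun t => ((f t).toNNReal : ℝ≥0∞)) from rfl,
      integral_withDensity_eq_integral_smul hfm.real_toNNReal]
    refine integral_congr_ae (Filter.Eventually.of_forall fun t => ?_)
    simp [NNReal.smul_def, Real.coe_toNNReal _ (hf0 t)]
  rw [hd r hr0 hrm]
  refine integral_congr_ae (Filter.Eventually.of_forall fun x => ?_)
  dsimp only
  rw [hd s hs0 hsm (fun y => K (x, y))]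
  congr 1
  refine integral_congr_ae (Filter.Eventually.of_forall fun y => ?_)
  dsimp only
  ring

private lemma fubini_step {Ω : Type*} [MeasurableSpace Ω] {μ : Measure Ω}
    [IsProbabilityMeasure μ]
    (K : Ω × Ω → ℝ) (hKm : Measurable K) (M : ℝ) (hKb : ∀ z, |K z| ≤ M)
    (r s : Ω → ℝ) (hrm : Measurable r) (hsm : Measurable s)
    (hr : Integrable r μ) (hs : Integrable s μ) :
    ∫ x, r x * ∫ y, K (x, y) * s y ∂μ ∂μ = ∫ y, s y * ∫ x, K (x, y) * r x ∂μ ∂μ := by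
  have hFm : Measurable fun z : Ω × Ω => r z.1 * (K z * s z.2) :=
    (hrm.comp measurable_fst).mul (hKm.mul (hsm.comp measurable_snd))
  have hprod : Integrable (Function.uncurry fun x y => r x * (K (x, y) * s y)) (μ.prod μ) := by
    have hbase : Integrable (fun z : Ω × Ω => max M 0 * (|r z.1| * |s z.2|)) (μ.prod μ) :=
      (hr.abs.mul_prod hs.abs).const_mul (max M 0)
    refine Integrable.mono' hbase ?_ ?_
    · exact hFm.aestronglyMeasurable
    · filter_upwards with z
      have hK1 : |K (z.1, z.2)| ≤ max M 0 := (hKb _).trans (le_max_left _ _)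
      have h1 : ‖r z.1 * (K (z.1, z.2) * s z.2)‖ = |r z.1| * (|K (z.1, z.2)| * |s z.2|) := by
        rw [Real.norm_eq_abs, abs_mul, abs_mul]
      rw [Function.uncurry]
      rw [h1]
      have h2 : |r z.1| * (|K (z.1, z.2)| * |s z.2|) ≤ |r z.1| * ((M ⊔ 0) * |s z.2|) :=
        mul_le_mul_of_nonneg_left (mul_le_mul_of_nonneg_right hK1 (abs_nonneg _)) (abs_nonneg _)
      have h3 : |r z.1| * ((M ⊔ 0) * |s z.2|) = (M ⊔ 0) * (|r z.1| * |s z.2|) := by ring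
      linarith
  calc ∫ x, r x * ∫ y, K (x, y) * s y ∂μ ∂μ
      = ∫ x, ∫ y, r x * (K (x, y) * s y) ∂μ ∂μ := by
        refine integral_congr_ae (Filter.Eventually.of_forall fun x => ?_)
        dsimp only
        rw [integral_const_mul]
    _ = ∫ y, ∫ x, r x * (K (x, y) * s y) ∂μ ∂μ := integral_integral_swap hprod
    _ = ∫ y, s y * ∫ x, K (x, y) * r x ∂μ ∂μ := by
        refine integral_congr_ae (Filter.Eventually.of_forall fun y => ?_)
        dsimp only
        rw [show (fun x => r x * (K (x, y) * s y)) = fun x => (K (x, y) * r x) * s y by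
          funext x; ring, integral_mul_const, mul_comm]


/-- Any solution of the fixed-point system is a Nash equilibrium of the entropy-regularized
game: `p` minimizes `E(·,q·μ) + β⁻¹S(·)` and `q` maximizes `E(p·μ,·) − β⁻¹S(·)` among
probability densities with finite entropy. -/
theorem fixed_point_is_nash
    {Ω : Type*} [MetricSpace Ω] [CompactSpace Ω] [MeasurableSpace Ω] [BorelSpace Ω]
    (μ : Measure Ω) [IsProbabilityMeasure μ] (β : ℝ) (hβ : 0 < β)
    (K : Ω × Ω → ℝ) (hK : Continuous K)
    (E : Measure Ω → Measure Ω → ℝ) (hE : ∀ P Q, E P Q = ∫ x, ∫ y, K (x, y) ∂Q ∂P)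
    (S : (Ω → ℝ) → ℝ) (hS : ∀ f : Ω → ℝ, S f = ∫ x, f x * Real.log (f x) ∂μ)
    (p q : Ω → ℝ)
    (hpm : Measurable p) (hp0 : ∀ x, 0 ≤ p x) (hp1 : ∫ x, p x ∂μ = 1)
    (hpent : Integrable (fun x => p x * Real.log (p x)) μ)
    (hqm : Measurable q) (hq0 : ∀ y, 0 ≤ q y) (hq1 : ∫ y, q y ∂μ = 1)
    (hqent : Integrable (fun y => q y * Real.log (q y)) μ)
    (hfp_p : p =ᵐ[μ] fun x => Real.exp (-β * ∫ y, K (x, y) * q y ∂μ)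
        / ∫ x', Real.exp (-β * ∫ y, K (x', y) * q y ∂μ) ∂μ)
    (hfp_q : q =ᵐ[μ] fun y => Real.exp (β * ∫ x, K (x, y) * p x ∂μ)
        / ∫ y', Real.exp (β * ∫ x, K (x, y') * p x ∂μ) ∂μ) :
    (∀ p' : Ω → ℝ, Measurable p' → (∀ x, 0 ≤ p' x) → ∫ x, p' x ∂μ = 1 →
      Integrable (fun x => p' x * Real.log (p' x)) μ →
      E (μ.withDensity (fun x => ENNReal.ofReal (p' x)))
          (μ.withDensity (fun y => ENNReal.ofReal (q y))) + β⁻¹ * S p'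
        ≥ E (μ.withDensity (fun x => ENNReal.ofReal (p x)))
            (μ.withDensity (fun y => ENNReal.ofReal (q y))) + β⁻¹ * S p) ∧
    (∀ q' : Ω → ℝ, Measurable q' → (∀ y, 0 ≤ q' y) → ∫ y, q' y ∂μ = 1 →
      Integrable (fun y => q' y * Real.log (q' y)) μ →
      E (μ.withDensity (fun x => ENNReal.ofReal (p x)))
          (μ.withDensity (fun y => ENNReal.ofReal (q' y))) - β⁻¹ * S q'
        ≤ E (μ.withDensity (fun x => ENNReal.ofReal (p x)))
            (μ.withDensity (fun y => ENNReal.ofReal (q y))) - β⁻¹ * S q) := by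
  have hKm : Measurable K := hK.measurable
  obtain ⟨M0, hM0⟩ := isCompact_univ.exists_bound_of_continuousOn hK.continuousOn
  have hM : ∀ z : Ω × Ω, |K z| ≤ |M0| := fun z => by
    have hz := hM0 z (Set.mem_univ z)
    rw [Real.norm_eq_abs] at hz
    exact hz.trans (le_abs_self M0)
  have hpInt : Integrable p μ := by
    by_contra hcon; rw [integral_undef hcon] at hp1; norm_num at hp1
  have hqInt : Integrable q μ := by
    by_contra hcon; rw [integral_undef hcon] at hq1; norm_num at hq1
  have hgm : Measurable fun x => ∫ y, K (x, y) * q y ∂μ :=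
    (StronglyMeasurable.integral_prod_right'
      (f := fun z : Ω × Ω => K z * q z.2)
      ((hKm.mul (hqm.comp measurable_snd)).stronglyMeasurable)).measurable
  have hhm : Measurable fun y => ∫ x, K (x, y) * p x ∂μ :=
    (StronglyMeasurable.integral_prod_left'
      (f := fun z : Ω × Ω => K z * p z.1)
      ((hKm.mul (hpm.comp measurable_fst)).stronglyMeasurable)).measurable
  have hgb : ∀ x, |∫ y, K (x, y) * q y ∂μ| ≤ |M0| := fun x =>
    abs_integral_mul_le (hKm.comp (measurable_const.prodMk measurable_id))
      (fun t => hM (x, t)) hqInt hq0 hq1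
  have hhb : ∀ y, |∫ x, K (x, y) * p x ∂μ| ≤ |M0| := fun y =>
    abs_integral_mul_le (hKm.comp (measurable_id.prodMk measurable_const))
      (fun t => hM (t, y)) hpInt hp0 hp1
  constructor
  · intro p' hp'm hp'0 hp'1 hp'ent
    rw [hE, hE, hS, hS, E_withDensity K p' q hp'm hp'0 hqm hq0,
      E_withDensity K p q hpm hp0 hqm hq0]
    exact gibbs_core μ β hβ (fun x => ∫ y, K (x, y) * q y ∂μ) hgm (|M0|) hgb
      p p' hpm hp1 hpent hp'm hp'0 hp'1 hp'ent hfp_p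
  · intro q' hq'm hq'0 hq'1 hq'ent
    have hq'Int : Integrable q' μ := by
      by_contra hcon; rw [integral_undef hcon] at hq'1; norm_num at hq'1
    rw [hE, hE, hS, hS, E_withDensity K p q' hpm hp0 hq'm hq'0,
      E_withDensity K p q hpm hp0 hqm hq0,
      fubini_step K hKm (|M0|) hM p q' hpm hq'm hpInt hq'Int,
      fubini_step K hKm (|M0|) hM p q hpm hqm hpInt hqInt]
    have hfp' : q =ᵐ[μ] fun y => Real.exp (-β * (-(∫ x, K (x, y) * p x ∂μ)))
        / ∫ y', Real.exp (-β * (-(∫ x, K (x, y') * p x ∂μ))) ∂μ := by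
      have he : ∀ y, -β * (-(∫ x, K (x, y) * p x ∂μ)) = β * ∫ x, K (x, y) * p x ∂μ :=
        fun y => by ring
      simp only [he]
      exact hfp_q
    have hkey := gibbs_core μ β hβ (fun y => -(∫ x, K (x, y) * p x ∂μ)) hhm.neg (|M0|)
      (fun y => by simpa using hhb y) q q' hqm hq1 hqent hq'm hq'0 hq'1 hq'ent hfp'
    have e' : ∀ r : Ω → ℝ, ∫ y, r y * (-(∫ x, K (x, y) * p x ∂μ)) ∂μ
        = -∫ y, r y * ∫ x, K (x, y) * p x ∂μ ∂μ := fun r => by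
      rw [← integral_neg]
      exact integral_congr_ae (Filter.Eventually.of_forall fun y => by dsimp only; ring)
    rw [e' q', e' q] at hkey
    linarith
end

section
/- Every minimizer of the free energy is a Boltzmann fixed point: if p* is a probability density with respect to μ with p* log p* integrable and F(p*) ≤ F(p) for every probability density p with p log p integrable, then p*(x) = exp(−β Ψ(x, p*·μ)) / Z μ-a.e., where Z = ∫ exp(−β Ψ(x, p*·μ)) dμ(x). -/
open MeasureTheory Real

open Filter Topology


lemma aux_mul_log_lower (x : ℝ) (hx : 0 ≤ x) : -(Real.exp 1)⁻¹ ≤ x * Real.log x := by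
  rcases eq_or_lt_of_le hx with h | h
  · simp [← h]; positivity
  · have h1 : Real.log x⁻¹ ≤ x⁻¹ / Real.exp 1 := by
      have h2 : Real.log (x⁻¹ / Real.exp 1) ≤ x⁻¹ / Real.exp 1 - 1 :=
        Real.log_le_sub_one_of_pos (by positivity)
      rw [Real.log_div (by positivity) (Real.exp_ne_zero 1), Real.log_exp] at h2
      linarith
    have h3 : x * Real.log x⁻¹ ≤ x * (x⁻¹ / Real.exp 1) := mul_le_mul_of_nonneg_left h1 hx
    rw [Real.log_inv] at h3
    have h4 : x * (x⁻¹ / Real.exp 1) = (Real.exp 1)⁻¹ := by field_simp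
    nlinarith

lemma aux_gibbs_pointwise {x y : ℝ} (hx : 0 ≤ x) (hy : 0 < y) :
    x - y ≤ x * (Real.log x - Real.log y) := by
  rcases eq_or_lt_of_le hx with h | h
  · simp [← h]; linarith
  · have h1 : Real.log (y / x) ≤ y / x - 1 := Real.log_le_sub_one_of_pos (by positivity)
    rw [Real.log_div hy.ne' h.ne'] at h1
    have h2 : x * (Real.log y - Real.log x) ≤ x * (y / x - 1) := mul_le_mul_of_nonneg_left h1 hx
    have h4 : x * (y / x - 1) = y - x := by field_simp
    nlinarith

lemma aux_gibbs_eq {x y : ℝ} (hx : 0 ≤ x) (hy : 0 < y)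
    (he : x * (Real.log x - Real.log y) = x - y) : x = y := by
  rcases eq_or_lt_of_le hx with h | h
  · exfalso; rw [← h] at he; simp at he; linarith
  · by_contra hne
    have h1 : Real.log (y / x) < y / x - 1 :=
      Real.log_lt_sub_one_of_pos (by positivity)
        (by intro hc; apply hne; field_simp at hc; linarith)
    rw [Real.log_div hy.ne' h.ne'] at h1
    have h2 : x * (Real.log y - Real.log x) < x * (y / x - 1) := (mul_lt_mul_iff_right₀ h).2 h1
    have h4 : x * (y / x - 1) = y - x := by field_simp
    nlinarith

set_option maxHeartbeats 2000000 in
lemma boltzmann_aux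
    {Ω : Type*} [MetricSpace Ω] [CompactSpace Ω] [MeasurableSpace Ω] [BorelSpace Ω]
    (μ : Measure Ω) [IsProbabilityMeasure μ] (β : ℝ) (hβ : 0 < β)
    (K : Ω × Ω → ℝ) (hK : Continuous K)
    (pstar : Ω → ℝ) (hm : Measurable pstar) (h0 : ∀ x, 0 ≤ pstar x)
    (h1 : ∫ x, pstar x ∂μ = 1)
    (hent : Integrable (fun x => pstar x * Real.log (pstar x)) μ)
    (Vs : Ω → ℝ) (hVs : ∀ y, Vs y = ∫ x, pstar x * K (x, y) ∂μ)
    (q : Ω → ℝ) (hq : ∀ y, q y = Real.exp (β * Vs y) / ∫ y', Real.exp (β * Vs y') ∂μ)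
    (Ψs : Ω → ℝ) (hΨs : ∀ x, Ψs x = ∫ y, K (x, y) * q y ∂μ)
    (hmin : ∀ p : Ω → ℝ, Measurable p → (∀ x, 0 ≤ p x) → ∫ x, p x ∂μ = 1 →
      Integrable (fun x => p x * Real.log (p x)) μ →
      β⁻¹ * Real.log (∫ y, Real.exp (β * Vs y) ∂μ)
          + β⁻¹ * ∫ x, pstar x * Real.log (pstar x) ∂μ
        ≤ β⁻¹ * Real.log (∫ y, Real.exp (β * ∫ x, p x * K (x, y) ∂μ) ∂μ)
          + β⁻¹ * ∫ x, p x * Real.log (p x) ∂μ) :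
    pstar =ᵐ[μ] fun x =>
      Real.exp (-β * Ψs x) / ∫ x', Real.exp (-β * Ψs x') ∂μ := by
  classical
  have hne : Nonempty Ω := by
    by_contra h
    rw [not_nonempty_iff] at h
    have h2 : μ Set.univ = 1 := measure_univ
    rw [Set.univ_eq_empty_iff.2 h] at h2
    simp at h2
  obtain ⟨M, hM0, hM⟩ : ∃ M, 0 ≤ M ∧ ∀ z, |K z| ≤ M := by
    obtain ⟨z0, -, hz0⟩ := isCompact_univ.exists_isMaxOn (Set.univ_nonempty)
      hK.abs.continuousOn
    exact ⟨|K z0|, abs_nonneg _, fun z => hz0 (Set.mem_univ z)⟩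
  have hpint : Integrable pstar μ := by
    by_contra h
    rw [integral_undef h] at h1
    exact one_ne_zero h1.symm
  have hcont_int : ∀ f : Ω → ℝ, Continuous f → Integrable f μ := fun f hf =>
    hf.integrable_of_hasCompactSupport (HasCompactSupport.of_compactSpace f)
  -- continuity of sections of K
  have hKx : ∀ y, Continuous fun x => K (x, y) := fun y =>
    hK.comp (continuous_id.prodMk continuous_const)
  have hKy : ∀ x, Continuous fun y => K (x, y) := fun x =>
    hK.comp (continuous_const.prodMk continuous_id)
  -- facts about Vs
  have hintKy : ∀ y, Integrable (fun x => pstar x * K (x, y)) μ := by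
    intro y
    refine (hpint.const_mul M).mono' (hm.mul (hKx y).measurable).aestronglyMeasurable ?_
    filter_upwards with x
    rw [Real.norm_eq_abs, abs_mul, abs_of_nonneg (h0 x)]
    nlinarith [hM (x, y), h0 x, abs_nonneg (K (x, y))]
  have hVs_cont : Continuous Vs := by
    rw [funext hVs]
    refine continuous_of_dominated (bound := fun x => M * pstar x)
      (fun y => (hm.mul (hKx y).measurable).aestronglyMeasurable) ?_
      (hpint.const_mul M) ?_
    · intro y
      filter_upwards with x
      rw [Real.norm_eq_abs, abs_mul, abs_of_nonneg (h0 x)]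
      nlinarith [hM (x, y), h0 x, abs_nonneg (K (x, y))]
    · filter_upwards with x
      exact continuous_const.mul (hKy x)
  have hVs_bd : ∀ y, |Vs y| ≤ M := by
    intro y
    rw [hVs]
    have h2 := norm_integral_le_of_norm_le (f := fun x => pstar x * K (x, y))
      (hpint.const_mul M)
      (by
        filter_upwards with x
        rw [Real.norm_eq_abs, abs_mul, abs_of_nonneg (h0 x)]
        nlinarith [hM (x, y), h0 x, abs_nonneg (K (x, y))])
    rw [Real.norm_eq_abs] at h2
    rwa [integral_const_mul, h1, mul_one] at h2
  -- the partition function Zs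
  set Zs : ℝ := ∫ y', Real.exp (β * Vs y') ∂μ with hZs_def
  have hexpVs_cont : Continuous fun y => Real.exp (β * Vs y) :=
    (continuous_const.mul hVs_cont).rexp
  have hexp_lb : ∀ y, Real.exp (-(β * M)) ≤ Real.exp (β * Vs y) := by
    intro y
    apply Real.exp_le_exp.2
    have := abs_le.1 (hVs_bd y)
    nlinarith
  have hZs_pos : 0 < Zs := by
    rw [hZs_def]
    calc (0:ℝ) < Real.exp (-(β * M)) := Real.exp_pos _
      _ = ∫ _, Real.exp (-(β * M)) ∂μ := by simp
      _ ≤ ∫ y, Real.exp (β * Vs y) ∂μ :=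
          integral_mono (integrable_const _) (hcont_int _ hexpVs_cont) hexp_lb
  -- facts about q
  have hq_cont : Continuous q := by
    rw [funext hq]
    exact hexpVs_cont.div_const _
  have hq_pos : ∀ y, 0 < q y := by
    intro y
    rw [hq]
    exact div_pos (Real.exp_pos _) hZs_pos
  have hq_int : Integrable q μ := hcont_int _ hq_cont
  have hq_one : ∫ y, q y ∂μ = 1 := by
    rw [funext hq, integral_div, div_self hZs_pos.ne']
  have hq_bd : ∀ y, q y ≤ Real.exp (β * M) / Zs := by
    intro y
    rw [hq]
    have hle : Real.exp (β * Vs y) ≤ Real.exp (β * M) :=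
      Real.exp_le_exp.2 (by nlinarith [abs_le.1 (hVs_bd y)])
    exact (div_le_div_iff_of_pos_right hZs_pos).2 hle
  -- facts about Ψs
  have hintKq : ∀ x, Integrable (fun y => K (x, y) * q y) μ :=
    fun x => hcont_int _ ((hKy x).mul hq_cont)
  have hΨs_cont : Continuous Ψs := by
    rw [funext hΨs]
    refine continuous_of_dominated (bound := fun y => M * q y)
      (fun x => ((hKy x).mul hq_cont).measurable.aestronglyMeasurable) ?_
      (hq_int.const_mul M) ?_
    · intro x
      filter_upwards with y
      rw [Real.norm_eq_abs, abs_mul, abs_of_pos (hq_pos y)]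
      nlinarith [hM (x, y), hq_pos y, abs_nonneg (K (x, y))]
    · filter_upwards with y
      exact (hKx y).mul continuous_const
  have hΨs_bd : ∀ x, |Ψs x| ≤ M := by
    intro x
    rw [hΨs]
    have h2 := norm_integral_le_of_norm_le (f := fun y => K (x, y) * q y)
      (hq_int.const_mul M)
      (by
        filter_upwards with y
        rw [Real.norm_eq_abs, abs_mul, abs_of_pos (hq_pos y)]
        nlinarith [hM (x, y), hq_pos y, abs_nonneg (K (x, y))])
    rw [Real.norm_eq_abs] at h2
    rwa [integral_const_mul, hq_one, mul_one] at h2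
  -- the Boltzmann density g
  set Z : ℝ := ∫ x', Real.exp (-β * Ψs x') ∂μ with hZ_def
  have hexpΨ_cont : Continuous fun x => Real.exp (-β * Ψs x) :=
    (continuous_const.mul hΨs_cont).rexp
  have hZ_pos : 0 < Z := by
    rw [hZ_def]
    calc (0:ℝ) < Real.exp (-(β * M)) := Real.exp_pos _
      _ = ∫ _, Real.exp (-(β * M)) ∂μ := by simp
      _ ≤ ∫ x, Real.exp (-β * Ψs x) ∂μ := by
          refine integral_mono (integrable_const _) (hcont_int _ hexpΨ_cont) fun x => ?_
          exact Real.exp_le_exp.2 (by nlinarith [abs_le.1 (hΨs_bd x)])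
  set g : Ω → ℝ := fun x => Real.exp (-β * Ψs x) / Z with hg_def
  have hg_cont : Continuous g := hexpΨ_cont.div_const _
  have hg_pos : ∀ x, 0 < g x := fun x => div_pos (Real.exp_pos _) hZ_pos
  have hg_int : Integrable g μ := hcont_int _ hg_cont
  have hg_one : ∫ x, g x ∂μ = 1 := by
    rw [hg_def, integral_div, ← hZ_def, div_self hZ_pos.ne']
  have hlog_g : ∀ x, Real.log (g x) = -β * Ψs x - Real.log Z := by
    intro x
    rw [hg_def]
    rw [Real.log_div (Real.exp_ne_zero _) hZ_pos.ne', Real.log_exp]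
  have hglogg_cont : Continuous fun x => g x * Real.log (g x) := by
    have : (fun x => g x * Real.log (g x)) = fun x => g x * (-β * Ψs x - Real.log Z) := by
      funext x; rw [hlog_g]
    rw [this]
    exact hg_cont.mul ((continuous_const.mul hΨs_cont).sub continuous_const)
  have hgent : Integrable (fun x => g x * Real.log (g x)) μ := hcont_int _ hglogg_cont
  -- entropies and the linear functional
  set Ss : ℝ := ∫ x, pstar x * Real.log (pstar x) ∂μ with hSs_def
  set Sg : ℝ := ∫ x, g x * Real.log (g x) ∂μ with hSg_def
  set W : Ω → ℝ := fun y => (∫ x, g x * K (x, y) ∂μ) - Vs y with hW_def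
  have hintKgy : ∀ y, Integrable (fun x => g x * K (x, y)) μ :=
    fun y => hcont_int _ (hg_cont.mul (hKx y))
  have hVg_cont : Continuous fun y => ∫ x, g x * K (x, y) ∂μ := by
    refine continuous_of_dominated (bound := fun x => M * g x)
      (fun y => (hg_cont.mul (hKx y)).measurable.aestronglyMeasurable) ?_
      (hg_int.const_mul M) ?_
    · intro y
      filter_upwards with x
      rw [Real.norm_eq_abs, abs_mul, abs_of_pos (hg_pos x)]
      nlinarith [hM (x, y), hg_pos x, abs_nonneg (K (x, y))]
    · filter_upwards with x
      exact continuous_const.mul (hKy x)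
  have hVg_bd : ∀ y, |∫ x, g x * K (x, y) ∂μ| ≤ M := by
    intro y
    have h2 := norm_integral_le_of_norm_le (f := fun x => g x * K (x, y))
      (hg_int.const_mul M)
      (by
        filter_upwards with x
        rw [Real.norm_eq_abs, abs_mul, abs_of_pos (hg_pos x)]
        nlinarith [hM (x, y), hg_pos x, abs_nonneg (K (x, y))])
    rw [Real.norm_eq_abs] at h2
    rwa [integral_const_mul, hg_one, mul_one] at h2
  have hW_cont : Continuous W := by
    rw [hW_def]; exact hVg_cont.sub hVs_cont
  have hW_bd : ∀ y, |W y| ≤ 2 * M := by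
    intro y
    rw [hW_def]
    have ha := abs_le.1 (hVg_bd y)
    have hb := abs_le.1 (hVs_bd y)
    rw [abs_le]
    constructor <;> simp only [] <;> linarith [ha.1, ha.2, hb.1, hb.2]
  -- the perturbation functional
  set I : ℝ → ℝ := fun t => ∫ y, Real.exp (t * (β * W y)) * q y ∂μ with hI_def
  have hI_cont : ∀ t, Continuous fun y => Real.exp (t * (β * W y)) * q y := fun t =>
    ((continuous_const.mul (continuous_const.mul hW_cont)).rexp).mul hq_cont
  have hI_pos : ∀ t, |t| ≤ 1 → 0 < I t := by
    intro t ht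
    rw [hI_def]
    have hlb : ∀ y, Real.exp (-(2 * (β * M))) * (Real.exp (-(β * M)) / Zs)
        ≤ Real.exp (t * (β * W y)) * q y := by
      intro y
      have h2 : Real.exp (-(2 * (β * M))) ≤ Real.exp (t * (β * W y)) := by
        apply Real.exp_le_exp.2
        have := abs_le.1 (hW_bd y)
        have h3 : |t * (β * W y)| ≤ 2 * (β * M) := by
          rw [abs_mul, abs_mul, abs_of_pos hβ]
          calc |t| * (β * |W y|) ≤ 1 * (β * (2 * M)) := by
                apply mul_le_mul ht _ (by positivity) zero_le_one
                exact mul_le_mul_of_nonneg_left (hW_bd y) hβ.le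
            _ = 2 * (β * M) := by ring
        linarith [(abs_le.1 h3).1]
      have h4 : Real.exp (-(β * M)) / Zs ≤ q y := by
        rw [hq]
        apply (div_le_div_iff_of_pos_right hZs_pos).2
        exact Real.exp_le_exp.2 (by nlinarith [abs_le.1 (hVs_bd y)])
      exact mul_le_mul h2 h4 (by positivity) (Real.exp_pos _).le
    calc (0:ℝ) < Real.exp (-(2 * (β * M))) * (Real.exp (-(β * M)) / Zs) := by positivity
      _ = ∫ _, Real.exp (-(2 * (β * M))) * (Real.exp (-(β * M)) / Zs) ∂μ := by simp
      _ ≤ ∫ y, Real.exp (t * (β * W y)) * q y ∂μ :=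
          integral_mono (integrable_const _) (hcont_int _ (hI_cont t)) hlb
  have hI_zero : I 0 = 1 := by
    rw [hI_def]
    simp only [zero_mul, Real.exp_zero, one_mul]
    exact hq_one
  set φ : ℝ → ℝ := fun t => β⁻¹ * Real.log (I t) + t * (β⁻¹ * (Sg - Ss)) with hφ_def
  have hφ_zero : φ 0 = 0 := by
    rw [hφ_def]; simp [hI_zero]
  -- nonnegativity of φ on (0, 1]
  have hφ_nonneg : ∀ t ∈ Set.Ioc (0:ℝ) 1, 0 ≤ φ t := by
    intro t ht
    obtain ⟨ht0, ht1⟩ := ht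
    set ρ : Ω → ℝ := fun x => (1 - t) * pstar x + t * g x with hρ_def
    have hρ_meas : Measurable ρ := (hm.const_mul _).add (hg_cont.measurable.const_mul _)
    have hρ_nonneg : ∀ x, 0 ≤ ρ x := by
      intro x
      rw [hρ_def]
      have h5 : (0:ℝ) ≤ (1 - t) * pstar x := mul_nonneg (by linarith) (h0 x)
      have h6 : (0:ℝ) ≤ t * g x := mul_nonneg ht0.le (hg_pos x).le
      simp only []
      linarith
    have hρ_one : ∫ x, ρ x ∂μ = 1 := by
      rw [hρ_def, integral_add ((hpint.const_mul _)) ((hg_int.const_mul _)),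
        integral_const_mul, integral_const_mul, h1, hg_one]
      ring
    -- pointwise convexity of entropy
    have hconv : ∀ x, ρ x * Real.log (ρ x)
        ≤ (1 - t) * (pstar x * Real.log (pstar x)) + t * (g x * Real.log (g x)) := by
      intro x
      have := Real.convexOn_mul_log.2 (Set.mem_Ici.2 (h0 x)) (Set.mem_Ici.2 (hg_pos x).le)
        (by linarith : (0:ℝ) ≤ 1 - t) ht0.le (by ring)
      simpa [smul_eq_mul] using this
    have hρent : Integrable (fun x => ρ x * Real.log (ρ x)) μ := by
      refine Integrable.mono'
        (g := fun x => (1 - t) * |pstar x * Real.log (pstar x)|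
          + t * |g x * Real.log (g x)| + (Real.exp 1)⁻¹)
        (((hent.abs.const_mul _).add (hgent.abs.const_mul _)).add (integrable_const _))
        ((hρ_meas.mul (Real.measurable_log.comp hρ_meas)).aestronglyMeasurable) ?_
      filter_upwards with x
      show ‖ρ x * Real.log (ρ x)‖ ≤ (1 - t) * |pstar x * Real.log (pstar x)|
          + t * |g x * Real.log (g x)| + (Real.exp 1)⁻¹
      rw [Real.norm_eq_abs, abs_le]
      constructor
      · have := aux_mul_log_lower (ρ x) (hρ_nonneg x)
        have h5 : (0:ℝ) ≤ (1 - t) * |pstar x * Real.log (pstar x)| :=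
          mul_nonneg (by linarith) (abs_nonneg _)
        have h6 : (0:ℝ) ≤ t * |g x * Real.log (g x)| := mul_nonneg ht0.le (abs_nonneg _)
        linarith
      · have h5 := hconv x
        have h6 : (1 - t) * (pstar x * Real.log (pstar x))
            ≤ (1 - t) * |pstar x * Real.log (pstar x)| :=
          mul_le_mul_of_nonneg_left (le_abs_self _) (by linarith)
        have h7 : t * (g x * Real.log (g x)) ≤ t * |g x * Real.log (g x)| :=
          mul_le_mul_of_nonneg_left (le_abs_self _) ht0.le
        have h8 : (0:ℝ) < (Real.exp 1)⁻¹ := by positivity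
        calc ρ x * Real.log (ρ x)
            ≤ (1 - t) * (pstar x * Real.log (pstar x)) + t * (g x * Real.log (g x)) := h5
          _ ≤ (1 - t) * |pstar x * Real.log (pstar x)| + t * |g x * Real.log (g x)| :=
              add_le_add h6 h7
          _ ≤ (1 - t) * |pstar x * Real.log (pstar x)| + t * |g x * Real.log (g x)|
              + (Real.exp 1)⁻¹ := by linarith
    have hSρ : ∫ x, ρ x * Real.log (ρ x) ∂μ ≤ (1 - t) * Ss + t * Sg := by
      have := integral_mono
        (g := fun x => (1 - t) * (pstar x * Real.log (pstar x)) + t * (g x * Real.log (g x)))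
        hρent ((hent.const_mul _).add (hgent.const_mul _)) hconv
      rwa [integral_add (hent.const_mul _) (hgent.const_mul _),
        integral_const_mul, integral_const_mul, ← hSs_def, ← hSg_def] at this
    -- partition function along the path
    have hVρ : ∀ y, ∫ x, ρ x * K (x, y) ∂μ = Vs y + t * W y := by
      intro y
      have heq : (fun x => ρ x * K (x, y))
          = fun x => (1 - t) * (pstar x * K (x, y)) + t * (g x * K (x, y)) := by
        funext x; rw [hρ_def]; ring
      rw [heq, integral_add ((hintKy y).const_mul _) ((hintKgy y).const_mul _),
        integral_const_mul, integral_const_mul]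
      have hWy : W y = (∫ x, g x * K (x, y) ∂μ) - Vs y := by simp only [hW_def]
      rw [hWy, hVs]
      ring
    have hZρ : ∫ y, Real.exp (β * (Vs y + t * W y)) ∂μ = Zs * I t := by
      have heq : (fun y => Real.exp (β * (Vs y + t * W y)))
          = fun y => Zs * (Real.exp (t * (β * W y)) * q y) := by
        funext y
        have h9 : Zs * (Real.exp (t * (β * W y)) * (Real.exp (β * Vs y) / Zs))
            = Real.exp (t * (β * W y)) * Real.exp (β * Vs y) := by
          field_simp
        rw [hq, h9, ← Real.exp_add]
        congr 1
        ring
      rw [heq, integral_const_mul, hI_def]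
    have hmint := hmin ρ hρ_meas hρ_nonneg hρ_one hρent
    simp only [hVρ] at hmint
    rw [hZρ, Real.log_mul hZs_pos.ne' (hI_pos t (by rw [abs_of_pos ht0]; exact ht1)).ne'] at hmint
    have hSρ' : β⁻¹ * ∫ x, ρ x * Real.log (ρ x) ∂μ ≤ β⁻¹ * ((1 - t) * Ss + t * Sg) :=
      mul_le_mul_of_nonneg_left hSρ (by positivity)
    have hexpand : β⁻¹ * ((1 - t) * Ss + t * Sg) = β⁻¹ * Ss + t * (β⁻¹ * (Sg - Ss)) := by ring
    rw [hφ_def]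
    simp only []
    rw [mul_add] at hmint
    linarith [hmint, hSρ', hexpand]
  -- derivative of I at 0
  set A : ℝ := ∫ y, W y * q y ∂μ with hA_def
  have hIderiv : HasDerivAt I (β * A) 0 := by
    have h2 := hasDerivAt_integral_of_dominated_loc_of_deriv_le
      (F := fun t y => Real.exp (t * (β * W y)) * q y)
      (F' := fun t y => Real.exp (t * (β * W y)) * (β * W y) * q y)
      (μ := μ) (x₀ := 0)
      (bound := fun y => Real.exp (2 * (β * M)) * (2 * (β * M)) * q y)
      (Metric.ball_mem_nhds 0 zero_lt_one)
      (Eventually.of_forall fun t => (hI_cont t).measurable.aestronglyMeasurable)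
      (hcont_int _ (hI_cont 0))
      ((((continuous_const.mul (continuous_const.mul hW_cont)).rexp.mul
        (continuous_const.mul hW_cont)).mul hq_cont).measurable.aestronglyMeasurable)
      ?_ (hq_int.const_mul _) ?_
    · have h3 : (fun y => Real.exp ((0:ℝ) * (β * W y)) * (β * W y) * q y)
          = fun y => β * (W y * q y) := by
        funext y; rw [zero_mul, Real.exp_zero]; ring
      have h4 := h2.2
      rw [h3, integral_const_mul, ← hA_def] at h4
      exact h4
    · filter_upwards with y
      intro t ht
      rw [Metric.mem_ball, Real.dist_eq, sub_zero] at ht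
      have hWy := abs_le.1 (hW_bd y)
      have h5 : |t * (β * W y)| ≤ 2 * (β * M) := by
        rw [abs_mul, abs_mul, abs_of_pos hβ]
        calc |t| * (β * |W y|) ≤ 1 * (β * (2 * M)) := by
              apply mul_le_mul ht.le _ (by positivity) zero_le_one
              exact mul_le_mul_of_nonneg_left (hW_bd y) hβ.le
          _ = 2 * (β * M) := by ring
      have h6 : Real.exp (t * (β * W y)) ≤ Real.exp (2 * (β * M)) :=
        Real.exp_le_exp.2 (le_trans (le_abs_self _) h5)
      rw [Real.norm_eq_abs, abs_mul, abs_mul, abs_of_pos (hq_pos y),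
        Real.abs_exp]
      apply mul_le_mul_of_nonneg_right _ (hq_pos y).le
      apply mul_le_mul h6 _ (abs_nonneg _) (Real.exp_pos _).le
      rw [abs_mul, abs_of_pos hβ]
      nlinarith [hW_bd y, abs_nonneg (W y)]
    · filter_upwards with y
      intro t ht
      exact ((hasDerivAt_mul_const (β * W y)).exp).mul_const (q y)
  -- derivative of φ at 0, and nonnegativity of the derivative
  have hφderiv : HasDerivAt φ (A + β⁻¹ * (Sg - Ss)) 0 := by
    have h2 : HasDerivAt (fun t => Real.log (I t)) (β * A / I 0) 0 :=
      hIderiv.log (by rw [hI_zero]; exact one_ne_zero)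
    rw [hI_zero, div_one] at h2
    have h3 := (h2.const_mul β⁻¹).add (hasDerivAt_mul_const (β⁻¹ * (Sg - Ss)) : HasDerivAt _ _ (0:ℝ))
    have h4 : β⁻¹ * (β * A) + β⁻¹ * (Sg - Ss) = A + β⁻¹ * (Sg - Ss) := by
      field_simp
    rw [h4] at h3
    exact h3
  have hD : 0 ≤ A + β⁻¹ * (Sg - Ss) := by
    have hslope := hasDerivAt_iff_tendsto_slope.1 hφderiv
    have hmono : 𝓝[>] (0:ℝ) ≤ 𝓝[≠] (0:ℝ) :=
      nhdsWithin_mono _ fun x hx => ne_of_gt hx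
    refine ge_of_tendsto (hslope.mono_left hmono) ?_
    filter_upwards [Ioc_mem_nhdsGT_of_mem (by norm_num : (0:ℝ) ∈ Set.Ico 0 1)] with t ht
    have h5 := hφ_nonneg t ht
    have h6 : slope φ 0 t = φ t / t := by
      rw [slope_def_field, hφ_zero]
      rw [sub_zero, sub_zero]
    rw [h6]
    exact div_nonneg h5 ht.1.le
  -- Fubini: A = ∫ (g - pstar) Ψs
  have hfub : A = ∫ x, (g x - pstar x) * Ψs x ∂μ := by
    have hWq : ∀ y, W y * q y = ∫ x, (g x - pstar x) * K (x, y) * q y ∂μ := by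
      intro y
      have hWy : W y = ∫ x, (g x - pstar x) * K (x, y) ∂μ := by
        simp only [hW_def, hVs]
        rw [← integral_sub (hintKgy y) (hintKy y)]
        congr 1
        funext x
        ring
      rw [hWy, ← integral_mul_const]
    have hprod : Integrable
        (Function.uncurry fun y x => (g x - pstar x) * K (x, y) * q y) (μ.prod μ) := by
      refine Integrable.mono'
        (g := fun z => (M * q z.1) * (g z.2 + pstar z.2))
        (Integrable.mul_prod (hq_int.const_mul M) (hg_int.add hpint))
        ((((hg_cont.measurable.sub hm).comp measurable_snd).mul
          (hK.measurable.comp (measurable_snd.prodMk measurable_fst))).mul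
          (hq_cont.measurable.comp measurable_fst)).aestronglyMeasurable ?_
      filter_upwards with z
      have h5 : |g z.2 - pstar z.2| ≤ g z.2 + pstar z.2 := by
        have := abs_sub (g z.2) (pstar z.2)
        rwa [abs_of_pos (hg_pos _), abs_of_nonneg (h0 _)] at this
      rw [Function.uncurry]
      rw [Real.norm_eq_abs, abs_mul, abs_mul, abs_of_pos (hq_pos z.1)]
      calc |g z.2 - pstar z.2| * |K (z.2, z.1)| * q z.1
          ≤ (g z.2 + pstar z.2) * M * q z.1 := by
            apply mul_le_mul_of_nonneg_right _ (hq_pos _).le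
            exact mul_le_mul h5 (hM _) (abs_nonneg _) (add_nonneg (hg_pos _).le (h0 _))
        _ = (M * q z.1) * (g z.2 + pstar z.2) := by ring
    rw [hA_def]
    calc ∫ y, W y * q y ∂μ
        = ∫ y, ∫ x, (g x - pstar x) * K (x, y) * q y ∂μ ∂μ := by
          congr 1; funext y; exact hWq y
      _ = ∫ x, ∫ y, (g x - pstar x) * K (x, y) * q y ∂μ ∂μ :=
          integral_integral_swap hprod
      _ = ∫ x, (g x - pstar x) * Ψs x ∂μ := by
          congr 1; funext x
          rw [hΨs, ← integral_const_mul]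
          congr 1; funext y; ring
  -- algebraic consequences: relative entropy is nonpositive
  have hgΨ_int : Integrable (fun x => g x * Ψs x) μ := hcont_int _ (hg_cont.mul hΨs_cont)
  have hpΨ_int : Integrable (fun x => pstar x * Ψs x) μ := by
    refine (hpint.const_mul M).mono' (hm.mul hΨs_cont.measurable).aestronglyMeasurable ?_
    filter_upwards with x
    rw [Real.norm_eq_abs, abs_mul, abs_of_nonneg (h0 x)]
    nlinarith [hΨs_bd x, h0 x, abs_nonneg (Ψs x)]
  have hSg_eq : β * (∫ x, g x * Ψs x ∂μ) + Sg = - Real.log Z := by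
    have h2 : (fun x => g x * Real.log (g x))
        = fun x => -β * (g x * Ψs x) - Real.log Z * g x := by
      funext x; rw [hlog_g]; ring
    rw [hSg_def, h2, integral_sub (hgΨ_int.const_mul _) (hg_int.const_mul _),
      integral_const_mul, integral_const_mul, hg_one]
    ring
  have hlogg_eq : (fun x => pstar x * Real.log (g x))
      = fun x => -β * (pstar x * Ψs x) - Real.log Z * pstar x := by
    funext x; rw [hlog_g]; ring
  have hplogg_int : Integrable (fun x => pstar x * Real.log (g x)) μ := by
    rw [hlogg_eq]
    exact (hpΨ_int.const_mul _).sub (hpint.const_mul _)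
  have hplogg_eq : ∫ x, pstar x * Real.log (g x) ∂μ
      = -β * (∫ x, pstar x * Ψs x ∂μ) - Real.log Z := by
    rw [hlogg_eq, integral_sub (hpΨ_int.const_mul _) (hpint.const_mul _),
      integral_const_mul, integral_const_mul, h1]
    ring
  have hTint : Integrable (fun x => pstar x * (Real.log (pstar x) - Real.log (g x))) μ := by
    have h2 : (fun x => pstar x * (Real.log (pstar x) - Real.log (g x)))
        = fun x => pstar x * Real.log (pstar x) - pstar x * Real.log (g x) := by
      funext x; ring
    rw [h2]
    exact hent.sub hplogg_int
  set T : ℝ := ∫ x, pstar x * (Real.log (pstar x) - Real.log (g x)) ∂μ with hT_def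
  have hT_eq : T = Ss + β * (∫ x, pstar x * Ψs x ∂μ) + Real.log Z := by
    rw [hT_def]
    have h2 : (fun x => pstar x * (Real.log (pstar x) - Real.log (g x)))
        = fun x => pstar x * Real.log (pstar x) - pstar x * Real.log (g x) := by
      funext x; ring
    rw [h2, integral_sub hent hplogg_int, hplogg_eq, hSs_def]
    ring
  have hsplit : ∫ x, (g x - pstar x) * Ψs x ∂μ
      = (∫ x, g x * Ψs x ∂μ) - ∫ x, pstar x * Ψs x ∂μ := by
    rw [← integral_sub hgΨ_int hpΨ_int]
    congr 1; funext x; ring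
  have hT_nonpos : T ≤ 0 := by
    have h2 : 0 ≤ β * (A + β⁻¹ * (Sg - Ss)) := mul_nonneg hβ.le hD
    have h5 : β * (A + β⁻¹ * (Sg - Ss)) = β * A + (Sg - Ss) := by
      rw [mul_add, ← mul_assoc, mul_inv_cancel₀ hβ.ne', one_mul]
    have h4 : β * A = β * (∫ x, g x * Ψs x ∂μ) - β * (∫ x, pstar x * Ψs x ∂μ) := by
      rw [hfub, hsplit]; ring
    rw [h5] at h2
    linarith [h4, hSg_eq, hT_eq, h2]
  -- conclude via pointwise Gibbs inequality
  have hh_nonneg : ∀ x, 0 ≤ pstar x * (Real.log (pstar x) - Real.log (g x))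
      - (pstar x - g x) := fun x => by
    linarith [aux_gibbs_pointwise (h0 x) (hg_pos x)]
  have hpg : Integrable (fun x => pstar x - g x) μ := by
    have h2 : (fun x => pstar x - g x) = (fun x => pstar x) - fun x => g x := rfl
    rw [h2]
    exact hpint.sub hg_int
  have hh_int : Integrable (fun x => pstar x * (Real.log (pstar x) - Real.log (g x))
      - (pstar x - g x)) μ := hTint.sub hpg
  have hh_zero : ∫ x, (pstar x * (Real.log (pstar x) - Real.log (g x))
      - (pstar x - g x)) ∂μ = 0 := by
    have h2 : ∫ x, (pstar x * (Real.log (pstar x) - Real.log (g x))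
        - (pstar x - g x)) ∂μ = T - ((∫ x, pstar x ∂μ) - ∫ x, g x ∂μ) := by
      rw [integral_sub hTint hpg, integral_sub hpint hg_int, hT_def]
    have h3 : (0:ℝ) ≤ ∫ x, (pstar x * (Real.log (pstar x) - Real.log (g x))
        - (pstar x - g x)) ∂μ := integral_nonneg hh_nonneg
    rw [h2, h1, hg_one, sub_self, sub_zero] at h3 ⊢
    exact le_antisymm hT_nonpos h3
  have hae : (fun x => pstar x * (Real.log (pstar x) - Real.log (g x)) - (pstar x - g x))
      =ᵐ[μ] 0 := (integral_eq_zero_iff_of_nonneg hh_nonneg hh_int).1 hh_zero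
  filter_upwards [hae] with x hx
  exact aux_gibbs_eq (h0 x) (hg_pos x) (by
    have : pstar x * (Real.log (pstar x) - Real.log (g x)) - (pstar x - g x) = 0 := hx
    linarith)


/-- Every minimizer of the free energy is a Boltzmann fixed point:
`p*(x) = exp(−β Ψ(x, p*·μ)) / Z` μ-a.e. -/
theorem minimizer_is_boltzmann_fixed_point
    {Ω : Type*} [MetricSpace Ω] [CompactSpace Ω] [MeasurableSpace Ω] [BorelSpace Ω]
    (μ : Measure Ω) [IsProbabilityMeasure μ] (β : ℝ) (hβ : 0 < β)
    (K : Ω × Ω → ℝ) (hK : Continuous K)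
    (V : Ω → Measure Ω → ℝ) (hV : ∀ y p, V y p = ∫ x, K (x, y) ∂p)
    (Zq : Measure Ω → ℝ) (hZq : ∀ p, Zq p = ∫ y, Real.exp (β * V y p) ∂μ)
    (qp : Measure Ω → Ω → ℝ) (hqp : ∀ p y, qp p y = Real.exp (β * V y p) / Zq p)
    (Ψ : Ω → Measure Ω → ℝ) (hΨ : ∀ x p, Ψ x p = ∫ y, K (x, y) * qp p y ∂μ)
    (F : (Ω → ℝ) → ℝ)
    (hF : ∀ f : Ω → ℝ,
      F f = β⁻¹ * Real.log (Zq (μ.withDensity (fun x => ENNReal.ofReal (f x))))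
            + β⁻¹ * ∫ x, f x * Real.log (f x) ∂μ)
    (pstar : Ω → ℝ)
    (hm : Measurable pstar) (h0 : ∀ x, 0 ≤ pstar x) (h1 : ∫ x, pstar x ∂μ = 1)
    (hent : Integrable (fun x => pstar x * Real.log (pstar x)) μ)
    (hmin : ∀ p : Ω → ℝ, Measurable p → (∀ x, 0 ≤ p x) → ∫ x, p x ∂μ = 1 →
      Integrable (fun x => p x * Real.log (p x)) μ → F pstar ≤ F p) :
    pstar =ᵐ[μ] fun x =>
      Real.exp (-β * Ψ x (μ.withDensity (fun x' => ENNReal.ofReal (pstar x'))))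
        / ∫ x', Real.exp (-β * Ψ x' (μ.withDensity (fun x'' => ENNReal.ofReal (pstar x'')))) ∂μ := by
  have hVd : ∀ (f : Ω → ℝ), Measurable f → (∀ x, 0 ≤ f x) → ∀ y,
      V y (μ.withDensity fun x => ENNReal.ofReal (f x)) = ∫ x, f x * K (x, y) ∂μ := by
    intro f hf hf0 y
    rw [hV]
    rw [show (fun x => ENNReal.ofReal (f x)) = fun x => ((Real.toNNReal (f x) : NNReal) : ENNReal)
      from rfl, integral_withDensity_eq_integral_smul hf.real_toNNReal]
    congr 1
    funext x
    rw [NNReal.smul_def, Real.coe_toNNReal _ (hf0 x), smul_eq_mul]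
  have hVs : ∀ y, V y (μ.withDensity fun x => ENNReal.ofReal (pstar x))
      = ∫ x, pstar x * K (x, y) ∂μ := hVd pstar hm h0
  have hq : ∀ y, qp (μ.withDensity fun x => ENNReal.ofReal (pstar x)) y
      = Real.exp (β * V y (μ.withDensity fun x => ENNReal.ofReal (pstar x)))
        / ∫ y', Real.exp (β * V y' (μ.withDensity fun x => ENNReal.ofReal (pstar x))) ∂μ := by
    intro y
    rw [hqp, hZq]
  have hΨ' : ∀ x, Ψ x (μ.withDensity fun x => ENNReal.ofReal (pstar x))
      = ∫ y, K (x, y) * qp (μ.withDensity fun x => ENNReal.ofReal (pstar x)) y ∂μ :=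
    fun x => hΨ x _
  exact boltzmann_aux μ β hβ K hK pstar hm h0 h1 hent
    (fun y => V y (μ.withDensity fun x => ENNReal.ofReal (pstar x))) hVs
    (qp (μ.withDensity fun x => ENNReal.ofReal (pstar x))) hq
    (fun x => Ψ x (μ.withDensity fun x => ENNReal.ofReal (pstar x))) hΨ'
    (by
      intro p hpm hp0 hp1 hpent
      have h2 := hmin p hpm hp0 hp1 hpent
      rw [hF pstar, hF p, hZq (μ.withDensity fun x => ENNReal.ofReal (pstar x)),
        hZq (μ.withDensity fun x => ENNReal.ofReal (p x))] at h2
      simp only [hVd p hpm hp0] at h2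
      exact h2)
end

section
/- The Boltzmann fixed-point problem has at most one solution: if p₁ and p₂ are probability densities with respect to μ satisfying pᵢ(x) = exp(−β Ψ(x, pᵢ·μ)) / Zᵢ μ-a.e. with Zᵢ = ∫ exp(−β Ψ(x, pᵢ·μ)) dμ(x) for i = 1,2, then p₁ = p₂ μ-almost everywhere. -/
open MeasureTheory Real
open scoped NNReal ENNReal

private lemma bdd_integrable {Ω : Type*} [MeasurableSpace Ω] {μ : Measure Ω}
    [IsFiniteMeasure μ] {f : Ω → ℝ} (hf : AEStronglyMeasurable f μ) (C : ℝ)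
    (h : ∀ x, |f x| ≤ C) : Integrable f μ :=
  Integrable.mono' (integrable_const C) hf (Filter.Eventually.of_forall fun x => by
    simpa [Real.norm_eq_abs] using h x)

private lemma key_ineq {a b : ℝ} (ha : 0 < a) (hb : 0 < b) :
    a - b ≤ a * (Real.log a - Real.log b) := by
  have h := Real.log_le_sub_one_of_pos (div_pos hb ha)
  rw [Real.log_div hb.ne' ha.ne'] at h
  have hba : a * (b / a) = b := by field_simp
  nlinarith [mul_le_mul_of_nonneg_left h ha.le]

private lemma key_strict {a b : ℝ} (ha : 0 < a) (hb : 0 < b) (hne : a ≠ b) :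
    a - b < a * (Real.log a - Real.log b) := by
  have hx : b / a ≠ 1 := by
    intro h
    rw [div_eq_one_iff_eq ha.ne'] at h
    exact hne h.symm
  have h := Real.log_lt_sub_one_of_pos (div_pos hb ha) hx
  rw [Real.log_div hb.ne' ha.ne'] at h
  have hba : a * (b / a) = b := by field_simp
  nlinarith [mul_lt_mul_of_pos_left h ha]

section KL

variable {Ω : Type*} [MeasurableSpace Ω] {μ : Measure Ω} [IsProbabilityMeasure μ]
  {f g : Ω → ℝ} {c C : ℝ}

private lemma log_abs_bound (hc : 0 < c) (h1 : ∀ x, c ≤ f x) (h2 : ∀ x, f x ≤ C) :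
    ∀ x, |Real.log (f x)| ≤ |Real.log c| + |Real.log C| := by
  intro x
  have hfx : 0 < f x := lt_of_lt_of_le hc (h1 x)
  have hl : Real.log c ≤ Real.log (f x) := Real.log_le_log hc (h1 x)
  have hr : Real.log (f x) ≤ Real.log C := Real.log_le_log hfx (h2 x)
  rw [abs_le]
  constructor
  · have h3 := neg_abs_le (Real.log c); have h4 := abs_nonneg (Real.log C); linarith
  · have h3 := le_abs_self (Real.log C); have h4 := abs_nonneg (Real.log c); linarith

private lemma kl_integrable (hfm : Measurable f) (hgm : Measurable g) (hc : 0 < c)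
    (hf1 : ∀ x, c ≤ f x) (hf2 : ∀ x, f x ≤ C) (hg1 : ∀ x, c ≤ g x) (hg2 : ∀ x, g x ≤ C) :
    Integrable (fun x => f x * (Real.log (f x) - Real.log (g x))) μ := by
  refine bdd_integrable ((hfm.mul ((hfm.log).sub (hgm.log))).aestronglyMeasurable)
    (C * (2 * (|Real.log c| + |Real.log C|))) (fun x => ?_)
  have hCnn : 0 ≤ C := le_trans (le_trans hc.le (hf1 x)) (hf2 x)
  have h1 := log_abs_bound hc hf1 hf2 x
  have h2 := log_abs_bound hc hg1 hg2 x
  have hfx : |f x| ≤ C := by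
    rw [abs_of_nonneg (le_trans hc.le (hf1 x))]; exact hf2 x
  rw [abs_mul]
  have : |Real.log (f x) - Real.log (g x)| ≤ 2 * (|Real.log c| + |Real.log C|) := by
    have := abs_sub (Real.log (f x)) (Real.log (g x))
    calc |Real.log (f x) - Real.log (g x)| ≤ |Real.log (f x)| + |Real.log (g x)| :=
          abs_sub _ _
      _ ≤ 2 * (|Real.log c| + |Real.log C|) := by linarith
  exact mul_le_mul hfx this (abs_nonneg _) hCnn

private lemma kl_nonneg (hfm : Measurable f) (hgm : Measurable g) (hc : 0 < c)
    (hf1 : ∀ x, c ≤ f x) (hf2 : ∀ x, f x ≤ C) (hg1 : ∀ x, c ≤ g x) (hg2 : ∀ x, g x ≤ C)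
    (hint : ∫ x, f x ∂μ = ∫ x, g x ∂μ) :
    0 ≤ ∫ x, f x * (Real.log (f x) - Real.log (g x)) ∂μ := by
  have hfi : Integrable f μ := bdd_integrable hfm.aestronglyMeasurable C (fun x => by
    rw [abs_of_nonneg (le_trans hc.le (hf1 x))]; exact hf2 x)
  have hgi : Integrable g μ := bdd_integrable hgm.aestronglyMeasurable C (fun x => by
    rw [abs_of_nonneg (le_trans hc.le (hg1 x))]; exact hg2 x)
  have hfg : Integrable (fun x => f x - g x) μ := hfi.sub hgi
  have h := integral_mono hfg
    (kl_integrable hfm hgm hc hf1 hf2 hg1 hg2)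
    (fun x => key_ineq (lt_of_lt_of_le hc (hf1 x)) (lt_of_lt_of_le hc (hg1 x)))
  rwa [integral_sub hfi hgi, hint, sub_self] at h

private lemma kl_eq_zero (hfm : Measurable f) (hgm : Measurable g) (hc : 0 < c)
    (hf1 : ∀ x, c ≤ f x) (hf2 : ∀ x, f x ≤ C) (hg1 : ∀ x, c ≤ g x) (hg2 : ∀ x, g x ≤ C)
    (hint : ∫ x, f x ∂μ = ∫ x, g x ∂μ)
    (hle : ∫ x, f x * (Real.log (f x) - Real.log (g x)) ∂μ ≤ 0) :
    f =ᵐ[μ] g := by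
  have hfi : Integrable f μ := bdd_integrable hfm.aestronglyMeasurable C (fun x => by
    rw [abs_of_nonneg (le_trans hc.le (hf1 x))]; exact hf2 x)
  have hgi : Integrable g μ := bdd_integrable hgm.aestronglyMeasurable C (fun x => by
    rw [abs_of_nonneg (le_trans hc.le (hg1 x))]; exact hg2 x)
  have hkl : ∫ x, f x * (Real.log (f x) - Real.log (g x)) ∂μ = 0 :=
    le_antisymm hle (kl_nonneg hfm hgm hc hf1 hf2 hg1 hg2 hint)
  set h : Ω → ℝ := fun x => f x * (Real.log (f x) - Real.log (g x)) - (f x - g x) with hh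
  have hhi : Integrable h μ :=
    (kl_integrable hfm hgm hc hf1 hf2 hg1 hg2).sub (hfi.sub hgi)
  have hhnn : ∀ x, 0 ≤ h x := fun x => by
    have := key_ineq (lt_of_lt_of_le hc (hf1 x)) (lt_of_lt_of_le hc (hg1 x))
    simp only [hh]; linarith
  have hfg : Integrable (fun x => f x - g x) μ := hfi.sub hgi
  have hint0 : ∫ x, h x ∂μ = 0 := by
    simp only [hh]
    rw [integral_sub (kl_integrable hfm hgm hc hf1 hf2 hg1 hg2) hfg,
      integral_sub hfi hgi, hint, sub_self, sub_zero, hkl]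
  have := (integral_eq_zero_iff_of_nonneg hhnn hhi).1 hint0
  filter_upwards [this] with x hx
  by_contra hne
  have := key_strict (lt_of_lt_of_le hc (hf1 x)) (lt_of_lt_of_le hc (hg1 x)) hne
  have hzero : h x = 0 := by simpa using hx
  simp only [hh] at hzero
  linarith

end KL

section Aux

variable {Ω : Type*} [MeasurableSpace Ω] (μ : Measure Ω) [IsProbabilityMeasure μ]

private lemma bdd_integrable' {f : Ω → ℝ} (hf : AEStronglyMeasurable f μ) (C : ℝ)
    (h : ∀ x, |f x| ≤ C) : Integrable f μ :=
  Integrable.mono' (integrable_const C) hf (Filter.Eventually.of_forall fun x => by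
    simpa [Real.norm_eq_abs] using h x)

/-- The function `y ↦ ∫ L(x,y) p(x) dμ(x)` is measurable and bounded by `M`. -/
private lemma kernel_meas_bound (L : Ω × Ω → ℝ) (hL : Measurable L) (M : ℝ)
    (hM : ∀ z, |L z| ≤ M) (p : Ω → ℝ) (hp : Measurable p) (hp0 : ∀ x, 0 ≤ p x)
    (hpi : Integrable p μ) (hp1 : ∫ x, p x ∂μ = 1) :
    Measurable (fun y => ∫ x, L (x, y) * p x ∂μ) ∧
      ∀ y, |∫ x, L (x, y) * p x ∂μ| ≤ M := by
  constructor
  · have hsm : StronglyMeasurable (fun z : Ω × Ω => L (z.2, z.1) * p z.2) :=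
      ((hL.comp measurable_swap).mul (hp.comp measurable_snd)).stronglyMeasurable
    exact hsm.integral_prod_right'.measurable
  · intro y
    have hmi : Integrable (fun x => L (x, y) * p x) μ := by
      refine Integrable.mono' (hpi.const_mul M) ?_ (Filter.Eventually.of_forall fun x => ?_)
      · exact ((hL.comp (measurable_id.prodMk measurable_const)).mul hp).aestronglyMeasurable
      · rw [Real.norm_eq_abs, abs_mul, abs_of_nonneg (hp0 x)]
        exact mul_le_mul_of_nonneg_right (hM _) (hp0 x)
    calc |∫ x, L (x, y) * p x ∂μ| ≤ ∫ x, |L (x, y)| * |p x| ∂μ := by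
          simpa [Real.norm_eq_abs] using
            norm_integral_le_integral_norm (μ := μ) (fun x => L (x, y) * p x)
      _ ≤ ∫ x, M * p x ∂μ := by
          refine integral_mono (by simpa [abs_mul] using hmi.abs) (hpi.const_mul M) (fun x => ?_)
          rw [abs_of_nonneg (hp0 x)]
          exact mul_le_mul_of_nonneg_right (hM _) (hp0 x)
      _ = M := by rw [integral_const_mul, hp1, mul_one]

/-- Facts about the Gibbs density `exp (W x) / ∫ exp (W)`. -/
private lemma gibbs_facts (W : Ω → ℝ) (hW : Measurable W) (B : ℝ) (hB : ∀ x, |W x| ≤ B) :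
    (0 < ∫ x, Real.exp (W x) ∂μ) ∧
    (∫ x, Real.exp (W x) / (∫ x', Real.exp (W x') ∂μ) ∂μ = 1) ∧
    (∀ x, Real.exp (-(2*B)) ≤ Real.exp (W x) / (∫ x', Real.exp (W x') ∂μ)) ∧
    (∀ x, Real.exp (W x) / (∫ x', Real.exp (W x') ∂μ) ≤ Real.exp (2*B)) ∧
    (∀ x, Real.log (Real.exp (W x) / (∫ x', Real.exp (W x') ∂μ))
        = W x - Real.log (∫ x', Real.exp (W x') ∂μ)) := by
  have hei : Integrable (fun x => Real.exp (W x)) μ := by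
    refine bdd_integrable' μ (hW.exp).aestronglyMeasurable (Real.exp B) (fun x => ?_)
    rw [abs_of_nonneg (Real.exp_nonneg _)]
    exact Real.exp_le_exp.2 ((le_abs_self _).trans (hB x))
  have hlb : Real.exp (-B) ≤ ∫ x, Real.exp (W x) ∂μ := by
    have := integral_mono (integrable_const (Real.exp (-B))) hei (fun x => by
      exact Real.exp_le_exp.2 (by have := (abs_le.1 (hB x)).1; linarith))
    simpa using this
  have hub : (∫ x, Real.exp (W x) ∂μ) ≤ Real.exp B := by
    have := integral_mono hei (integrable_const (Real.exp B)) (fun x => by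
      exact Real.exp_le_exp.2 ((le_abs_self _).trans (hB x)))
    simpa using this
  have hZpos : 0 < ∫ x, Real.exp (W x) ∂μ := lt_of_lt_of_le (Real.exp_pos _) hlb
  refine ⟨hZpos, ?_, ?_, ?_, ?_⟩
  · rw [integral_div, div_self hZpos.ne']
  · intro x
    have h1 : Real.exp (-B) ≤ Real.exp (W x) := Real.exp_le_exp.2 (by
      have := (abs_le.1 (hB x)).1; linarith)
    calc Real.exp (-(2*B)) = Real.exp (-B) / Real.exp B := by
          rw [← Real.exp_sub]; ring_nf
      _ ≤ Real.exp (W x) / (∫ x', Real.exp (W x') ∂μ) := by gcongr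
  · intro x
    have h1 : Real.exp (W x) ≤ Real.exp B := Real.exp_le_exp.2 ((le_abs_self _).trans (hB x))
    calc Real.exp (W x) / (∫ x', Real.exp (W x') ∂μ) ≤ Real.exp B / Real.exp (-B) := by gcongr
      _ = Real.exp (2*B) := by rw [← Real.exp_sub]; ring_nf
  · intro x
    rw [Real.log_div (Real.exp_ne_zero _) hZpos.ne', Real.log_exp]

/-- Fubini for the kernel bilinear form. -/
private lemma fubini_kernel (L : Ω × Ω → ℝ) (hL : Measurable L) (M : ℝ)
    (hM : ∀ z, |L z| ≤ M) (f g : Ω → ℝ) (hf : Measurable f) (hg : Measurable g)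
    (Cf Cg : ℝ) (hfC : ∀ x, |f x| ≤ Cf) (hgC : ∀ x, |g x| ≤ Cg) :
    ∫ x, f x * (∫ y, L (x, y) * g y ∂μ) ∂μ = ∫ y, g y * (∫ x, L (x, y) * f x ∂μ) ∂μ := by
  have : Nonempty Ω := MeasureTheory.Measure.nonempty_of_neZero μ
  have hMnn : 0 ≤ M := (abs_nonneg _).trans (hM (Classical.arbitrary _))
  have hint : Integrable (fun z : Ω × Ω => f z.1 * (L (z.1, z.2) * g z.2)) (μ.prod μ) := by
    refine bdd_integrable' _
      (((hf.comp measurable_fst).mul ((hL.comp (measurable_fst.prodMk measurable_snd)).mul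
        (hg.comp measurable_snd))).aestronglyMeasurable) (Cf * (M * Cg)) (fun z => ?_)
    have hCf : 0 ≤ Cf := (abs_nonneg _).trans (hfC z.1)
    rw [abs_mul, abs_mul]
    exact mul_le_mul (hfC _) (mul_le_mul (hM _) (hgC _) (abs_nonneg _) hMnn)
      (mul_nonneg (abs_nonneg _) (abs_nonneg _)) hCf
  calc ∫ x, f x * (∫ y, L (x, y) * g y ∂μ) ∂μ
      = ∫ x, ∫ y, f x * (L (x, y) * g y) ∂μ ∂μ := by
        refine integral_congr_ae (Filter.Eventually.of_forall fun x => ?_)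
        exact (integral_const_mul (f x) fun y => L (x, y) * g y).symm
    _ = ∫ y, ∫ x, f x * (L (x, y) * g y) ∂μ ∂μ := integral_integral_swap hint
    _ = ∫ y, g y * (∫ x, L (x, y) * f x ∂μ) ∂μ := by
        refine integral_congr_ae (Filter.Eventually.of_forall fun y => ?_)
        show ∫ x, f x * (L (x, y) * g y) ∂μ = g y * ∫ x, L (x, y) * f x ∂μ
        rw [← integral_const_mul]
        exact integral_congr_ae (Filter.Eventually.of_forall fun x => by ring)

end Aux
/-- Package of derived objects for one fixed-point density `p`. -/
private lemma boltzmann_side {Ω : Type*} [MetricSpace Ω] [CompactSpace Ω] [MeasurableSpace Ω]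
    [BorelSpace Ω] (μ : Measure Ω) [IsProbabilityMeasure μ] (β : ℝ)
    (K : Ω × Ω → ℝ) (hK : Continuous K) (M : ℝ) (hM : ∀ z, |K z| ≤ M)
    (V : Ω → Measure Ω → ℝ) (hV : ∀ y p, V y p = ∫ x, K (x, y) ∂p)
    (Zq : Measure Ω → ℝ) (hZq : ∀ p, Zq p = ∫ y, Real.exp (β * V y p) ∂μ)
    (qp : Measure Ω → Ω → ℝ) (hqp : ∀ p y, qp p y = Real.exp (β * V y p) / Zq p)
    (Ψ : Ω → Measure Ω → ℝ) (hΨ : ∀ x p, Ψ x p = ∫ y, K (x, y) * qp p y ∂μ)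
    (p : Ω → ℝ) (hm : Measurable p) (h0 : ∀ x, 0 ≤ p x) (h1 : ∫ x, p x ∂μ = 1)
    (hfp : p =ᵐ[μ] fun x =>
      Real.exp (-β * Ψ x (μ.withDensity (fun x' => ENNReal.ofReal (p x'))))
        / ∫ x', Real.exp (-β * Ψ x' (μ.withDensity (fun x'' => ENNReal.ofReal (p x'')))) ∂μ) :
    ∃ (Vf q Ψf g : Ω → ℝ) (Zq' Z : ℝ),
      Measurable Vf ∧ (∀ y, |Vf y| ≤ M) ∧
      Measurable q ∧ (∀ y, Real.exp (-(2*( |β| * M ))) ≤ q y) ∧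
      (∀ y, q y ≤ Real.exp (2*( |β| * M ))) ∧
      (∫ y, q y ∂μ = 1) ∧ (∀ y, Real.log (q y) = β * Vf y - Real.log Zq') ∧
      Measurable Ψf ∧ (∀ x, |Ψf x| ≤ M) ∧
      (∀ x, Ψf x = ∫ y, K (x, y) * q y ∂μ) ∧
      Measurable g ∧ (∀ x, Real.exp (-(2*( |β| * M ))) ≤ g x) ∧
      (∀ x, g x ≤ Real.exp (2*( |β| * M ))) ∧
      (∫ x, g x ∂μ = 1) ∧
      (∀ x, Real.log (g x) = -(β * Ψf x) - Real.log Z) ∧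
      p =ᵐ[μ] g ∧
      (∀ y, Vf y = ∫ x, K (x, y) * g x ∂μ) := by
  -- p is integrable
  have hpInt : Integrable p μ := by
    by_contra h
    rw [integral_undef h] at h1
    norm_num at h1
  set ν := μ.withDensity (fun x => ENNReal.ofReal (p x)) with hν
  -- the V function
  set Vf : Ω → ℝ := fun y => ∫ x, K (x, y) * p x ∂μ with hVf
  have hVform : ∀ y, V y ν = Vf y := by
    intro y
    rw [hV, hν]
    have hνeq : μ.withDensity (fun x => ENNReal.ofReal (p x))
        = μ.withDensity (fun x => ((Real.toNNReal (p x) : ℝ≥0) : ℝ≥0∞)) := rfl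
    rw [hνeq, integral_withDensity_eq_integral_smul hm.real_toNNReal]
    refine integral_congr_ae (Filter.Eventually.of_forall fun x => ?_)
    simp [NNReal.smul_def, Real.coe_toNNReal _ (h0 x), mul_comm]
  obtain ⟨hVm, hVb⟩ := kernel_meas_bound μ K hK.measurable M hM p hm h0 hpInt h1
  have hβVb : ∀ y, |β * Vf y| ≤ |β| * M := fun y => by
    rw [abs_mul]
    exact mul_le_mul_of_nonneg_left (hVb y) (abs_nonneg β)
  -- the Gibbs measure q
  obtain ⟨hZq'pos, hqint, hqlb, hqub, hqlog⟩ :=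
    gibbs_facts μ (fun y => β * Vf y) (measurable_const.mul hVm) ( |β| * M ) hβVb
  set Zq' : ℝ := ∫ y', Real.exp (β * Vf y') ∂μ with hZq'
  set q : Ω → ℝ := fun y => Real.exp (β * Vf y) / Zq' with hqdef
  have hqm : Measurable q := (measurable_const.mul hVm).exp.div_const _
  have hq_eq : ∀ y, qp ν y = q y := by
    intro y
    rw [hqp, hZq, hqdef]
    have : (∫ y', Real.exp (β * V y' ν) ∂μ) = Zq' := by
      rw [hZq']
      exact integral_congr_ae (Filter.Eventually.of_forall fun y' => by simp only [hVform])
    rw [this, hVform]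
  have hq0 : ∀ y, 0 ≤ q y := fun y => le_trans (Real.exp_nonneg _) (hqlb y)
  have hqabs : ∀ y, |q y| ≤ Real.exp (2*( |β| * M )) := fun y => by
    rw [abs_of_nonneg (hq0 y)]; exact hqub y
  have hqInt : Integrable q μ := bdd_integrable' μ hqm.aestronglyMeasurable _ hqabs
  -- the Ψ function
  set Ψf : Ω → ℝ := fun x => ∫ y, K (x, y) * q y ∂μ with hΨf
  have hΨform : ∀ x, Ψ x ν = Ψf x := by
    intro x
    rw [hΨ, hΨf]
    exact integral_congr_ae (Filter.Eventually.of_forall fun y => by simp only [hq_eq])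
  obtain ⟨hΨm, hΨb⟩ := kernel_meas_bound μ (fun z => K (z.2, z.1))
    (hK.measurable.comp measurable_swap) M (fun z => hM _) q hqm hq0 hqInt hqint
  have hβΨb : ∀ x, |-(β * Ψf x)| ≤ |β| * M := fun x => by
    rw [abs_neg, abs_mul]
    exact mul_le_mul_of_nonneg_left (hΨb x) (abs_nonneg β)
  -- the Gibbs measure g
  obtain ⟨hZpos, hgint, hglb, hgub, hglog⟩ :=
    gibbs_facts μ (fun x => -(β * Ψf x)) (measurable_const.mul hΨm).neg ( |β| * M ) hβΨb
  set Z : ℝ := ∫ x', Real.exp (-(β * Ψf x')) ∂μ with hZ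
  set g : Ω → ℝ := fun x => Real.exp (-(β * Ψf x)) / Z with hgdef
  have hgm : Measurable g := ((measurable_const.mul hΨm).neg).exp.div_const _
  have hpfg : p =ᵐ[μ] g := by
    refine hfp.trans (Filter.Eventually.of_forall fun x => ?_)
    show Real.exp (-β * Ψ x ν) / (∫ x', Real.exp (-β * Ψ x' ν) ∂μ) = g x
    have hden : (∫ x', Real.exp (-β * Ψ x' ν) ∂μ) = Z := by
      rw [hZ]
      exact integral_congr_ae (Filter.Eventually.of_forall fun x' => by
        simp only [hΨform, neg_mul])
    rw [hden, hΨform, neg_mul]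
  have hVg : ∀ y, Vf y = ∫ x, K (x, y) * g x ∂μ := by
    intro y
    rw [hVf]
    refine integral_congr_ae ?_
    filter_upwards [hpfg] with x hx
    simp only [hx]
  exact ⟨Vf, q, Ψf, g, Zq', Z, hVm, hVb, hqm, hqlb, hqub, hqint, hqlog, hΨm, hΨb,
    fun x => rfl, hgm, hglb, hgub, hgint, hglog, hpfg, hVg⟩
/-- Uniqueness of the Boltzmann fixed point: two probability densities both satisfying
`pᵢ(x) = exp(−β Ψ(x, pᵢ·μ))/Zᵢ` μ-a.e. agree μ-almost everywhere. -/
theorem boltzmann_fixed_point_unique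
    {Ω : Type*} [MetricSpace Ω] [CompactSpace Ω] [MeasurableSpace Ω] [BorelSpace Ω]
    (μ : Measure Ω) [IsProbabilityMeasure μ] (β : ℝ) (hβ : 0 < β)
    (K : Ω × Ω → ℝ) (hK : Continuous K)
    (V : Ω → Measure Ω → ℝ) (hV : ∀ y p, V y p = ∫ x, K (x, y) ∂p)
    (Zq : Measure Ω → ℝ) (hZq : ∀ p, Zq p = ∫ y, Real.exp (β * V y p) ∂μ)
    (qp : Measure Ω → Ω → ℝ) (hqp : ∀ p y, qp p y = Real.exp (β * V y p) / Zq p)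
    (Ψ : Ω → Measure Ω → ℝ) (hΨ : ∀ x p, Ψ x p = ∫ y, K (x, y) * qp p y ∂μ)
    (p₁ p₂ : Ω → ℝ)
    (h₁m : Measurable p₁) (h₁0 : ∀ x, 0 ≤ p₁ x) (h₁1 : ∫ x, p₁ x ∂μ = 1)
    (h₂m : Measurable p₂) (h₂0 : ∀ x, 0 ≤ p₂ x) (h₂1 : ∫ x, p₂ x ∂μ = 1)
    (hfp₁ : p₁ =ᵐ[μ] fun x =>
      Real.exp (-β * Ψ x (μ.withDensity (fun x' => ENNReal.ofReal (p₁ x'))))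
        / ∫ x', Real.exp (-β * Ψ x' (μ.withDensity (fun x'' => ENNReal.ofReal (p₁ x'')))) ∂μ)
    (hfp₂ : p₂ =ᵐ[μ] fun x =>
      Real.exp (-β * Ψ x (μ.withDensity (fun x' => ENNReal.ofReal (p₂ x'))))
        / ∫ x', Real.exp (-β * Ψ x' (μ.withDensity (fun x'' => ENNReal.ofReal (p₂ x'')))) ∂μ) :
    p₁ =ᵐ[μ] p₂ := by
  obtain ⟨M, hM⟩ : ∃ M, ∀ z, |K z| ≤ M := by
    obtain ⟨C, hC⟩ := (isCompact_univ (X := Ω × Ω)).exists_bound_of_continuousOn hK.continuousOn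
    exact ⟨C, fun z => by simpa [Real.norm_eq_abs] using hC z (Set.mem_univ z)⟩
  obtain ⟨V₁, q₁, Ψ₁, g₁, Zq₁, Z₁, hV₁m, hV₁b, hq₁m, hq₁lb, hq₁ub, hq₁int, hq₁log,
      hΨ₁m, hΨ₁b, hΨ₁eq, hg₁m, hg₁lb, hg₁ub, hg₁int, hg₁log, hpg₁, hVg₁⟩ :=
    boltzmann_side μ β K hK M hM V hV Zq hZq qp hqp Ψ hΨ p₁ h₁m h₁0 h₁1 hfp₁
  obtain ⟨V₂, q₂, Ψ₂, g₂, Zq₂, Z₂, hV₂m, hV₂b, hq₂m, hq₂lb, hq₂ub, hq₂int, hq₂log,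
      hΨ₂m, hΨ₂b, hΨ₂eq, hg₂m, hg₂lb, hg₂ub, hg₂int, hg₂log, hpg₂, hVg₂⟩ :=
    boltzmann_side μ β K hK M hM V hV Zq hZq qp hqp Ψ hΨ p₂ h₂m h₂0 h₂1 hfp₂
  set c : ℝ := Real.exp (-(2*( |β| * M ))) with hcdef
  set Cb : ℝ := Real.exp (2*( |β| * M )) with hCdef
  have hc : 0 < c := Real.exp_pos _
  have habs : ∀ (f : Ω → ℝ), (∀ x, c ≤ f x) → (∀ x, f x ≤ Cb) → ∀ x, |f x| ≤ Cb :=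
    fun f hl hu x => by rw [abs_of_nonneg (hc.le.trans (hl x))]; exact hu x
  have int_mul : ∀ (u v : Ω → ℝ), Measurable u → Measurable v → ∀ (Cu Cv : ℝ),
      (∀ x, |u x| ≤ Cu) → (∀ x, |v x| ≤ Cv) → Integrable (fun x => u x * v x) μ := by
    intro u v hu hv Cu Cv hCu hCv
    refine bdd_integrable' μ ((hu.mul hv).aestronglyMeasurable) (Cu*Cv) fun x => ?_
    rw [abs_mul]
    exact mul_le_mul (hCu x) (hCv x) (abs_nonneg _) ((abs_nonneg _).trans (hCu x))
  -- generic expansion of the relative entropy of two Gibbs densities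
  have expand : ∀ (u v ΦA ΦB : Ω → ℝ) (s zA zB : ℝ),
      Measurable u → Measurable ΦA → Measurable ΦB →
      (∀ x, |u x| ≤ Cb) → (∀ x, |ΦA x| ≤ M) → (∀ x, |ΦB x| ≤ M) →
      (∫ x, u x ∂μ) = 1 →
      (∀ x, Real.log (u x) = s * ΦA x - Real.log zA) →
      (∀ x, Real.log (v x) = s * ΦB x - Real.log zB) →
      ∫ x, u x * (Real.log (u x) - Real.log (v x)) ∂μ
        = s * (∫ x, u x * ΦA x ∂μ) - s * (∫ x, u x * ΦB x ∂μ)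
          + (Real.log zB - Real.log zA) := by
    intro u v ΦA ΦB s zA zB hu hΦA hΦB hub hΦAb hΦBb hu1 hlogu hlogv
    have heq : ∀ x, u x * (Real.log (u x) - Real.log (v x))
        = (s * (u x * ΦA x) - s * (u x * ΦB x)) + (Real.log zB - Real.log zA) * u x := by
      intro x; rw [hlogu x, hlogv x]; ring
    rw [integral_congr_ae (Filter.Eventually.of_forall heq)]
    have iA : Integrable (fun x => u x * ΦA x) μ := int_mul _ _ hu hΦA Cb M hub hΦAb
    have iB : Integrable (fun x => u x * ΦB x) μ := int_mul _ _ hu hΦB Cb M hub hΦBb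
    have iu : Integrable u μ := bdd_integrable' μ hu.aestronglyMeasurable Cb hub
    have iAB : Integrable (fun x => s * (u x * ΦA x) - s * (u x * ΦB x)) μ :=
      (iA.const_mul s).sub (iB.const_mul s)
    rw [integral_add iAB (iu.const_mul _),
      integral_sub (iA.const_mul s) (iB.const_mul s), integral_const_mul, integral_const_mul,
      integral_const_mul, hu1, mul_one]
  -- Fubini exchange
  have fub : ∀ (g q V' Ψ' : Ω → ℝ), Measurable g → Measurable q →
      (∀ x, |g x| ≤ Cb) → (∀ x, |q x| ≤ Cb) →
      (∀ x, Ψ' x = ∫ y, K (x, y) * q y ∂μ) → (∀ y, V' y = ∫ x, K (x, y) * g x ∂μ) →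
      ∫ x, g x * Ψ' x ∂μ = ∫ y, q y * V' y ∂μ := by
    intro g q V' Ψ' hg hq hgb hqb hΨ' hV'
    have h1 : ∫ x, g x * Ψ' x ∂μ = ∫ x, g x * (∫ y, K (x, y) * q y ∂μ) ∂μ :=
      integral_congr_ae (Filter.Eventually.of_forall fun x => by simp only [hΨ'])
    rw [h1, fubini_kernel μ K hK.measurable M hM g q hg hq Cb Cb hgb hqb]
    exact integral_congr_ae (Filter.Eventually.of_forall fun y => by simp only [hV'])
  have hg₁a := habs g₁ hg₁lb hg₁ub
  have hg₂a := habs g₂ hg₂lb hg₂ub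
  have hq₁a := habs q₁ hq₁lb hq₁ub
  have hq₂a := habs q₂ hq₂lb hq₂ub
  have e12 := expand g₁ g₂ Ψ₁ Ψ₂ (-β) Z₁ Z₂ hg₁m hΨ₁m hΨ₂m hg₁a hΨ₁b hΨ₂b hg₁int
    (fun x => by rw [hg₁log x, neg_mul]) (fun x => by rw [hg₂log x, neg_mul])
  have e21 := expand g₂ g₁ Ψ₂ Ψ₁ (-β) Z₂ Z₁ hg₂m hΨ₂m hΨ₁m hg₂a hΨ₂b hΨ₁b hg₂int
    (fun x => by rw [hg₂log x, neg_mul]) (fun x => by rw [hg₁log x, neg_mul])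
  have eq12 := expand q₁ q₂ V₁ V₂ β Zq₁ Zq₂ hq₁m hV₁m hV₂m hq₁a hV₁b hV₂b hq₁int
    hq₁log hq₂log
  have eq21 := expand q₂ q₁ V₂ V₁ β Zq₂ Zq₁ hq₂m hV₂m hV₁m hq₂a hV₂b hV₁b hq₂int
    hq₂log hq₁log
  have f11 := fub g₁ q₁ V₁ Ψ₁ hg₁m hq₁m hg₁a hq₁a hΨ₁eq hVg₁
  have f12 := fub g₁ q₂ V₁ Ψ₂ hg₁m hq₂m hg₁a hq₂a hΨ₂eq hVg₁
  have f21 := fub g₂ q₁ V₂ Ψ₁ hg₂m hq₁m hg₂a hq₁a hΨ₁eq hVg₂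
  have f22 := fub g₂ q₂ V₂ Ψ₂ hg₂m hq₂m hg₂a hq₂a hΨ₂eq hVg₂
  have hsum : (∫ x, g₁ x * (Real.log (g₁ x) - Real.log (g₂ x)) ∂μ)
      + (∫ x, g₂ x * (Real.log (g₂ x) - Real.log (g₁ x)) ∂μ)
      + (∫ y, q₁ y * (Real.log (q₁ y) - Real.log (q₂ y)) ∂μ)
      + (∫ y, q₂ y * (Real.log (q₂ y) - Real.log (q₁ y)) ∂μ) = 0 := by
    rw [e12, e21, eq12, eq21, f11, f12, f21, f22]
    ring
  have n21 := kl_nonneg hg₂m hg₁m hc hg₂lb hg₂ub hg₁lb hg₁ub (by rw [hg₂int, hg₁int])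
  have nq12 := kl_nonneg hq₁m hq₂m hc hq₁lb hq₁ub hq₂lb hq₂ub (by rw [hq₁int, hq₂int])
  have nq21 := kl_nonneg hq₂m hq₁m hc hq₂lb hq₂ub hq₁lb hq₁ub (by rw [hq₂int, hq₁int])
  have hle : ∫ x, g₁ x * (Real.log (g₁ x) - Real.log (g₂ x)) ∂μ ≤ 0 := by linarith
  have hgg := kl_eq_zero hg₁m hg₂m hc hg₁lb hg₁ub hg₂lb hg₂ub (by rw [hg₁int, hg₂int]) hle
  exact hpg₁.trans (hgg.trans hpg₂.symm)
end
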